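/- arXiv:1512.08975 — 13 statements merged into one kernel-verified Lean document; each statement's English description precedes it below -/
import Mathlib

section
/- For every integer n ≥ 0 and every m with 0 ≤ m ≤ ⌊n/2⌋, the alternating sum ∑_{ℓ=0}^{n-2m} C(ℓ+m-1, m-1) · C(n-ℓ-m, m) · (-1)^ℓ equals C(⌊n/2⌋, m), where C(p, -1) is defined to be 1 if p = -1 and 0 otherwise. -/
open Finset

/-- Auxiliary sum `D N k = ∑_{ℓ=0}^N (-1)^ℓ C(ℓ+k,k) C(N-ℓ+k,k)`. -/
def auxD (N k : ℕ) : ℤ :=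
  ∑ ℓ ∈ Finset.range (N+1),
    (-1:ℤ)^ℓ * (Nat.choose (ℓ+k) k : ℤ) * (Nat.choose (N-ℓ+k) k : ℤ)

/-- Auxiliary sum `E N k = ∑_{ℓ=0}^N (-1)^ℓ C(ℓ+k,k) C(N-ℓ+k+1,k+1)`. -/
def auxE (N k : ℕ) : ℤ :=
  ∑ ℓ ∈ Finset.range (N+1),
    (-1:ℤ)^ℓ * (Nat.choose (ℓ+k) k : ℤ) * (Nat.choose (N-ℓ+k+1) (k+1) : ℤ)

lemma auxE_rec (N k : ℕ) : auxE (N+1) k = auxE N k + auxD (N+1) k := by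
  unfold auxE auxD
  have h1 : ∀ ℓ ∈ Finset.range (N+2),
      (-1:ℤ)^ℓ * (Nat.choose (ℓ+k) k : ℤ) * (Nat.choose (N+1-ℓ+k+1) (k+1) : ℤ)
      = (-1:ℤ)^ℓ * (Nat.choose (ℓ+k) k : ℤ) * (Nat.choose (N+1-ℓ+k) (k+1) : ℤ)
        + (-1:ℤ)^ℓ * (Nat.choose (ℓ+k) k : ℤ) * (Nat.choose (N+1-ℓ+k) k : ℤ) := by
    intro ℓ _
    rw [Nat.choose_succ_succ (N+1-ℓ+k) k]
    push_cast
    ring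
  rw [Finset.sum_congr rfl h1, Finset.sum_add_distrib]
  congr 1
  rw [Finset.sum_range_succ]
  have h0 : (Nat.choose (N+1-(N+1)+k) (k+1) : ℤ) = 0 := by
    simp [Nat.choose_eq_zero_of_lt]
  rw [h0, mul_zero, add_zero]
  apply Finset.sum_congr rfl
  intro ℓ hℓ
  rw [Finset.mem_range] at hℓ
  have e : N+1-ℓ+k = N-ℓ+k+1 := by omega
  rw [e]

lemma auxD_rec (N k : ℕ) : auxD (N+1) (k+1) = auxE (N+1) k - auxD N (k+1) := by
  unfold auxE auxD
  have h1 : ∀ ℓ ∈ Finset.range (N+2),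
      (-1:ℤ)^ℓ * (Nat.choose (ℓ+(k+1)) (k+1) : ℤ) * (Nat.choose (N+1-ℓ+(k+1)) (k+1) : ℤ)
      = (-1:ℤ)^ℓ * (Nat.choose (ℓ+k) k : ℤ) * (Nat.choose (N+1-ℓ+k+1) (k+1) : ℤ)
        + (-1:ℤ)^ℓ * (Nat.choose (ℓ+k) (k+1) : ℤ) * (Nat.choose (N+1-ℓ+k+1) (k+1) : ℤ) := by
    intro ℓ _
    have : ℓ + (k+1) = (ℓ+k) + 1 := by omega
    rw [this, Nat.choose_succ_succ (ℓ+k) k]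
    have : N+1-ℓ+(k+1) = N+1-ℓ+k+1 := by omega
    rw [this]
    push_cast
    ring
  rw [Finset.sum_congr rfl h1, Finset.sum_add_distrib]
  rw [sub_eq_add_neg]
  congr 1
  rw [Finset.sum_range_succ']
  have h0 : (Nat.choose (0+k) (k+1) : ℤ) = 0 := by
    simp [Nat.choose_eq_zero_of_lt]
  rw [h0]
  rw [mul_zero, zero_mul, add_zero, ← Finset.sum_neg_distrib]
  apply Finset.sum_congr rfl
  intro ℓ hℓ
  rw [Finset.mem_range] at hℓ
  have e1 : ℓ + 1 + k = ℓ + (k+1) := by omega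
  have e2 : N + 1 - (ℓ+1) + k + 1 = N - ℓ + (k+1) := by omega
  rw [e1, e2, pow_succ]
  ring

lemma auxD_zero (N : ℕ) : auxD N 0 = if N % 2 = 0 then ((N/2 + 0).choose 0 : ℤ) else 0 := by
  unfold auxD
  simp only [Nat.add_zero, Nat.choose_zero_right, Nat.cast_one, mul_one]
  rw [neg_one_geom_sum]
  rcases Nat.even_or_odd N with h | h
  · rw [Nat.even_iff] at h
    rw [if_neg (by simp [Nat.even_add_one, Nat.even_iff, h]), if_pos h]
  · rw [Nat.odd_iff] at h
    rw [if_pos (by simp [Nat.even_add_one, Nat.even_iff, h]), if_neg (by omega)]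

lemma auxE_formula (k : ℕ) (hD : ∀ N, auxD N k = if N % 2 = 0 then ((N/2 + k).choose k : ℤ) else 0) :
    ∀ N, auxE N k = ((N/2 + k + 1).choose (k+1) : ℤ) := by
  intro N
  induction N with
  | zero => simp [auxE]
  | succ n ih =>
    rw [auxE_rec, ih, hD]
    rcases Nat.even_or_odd n with h | h
    · rw [Nat.even_iff] at h
      rw [if_neg (by omega), add_zero]
      congr 2
      omega
    · rw [Nat.odd_iff] at h
      rw [if_pos (by omega)]
      have h2 : (n+1)/2 = n/2 + 1 := by omega
      rw [h2]
      have e : n/2 + 1 + k + 1 = (n/2+k+1)+1 := by omega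
      have e2 : n/2+1+k = n/2+k+1 := by omega
      rw [e, e2, Nat.choose_succ_succ (n/2+k+1) k]
      push_cast
      ring

lemma auxD_formula (k : ℕ) (hE : ∀ N, auxE N k = ((N/2 + k + 1).choose (k+1) : ℤ)) :
    ∀ N, auxD N (k+1) = if N % 2 = 0 then ((N/2 + (k+1)).choose (k+1) : ℤ) else 0 := by
  intro N
  induction N with
  | zero => simp [auxD]
  | succ n ih =>
    rw [auxD_rec, ih, hE]
    rcases Nat.even_or_odd n with h | h
    · rw [Nat.even_iff] at h
      rw [if_pos h, if_neg (by omega)]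
      have h2 : (n+1)/2 + k + 1 = n/2 + (k+1) := by omega
      rw [h2, sub_self]
    · rw [Nat.odd_iff] at h
      rw [if_neg (by omega), if_pos (by omega), sub_zero]
      rfl

lemma auxD_all (k : ℕ) : ∀ N, auxD N k = if N % 2 = 0 then ((N/2 + k).choose k : ℤ) else 0 := by
  induction k with
  | zero => exact auxD_zero
  | succ k ih => exact auxD_formula k (auxE_formula k ih)

lemma auxE_all (k N : ℕ) : auxE N k = ((N/2 + k + 1).choose (k+1) : ℤ) :=
  auxE_formula k (auxD_all k) N

/-- Binomial coefficient extended to integer arguments with the convention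
`C(p, -1) = 1` if `p = -1` and `0` otherwise, and `C(a, b) = 0` if `a < 0` or `b < -1`. -/
def Cext (a b : ℤ) : ℤ :=
  if b = -1 then (if a = -1 then 1 else 0)
  else if 0 ≤ a ∧ 0 ≤ b then (Nat.choose a.toNat b.toNat : ℤ)
  else 0

lemma Cext_natCast (a b : ℕ) : Cext (a : ℤ) (b : ℤ) = (Nat.choose a b : ℤ) := by
  unfold Cext
  rw [if_neg (by omega : ¬((b:ℤ) = -1)),
    if_pos ⟨Int.natCast_nonneg a, Int.natCast_nonneg b⟩, Int.toNat_natCast, Int.toNat_natCast]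

/-- For every `n ≥ 0` and `0 ≤ m ≤ ⌊n/2⌋`,
`∑_{ℓ=0}^{n-2m} C(ℓ+m-1, m-1) C(n-ℓ-m, m) (-1)^ℓ = C(⌊n/2⌋, m)`. -/
theorem alternating_binomial_sum (n m : ℕ) (hm : m ≤ n / 2) :
    ∑ ℓ ∈ Finset.range (n - 2 * m + 1),
      Cext ((ℓ : ℤ) + (m : ℤ) - 1) ((m : ℤ) - 1) * Cext ((n : ℤ) - (ℓ : ℤ) - (m : ℤ)) (m : ℤ)
        * (-1 : ℤ) ^ ℓ
      = (Nat.choose (n / 2) m : ℤ) := by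
  match m with
  | 0 =>
    simp only [Nat.cast_zero, mul_zero, Nat.sub_zero, zero_sub, sub_zero]
    rw [Finset.sum_eq_single 0]
    · simp [Cext]
    · intro ℓ _ hℓ
      have : Cext ((ℓ:ℤ) + 0 - 1) (-1) = 0 := by
        unfold Cext
        rw [if_pos rfl, if_neg (by omega : ¬((ℓ:ℤ) + 0 - 1 = -1))]
      rw [this, zero_mul, zero_mul]
    · intro h
      exact absurd (Finset.mem_range.mpr (Nat.succ_pos n)) h
  | k+1 =>
    have h2 : 2 * (k+1) ≤ n := by omega
    have key : ∑ ℓ ∈ Finset.range (n - 2 * (k+1) + 1),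
        Cext ((ℓ : ℤ) + (k+1 : ℕ) - 1) ((k+1 : ℕ) - 1) * Cext ((n : ℤ) - ℓ - (k+1 : ℕ)) (k+1 : ℕ)
          * (-1 : ℤ) ^ ℓ
        = auxE (n - 2*(k+1)) k := by
      unfold auxE
      apply Finset.sum_congr rfl
      intro ℓ hℓ
      rw [Finset.mem_range] at hℓ
      have hℓ' : ℓ ≤ n - 2*(k+1) := by omega
      have c1 : Cext ((ℓ : ℤ) + (k+1 : ℕ) - 1) ((k+1 : ℕ) - 1) = (Nat.choose (ℓ+k) k : ℤ) := by
        have e1 : (ℓ : ℤ) + (k+1 : ℕ) - 1 = ((ℓ+k : ℕ) : ℤ) := by push_cast; ring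
        have e2 : ((k+1 : ℕ) : ℤ) - 1 = ((k : ℕ) : ℤ) := by push_cast; ring
        rw [e1, e2, Cext_natCast]
      have c2 : Cext ((n : ℤ) - ℓ - (k+1 : ℕ)) (k+1 : ℕ) = (Nat.choose (n - 2*(k+1) - ℓ + k + 1) (k+1) : ℤ) := by
        have e1 : (n : ℤ) - ℓ - (k+1 : ℕ) = ((n - 2*(k+1) - ℓ + k + 1 : ℕ) : ℤ) := by
          push_cast [Nat.cast_sub]
          omega
        rw [e1, Cext_natCast]
      rw [c1, c2]
      ring
    rw [key, auxE_all]
    congr 2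
    omega
end

section
/- For every integer m ≥ 1, the formal power series identity (-x)^{m-1}/(1+x)^m · x^m/(1-x)^{m+1} = (-1)^{m-1} · ∑_{r=0}^∞ C(⌊(r+1)/2⌋, m) x^r holds, i.e., the coefficient of x^r in (-x)^{m-1} x^m / ((1+x)^m (1-x)^{m+1}) equals (-1)^{m-1} C(⌊(r+1)/2⌋, m). -/
/-!
Write `F m = ∑_r C(⌊(r+1)/2⌋, m) x^r`. Since the coefficients of `F (m+1)` at `r` and `r - 2`
differ by Pascal's rule, `F (m+1) (1 - x²) = x² F m` for `m ≥ 1`, while `F 1 (1 - x²) = x F 0` and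
`F 0 = 1/(1 - x)`. Hence `F m = x^(2m-1) / ((1 - x²)^m (1 - x))`, and
`(1 + x)^m (1 - x)^(m+1) = (1 - x²)^m (1 - x)`.
-/

namespace PowerSeries

variable (R : Type*) [CommRing R]

noncomputable def halfChooseSeries (m : ℕ) : R⟦X⟧ :=
  mk fun r => (((r + 1) / 2).choose m : R)

variable {R}

theorem coeff_mul_one_sub_X_sq (p : R⟦X⟧) (r : ℕ) :
    coeff (r + 2) (p * (1 - X ^ 2)) = coeff (r + 2) p - coeff r p := by
  rw [mul_one_sub, map_sub, coeff_mul_X_pow]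

theorem halfChooseSeries_zero : halfChooseSeries R 0 = mk 1 := by
  ext r
  simp [halfChooseSeries]

theorem halfChooseSeries_one_mul_one_sub_X_sq :
    halfChooseSeries R 1 * (1 - X ^ 2) = X * halfChooseSeries R 0 := by
  ext (_ | _ | r)
  · simp [halfChooseSeries]
  · simp [halfChooseSeries, mul_one_sub, coeff_mul_X_pow']
  · rw [coeff_mul_one_sub_X_sq, mul_comm, coeff_succ_mul_X]
    simp only [halfChooseSeries, coeff_mk, Nat.choose_one_right, Nat.choose_zero_right,
      show (r + 2 + 1) / 2 = (r + 1) / 2 + 1 by omega]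
    push_cast
    ring

theorem halfChooseSeries_succ_mul_one_sub_X_sq {m : ℕ} (hm : 1 ≤ m) :
    halfChooseSeries R (m + 1) * (1 - X ^ 2) = X ^ 2 * halfChooseSeries R m := by
  ext (_ | _ | r)
  · simp [halfChooseSeries, coeff_X_pow_mul']
  · simp [halfChooseSeries, mul_one_sub, coeff_mul_X_pow', coeff_X_pow_mul',
      Nat.choose_eq_zero_of_lt (show 1 < m + 1 by omega)]
  · rw [coeff_mul_one_sub_X_sq, mul_comm, show r + 1 + 1 = r + 2 from rfl, coeff_mul_X_pow]
    simp only [halfChooseSeries, coeff_mk, show (r + 2 + 1) / 2 = (r + 1) / 2 + 1 by omega,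
      Nat.choose_succ_succ', Nat.cast_add]
    ring

theorem halfChooseSeries_succ_mul (m : ℕ) :
    halfChooseSeries R (m + 1) * ((1 - X ^ 2) ^ (m + 1) * (1 - X)) = X ^ (2 * m + 1) := by
  induction m with
  | zero =>
    rw [zero_add, pow_one, ← mul_assoc, halfChooseSeries_one_mul_one_sub_X_sq,
      halfChooseSeries_zero, mul_assoc, mk_one_mul_one_sub_eq_one, mul_one, Nat.mul_zero,
      zero_add, pow_one]
  | succ m ih =>
    calc halfChooseSeries R (m + 2) * ((1 - X ^ 2) ^ (m + 2) * (1 - X))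
        = halfChooseSeries R (m + 2) * (1 - X ^ 2) * ((1 - X ^ 2) ^ (m + 1) * (1 - X)) := by
          ring
      _ = X ^ 2 * X ^ (2 * m + 1) := by
          rw [halfChooseSeries_succ_mul_one_sub_X_sq (by omega), mul_assoc, ih]
      _ = X ^ (2 * (m + 1) + 1) := by ring

end PowerSeries

open PowerSeries

/-- Formal power series identity:
`(-x)^{m-1}/(1+x)^m · x^m/(1-x)^{m+1} = (-1)^{m-1} ∑_{r≥0} C(⌊(r+1)/2⌋, m) x^r`
for every integer `m ≥ 1`, as power series over `ℚ`. -/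
theorem powerSeries_identity (m : ℕ) (hm : 1 ≤ m) :
    ((-(PowerSeries.X : PowerSeries ℚ)) ^ (m - 1) * (PowerSeries.X : PowerSeries ℚ) ^ m)
        * ((1 + (PowerSeries.X : PowerSeries ℚ)) ^ m
            * (1 - (PowerSeries.X : PowerSeries ℚ)) ^ (m + 1))⁻¹
      = PowerSeries.mk (fun r => (-1 : ℚ) ^ (m - 1) * (Nat.choose ((r + 1) / 2) m : ℚ)) := by
  obtain ⟨n, rfl⟩ := Nat.exists_eq_add_of_le' hm
  have hden : ((1 + X) ^ (n + 1) * (1 - X) ^ (n + 1 + 1) : ℚ⟦X⟧)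
      = (1 - X ^ 2) ^ (n + 1) * (1 - X) := by
    rw [show (1 - X ^ 2 : ℚ⟦X⟧) = (1 + X) * (1 - X) by ring, mul_pow]
    ring
  have hnum : ((-X) ^ (n + 1 - 1) * X ^ (n + 1) : ℚ⟦X⟧) = C ((-1) ^ n) * X ^ (2 * n + 1) := by
    rw [Nat.add_sub_cancel, neg_pow, map_pow, map_neg, map_one]
    ring
  have hrhs : mk (fun r => (-1 : ℚ) ^ (n + 1 - 1) * (((r + 1) / 2).choose (n + 1) : ℚ))
      = C ((-1) ^ n) * halfChooseSeries ℚ (n + 1) := by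
    ext r
    rw [coeff_C_mul, Nat.add_sub_cancel]
    rfl
  rw [hden, hnum, hrhs, eq_comm, eq_mul_inv_iff_mul_eq (by simp), mul_assoc,
    halfChooseSeries_succ_mul]
end

section
/- For every integer m ≥ 1 and every integer r ≥ 0 with m ≤ ⌊(r+1)/2⌋, the sum ∑_{p=0}^{∞} C(p, m-1) · C(r-p, m) · (-1)^p equals (-1)^{m-1} · C(⌊(r+1)/2⌋, m). (The sum is finite since C(r-p,m) = 0 for p > r.) -/
open Finset

private lemma negone_sum (n : ℕ) : ∑ p ∈ range n, (-1:ℤ)^p = if Even n then 0 else 1 := by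
  induction n with
  | zero => simp
  | succ n ih =>
    rw [Finset.sum_range_succ, ih]
    by_cases h : Even n
    · simp [h, Nat.even_add_one, h.neg_one_pow]
    · simp [h, Nat.even_add_one, (Nat.not_even_iff_odd.mp h).neg_one_pow]

private lemma key : ∀ r : ℕ,
    (∀ k : ℕ, ∑ p ∈ range (r+1),
        (Nat.choose p k : ℤ) * (Nat.choose (r-p) (k+1) : ℤ) * (-1:ℤ)^p
      = (-1:ℤ)^k * (Nat.choose ((r+1)/2) (k+1) : ℤ)) ∧
    (∀ k : ℕ, ∑ p ∈ range (r+1),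
        (Nat.choose p k : ℤ) * (Nat.choose (r-p) k : ℤ) * (-1:ℤ)^p
      = if Even r then (-1:ℤ)^k * (Nat.choose (r/2) k : ℤ) else 0) := by
  intro r
  induction r with
  | zero =>
    constructor
    · intro k; simp
    · intro k
      cases k with
      | zero => simp
      | succ j => simp
  | succ s ih =>
    obtain ⟨ihF, ihG⟩ := ih
    have hF : ∀ k : ℕ, ∑ p ∈ range (s+2),
        (Nat.choose p k : ℤ) * (Nat.choose (s+1-p) (k+1) : ℤ) * (-1:ℤ)^p
        = (-1:ℤ)^k * (Nat.choose ((s+2)/2) (k+1) : ℤ) := by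
      intro k
      rw [Finset.sum_range_succ]
      have hlast : ((Nat.choose (s+1) k : ℤ)) * (Nat.choose (s+1-(s+1)) (k+1) : ℤ) * (-1:ℤ)^(s+1) = 0 := by
        simp
      rw [hlast, add_zero]
      have hsplit : ∀ p ∈ range (s+1),
          (Nat.choose p k : ℤ) * (Nat.choose (s+1-p) (k+1) : ℤ) * (-1:ℤ)^p
          = (Nat.choose p k : ℤ) * (Nat.choose (s-p) (k+1) : ℤ) * (-1:ℤ)^p
            + (Nat.choose p k : ℤ) * (Nat.choose (s-p) k : ℤ) * (-1:ℤ)^p := by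
        intro p hp
        have hps : p ≤ s := Nat.lt_succ_iff.mp (Finset.mem_range.mp hp)
        rw [show s+1-p = (s-p)+1 by omega, Nat.choose_succ_succ]
        push_cast; ring
      rw [Finset.sum_congr rfl hsplit, Finset.sum_add_distrib, ihF k, ihG k]
      rcases Nat.even_or_odd s with he | ho
      · obtain ⟨t, rfl⟩ := he
        have e1 : (t+t+1)/2 = t := by omega
        have e2 : (t+t)/2 = t := by omega
        have e3 : (t+t+2)/2 = t+1 := by omega
        rw [if_pos (show Even (t+t) from ⟨t, rfl⟩), e1, e2, e3]
        rw [Nat.choose_succ_succ']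
        push_cast; ring
      · obtain ⟨t, rfl⟩ := ho
        have e1 : (2*t+1+1)/2 = t+1 := by omega
        have e2 : (2*t+1+2)/2 = t+1 := by omega
        rw [if_neg (by simp [parity_simps]), e1, e2, add_zero]
    refine ⟨hF, ?_⟩
    intro k
    cases k with
    | zero =>
      simp only [Nat.choose_zero_right, Nat.cast_one, one_mul, pow_zero, mul_one]
      rw [negone_sum]
      by_cases h : Even s <;> simp [h, Nat.even_add_one]
    | succ j =>
      rw [Finset.sum_range_succ]
      have hlast : ((Nat.choose (s+1) (j+1) : ℤ)) * (Nat.choose (s+1-(s+1)) (j+1) : ℤ) * (-1:ℤ)^(s+1) = 0 := by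
        simp
      rw [hlast, add_zero]
      have hsplit : ∀ p ∈ range (s+1),
          (Nat.choose p (j+1) : ℤ) * (Nat.choose (s+1-p) (j+1) : ℤ) * (-1:ℤ)^p
          = (Nat.choose p (j+1) : ℤ) * (Nat.choose (s-p) (j+1) : ℤ) * (-1:ℤ)^p
            + (Nat.choose p (j+1) : ℤ) * (Nat.choose (s-p) j : ℤ) * (-1:ℤ)^p := by
        intro p hp
        have hps : p ≤ s := Nat.lt_succ_iff.mp (Finset.mem_range.mp hp)
        rw [show s+1-p = (s-p)+1 by omega, Nat.choose_succ_succ]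
        push_cast; ring
      rw [Finset.sum_congr rfl hsplit, Finset.sum_add_distrib, ihG (j+1)]
      have hrefl : ∑ p ∈ range (s+1),
          (Nat.choose p (j+1) : ℤ) * (Nat.choose (s-p) j : ℤ) * (-1:ℤ)^p
          = (-1:ℤ)^s * ∑ q ∈ range (s+1),
              (Nat.choose q j : ℤ) * (Nat.choose (s-q) (j+1) : ℤ) * (-1:ℤ)^q := by
        rw [Finset.mul_sum]
        rw [← Finset.sum_range_reflect
          (fun p => (Nat.choose p (j+1) : ℤ) * (Nat.choose (s-p) j : ℤ) * (-1:ℤ)^p) (s+1)]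
        refine Finset.sum_congr rfl ?_
        intro q hq
        have hqs : q ≤ s := Nat.lt_succ_iff.mp (Finset.mem_range.mp hq)
        have e1 : s + 1 - 1 - q = s - q := by omega
        have e2 : s - (s - q) = q := by omega
        have e3 : (-1:ℤ)^(s-q) = (-1:ℤ)^s * (-1:ℤ)^q := by
          have : s + q = (s - q) + 2*q := by omega
          have h4 : (-1:ℤ)^(s+q) = (-1:ℤ)^(s-q) := by
            rw [this, pow_add, pow_mul]; norm_num
          rw [← h4, pow_add]
        rw [e1, e2, e3]; ring
      rw [hrefl, ihF j]
      rcases Nat.even_or_odd s with he | ho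
      · obtain ⟨t, rfl⟩ := he
        have e1 : (t+t+1)/2 = t := by omega
        have e2 : (t+t)/2 = t := by omega
        rw [if_pos ⟨t, rfl⟩, if_neg (by simp [parity_simps]), e1, e2]
        have : (-1:ℤ)^(t+t) = 1 := Even.neg_one_pow ⟨t, rfl⟩
        rw [this]; ring
      · obtain ⟨t, rfl⟩ := ho
        have e1 : (2*t+1+1)/2 = t+1 := by omega
        rw [if_neg (by simp [parity_simps]), if_pos (by exact ⟨t+1, by ring⟩), e1]
        have : (-1:ℤ)^(2*t+1) = -1 := Odd.neg_one_pow ⟨t, rfl⟩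
        rw [this]; ring

/-- For every `m ≥ 1` and `r ≥ 0` with `m ≤ ⌊(r+1)/2⌋`,
`∑_{p=0}^{∞} C(p, m-1) C(r-p, m) (-1)^p = (-1)^{m-1} C(⌊(r+1)/2⌋, m)`.
The sum is finite since `C(r-p, m) = 0` for `p > r`, so it is taken over `0 ≤ p ≤ r`. -/
theorem alternating_convolution_sum (m r : ℕ) (hm : 1 ≤ m) (hr : m ≤ (r + 1) / 2) :
    ∑ p ∈ Finset.range (r + 1),
        (Nat.choose p (m - 1) : ℤ) * (Nat.choose (r - p) m : ℤ) * (-1 : ℤ) ^ p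
      = (-1 : ℤ) ^ (m - 1) * (Nat.choose ((r + 1) / 2) m : ℤ) := by
  obtain ⟨k, rfl⟩ : ∃ k, m = k + 1 := ⟨m - 1, (Nat.succ_pred_eq_of_pos hm).symm⟩
  simpa using (key r).1 k
end

section
/- Let α > δ > 0 and p ∈ ℕ. If f : ℝ → ℝ is p-times continuously differentiable and f ≡ 0 on [-δ, δ], then for any ε > 0 there exists a polynomial P with P(0) = P'(0) = ⋯ = P^{(p-1)}(0) = 0 such that sup_{x ∈ [-α,α]} |f(x) - P(x)| < ε and |P(x)| ≤ ε |x|^p for all x ∈ [-δ, δ]. -/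
/-!
Since `f` vanishes near `0`, the quotient `g x = f x / x ^ p` is continuous. Approximate `g`
uniformly by a polynomial `Q` (Weierstrass) on an interval containing `[-α, α]` and `[-δ, δ]`,
and take `P = Q X ^ p`: it vanishes to order `p` at `0`, the error `f - P = x ^ p (g - Q)` is
small on `[-α, α]`, and on `[-δ, δ]`, where `g = 0`, `|P x| = |Q x| |x| ^ p` with `|Q x|` small.
-/

open Filter Topology Polynomial

theorem Polynomial.eval_zero_iterate_derivative_mul_X_pow {R : Type*} [CommSemiring R]
    (Q : R[X]) {p j : ℕ} (hj : j < p) : (derivative^[j] (Q * X ^ p)).eval 0 = 0 := by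
  rw [← coeff_zero_eq_eval_zero, coeff_iterate_derivative, coeff_mul_X_pow', if_neg (by omega),
    smul_zero]

theorem continuous_div_pow_of_eventuallyEq_zero {f : ℝ → ℝ} (hf : Continuous f)
    (h0 : f =ᶠ[𝓝 0] 0) (p : ℕ) : Continuous fun x => f x / x ^ p := by
  refine continuous_iff_continuousAt.mpr fun x => ?_
  rcases eq_or_ne x 0 with rfl | hx
  · refine (continuousAt_const (y := (0 : ℝ))).congr ?_
    filter_upwards [h0] with y hy
    simp [hy]
  · exact hf.continuousAt.div (continuousAt_pow x p) (pow_ne_zero p hx)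

theorem pow_mul_div_pow_of_map_zero {f : ℝ → ℝ} (h0 : f 0 = 0) (p : ℕ) (x : ℝ) :
    x ^ p * (f x / x ^ p) = f x := by
  rcases eq_or_ne x 0 with rfl | hx
  · simp [h0]
  · field_simp

theorem polynomial_approx_vanishing_general (α δ : ℝ) (p : ℕ) (hδ : 0 < δ)
    (f : ℝ → ℝ) (hf : ContDiff ℝ p f) (hf0 : ∀ x ∈ Set.Icc (-δ) δ, f x = 0)
    (ε : ℝ) (hε : 0 < ε) :
    ∃ P : Polynomial ℝ,
      (∀ j < p, (Polynomial.derivative^[j] P).eval 0 = 0) ∧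
      (∀ x ∈ Set.Icc (-α) α, |f x - P.eval x| < ε) ∧
      (∀ x ∈ Set.Icc (-δ) δ, |P.eval x| ≤ ε * |x| ^ p) := by
  set R := max α δ
  have hR : 0 < R := hδ.trans_le (le_max_right α δ)
  have hRp : 0 < R ^ p := pow_pos hR p
  have hf0' : f 0 = 0 := hf0 0 ⟨by linarith, hδ.le⟩
  have hg : Continuous fun x => f x / x ^ p :=
    continuous_div_pow_of_eventuallyEq_zero hf.continuous
      (eventually_of_mem (Icc_mem_nhds (neg_lt_zero.mpr hδ) hδ) hf0) p
  have hsub {a : ℝ} (ha : a ≤ R) : Set.Icc (-a) a ⊆ Set.Icc (-R) R :=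
    Set.Icc_subset_Icc (neg_le_neg ha) ha
  have hε' : 0 < ε / (R ^ p + 1) := by positivity
  obtain ⟨Q, hQ⟩ := exists_polynomial_near_of_continuousOn (-R) R _ hg.continuousOn _ hε'
  have hε'ε : ε / (R ^ p + 1) ≤ ε := div_le_self hε.le (by linarith)
  refine ⟨Q * X ^ p, fun j hj => Q.eval_zero_iterate_derivative_mul_X_pow hj, ?_, ?_⟩
  · intro x hx
    have hxR : x ∈ Set.Icc (-R) R := hsub (le_max_left α δ) hx
    have hQx := hQ x hxR
    calc |f x - (Q * X ^ p).eval x|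
        = |x| ^ p * |Q.eval x - f x / x ^ p| := by
          rw [← abs_pow, ← abs_mul, abs_sub_comm, mul_sub, pow_mul_div_pow_of_map_zero hf0' p,
            eval_mul, eval_pow, eval_X, mul_comm]
      _ ≤ R ^ p * |Q.eval x - f x / x ^ p| := by gcongr; exact abs_le.mpr hxR
      _ < R ^ p * (ε / (R ^ p + 1)) := by gcongr
      _ < ε := by rw [mul_div_assoc', div_lt_iff₀ (by linarith)]; nlinarith
  · intro x hx
    have hQx := hQ x (hsub (le_max_right α δ) hx)
    rw [hf0 x hx, zero_div, sub_zero] at hQx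
    rw [eval_mul, eval_pow, eval_X, abs_mul, abs_pow]
    exact mul_le_mul_of_nonneg_right (hQx.le.trans hε'ε) (by positivity)

/-- Lemma 2.5: if `α > δ > 0`, `p ∈ ℕ`, `f` is `C^p` and vanishes on `[-δ, δ]`, then for
any `ε > 0` there is a polynomial `P` with `P(0) = P'(0) = ⋯ = P^{(p-1)}(0) = 0`,
`‖f - P‖_{[-α,α]} < ε` and `|P(x)| ≤ ε |x|^p` on `[-δ, δ]`. -/
theorem polynomial_approx_vanishing (α δ : ℝ) (p : ℕ) (hδ : 0 < δ) (hαδ : δ < α)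
    (f : ℝ → ℝ) (hf : ContDiff ℝ p f) (hf0 : ∀ x ∈ Set.Icc (-δ) δ, f x = 0)
    (ε : ℝ) (hε : 0 < ε) :
    ∃ P : Polynomial ℝ,
      (∀ j < p, (Polynomial.derivative^[j] P).eval 0 = 0) ∧
      (∀ x ∈ Set.Icc (-α) α, |f x - P.eval x| < ε) ∧
      (∀ x ∈ Set.Icc (-δ) δ, |P.eval x| ≤ ε * |x| ^ p) :=
  polynomial_approx_vanishing_general α δ p hδ f hf hf0 ε hε
end

section
/- Let (C, ω, τ) be a noncommutative probability space with tracial weight, let the pair (A, B) of ∗-subalgebras (1 ∈ B) be cyclically monotone with respect to (ω, τ), and let a ∈ A, b ∈ B be self-adjoint. Then for every even n, ω((i(ab - ba))^n) = 2 r^n ω(a^n), where r = √(τ(b²) - τ(b)²), and for every odd n, ω((i(ab - ba))^n) = 0. -/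
/-!
Replacing `b` by `b₀ = b - τ(b)`, which has `τ b₀ = 0`, writes `i(ab - ba)` as `x + y` with
`x = (i a) b₀` and `y = b₀ (-i a)`. Cyclic monotonicity makes `ω` vanish on every product containing
a factor `α b₀ α'` with `α, α' ∈ A`; by traciality these elements span a two-sided ideal of the
algebra generated by `A` and `B` on which `ω` vanishes, and `x², y²` lie in it. Modulo that ideal
`(x + y)^(2m) = (xy)^m + (yx)^m` and `(x + y)^(2m+1) = (xy)^m x + (yx)^m y`. Cyclic monotonicity
evaluates `ω((xy)^m) = ω((yx)^m) = ω(a^(2m)) τ(b₀²)^m`, while `ω((xy)^m x) = ω(x (xy)^m)` vanishes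
because `x² ≡ 0` (for `m = 0`, `ω(x) = ω(i a) τ(b₀) = 0`). Finally `τ(b₀²) = r²`.
-/

open scoped ComplexOrder

section SquareZero

variable {R : Type*} [Ring R] {x y : R}

theorem add_pow_succ_of_mul_eq_zero (hxy : x * y = 0) (hyx : y * x = 0) (m : ℕ) :
    (x + y) ^ (m + 1) = x ^ (m + 1) + y ^ (m + 1) := by
  induction m with
  | zero => simp
  | succ m ih =>
    have hx : x ^ (m + 1) * y = 0 := by rw [pow_succ, mul_assoc, hxy, mul_zero]
    have hy : y ^ (m + 1) * x = 0 := by rw [pow_succ, mul_assoc, hyx, mul_zero]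
    rw [pow_succ, ih, add_mul, mul_add, mul_add, hx, hy, ← pow_succ, ← pow_succ, add_zero,
      zero_add]

theorem add_pow_two_mul_of_mul_self_eq_zero (hx : x * x = 0) (hy : y * y = 0) {m : ℕ}
    (hm : m ≠ 0) : (x + y) ^ (2 * m) = (x * y) ^ m + (y * x) ^ m := by
  obtain ⟨k, rfl⟩ := Nat.exists_eq_succ_of_ne_zero hm
  have hsq : (x + y) ^ 2 = x * y + y * x := by
    rw [sq, add_mul, mul_add, mul_add, hx, hy, zero_add, add_zero]
  rw [pow_mul, hsq]
  exact add_pow_succ_of_mul_eq_zero (by rw [mul_assoc, ← mul_assoc y, hy, zero_mul, mul_zero])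
    (by rw [mul_assoc, ← mul_assoc x, hx, zero_mul, mul_zero]) k

theorem add_pow_two_mul_add_one_of_mul_self_eq_zero (hx : x * x = 0) (hy : y * y = 0) (m : ℕ) :
    (x + y) ^ (2 * m + 1) = (x * y) ^ m * x + (y * x) ^ m * y := by
  cases m with
  | zero => simp
  | succ k =>
    have hxyy : (x * y) ^ (k + 1) * y = 0 := by
      rw [pow_succ, mul_assoc, mul_assoc, hy, mul_zero, mul_zero]
    have hyxx : (y * x) ^ (k + 1) * x = 0 := by
      rw [pow_succ, mul_assoc, mul_assoc, hx, mul_zero, mul_zero]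
    rw [pow_succ, add_pow_two_mul_of_mul_self_eq_zero hx hy k.succ_ne_zero, add_mul, mul_add,
      mul_add, hxyy, hyxx, add_zero, zero_add]

end SquareZero

namespace TwoSidedIdeal

variable {R : Type*} [Ring R] (I : TwoSidedIdeal R) {x y : R}

theorem mem_iff_ringCon_mk'_eq_zero {z : R} : z ∈ I ↔ I.ringCon.mk' z = 0 := by
  rw [← mem_ker, ker_ringCon_mk']

theorem add_pow_two_mul_sub_mem (hx : x * x ∈ I) (hy : y * y ∈ I) {m : ℕ} (hm : m ≠ 0) :
    (x + y) ^ (2 * m) - ((x * y) ^ m + (y * x) ^ m) ∈ I := by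
  rw [mem_iff_ringCon_mk'_eq_zero] at hx hy ⊢
  simp only [map_sub, map_add, map_pow, map_mul] at hx hy ⊢
  rw [add_pow_two_mul_of_mul_self_eq_zero hx hy hm, sub_self]

theorem add_pow_two_mul_add_one_sub_mem (hx : x * x ∈ I) (hy : y * y ∈ I) (m : ℕ) :
    (x + y) ^ (2 * m + 1) - ((x * y) ^ m * x + (y * x) ^ m * y) ∈ I := by
  rw [mem_iff_ringCon_mk'_eq_zero] at hx hy ⊢
  simp only [map_sub, map_add, map_pow, map_mul] at hx hy ⊢
  rw [add_pow_two_mul_add_one_of_mul_self_eq_zero hx hy m, sub_self]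

end TwoSidedIdeal

section NullIdeal

variable {R G : Type*} [Ring R] [AddCommGroup G] (φ : R →+ G)
  (hφ : ∀ x y, φ (x * y) = φ (y * x))

def nullIdeal : TwoSidedIdeal R :=
  .mk' {z | ∀ u, φ (z * u) = 0} (by simp)
    (fun hx hy u => by rw [add_mul, map_add, hx, hy, add_zero])
    (fun hx u => by rw [neg_mul, map_neg, hx, neg_zero])
    (fun {x y} hy u => by rw [mul_assoc, hφ, mul_assoc, hy])
    (fun {x y} hx u => by rw [mul_assoc, hx])

variable {φ hφ} {x y : R}

theorem mem_nullIdeal {z : R} : z ∈ nullIdeal φ hφ ↔ ∀ u, φ (z * u) = 0 :=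
  TwoSidedIdeal.mem_mk' ..

theorem map_eq_of_sub_mem_nullIdeal {z w : R} (h : z - w ∈ nullIdeal φ hφ) : φ z = φ w := by
  simpa [sub_eq_zero] using mem_nullIdeal.1 h 1

theorem map_mul_pow_mul_eq_zero_of_mem_nullIdeal (hx : x * x ∈ nullIdeal φ hφ) (hφx : φ x = 0)
    (m : ℕ) : φ ((x * y) ^ m * x) = 0 := by
  cases m with
  | zero => simpa using hφx
  | succ m =>
    rw [hφ, pow_succ', ← mul_assoc, ← mul_assoc, mul_assoc (x * x)]
    exact mem_nullIdeal.1 hx _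

theorem map_add_pow_two_mul_of_mem_nullIdeal (hx : x * x ∈ nullIdeal φ hφ)
    (hy : y * y ∈ nullIdeal φ hφ) {m : ℕ} (hm : m ≠ 0) :
    φ ((x + y) ^ (2 * m)) = φ ((x * y) ^ m) + φ ((y * x) ^ m) := by
  rw [map_eq_of_sub_mem_nullIdeal ((nullIdeal φ hφ).add_pow_two_mul_sub_mem hx hy hm), map_add]

theorem map_add_pow_two_mul_add_one_of_mem_nullIdeal (hx : x * x ∈ nullIdeal φ hφ)
    (hy : y * y ∈ nullIdeal φ hφ) (hφx : φ x = 0) (hφy : φ y = 0) (m : ℕ) :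
    φ ((x + y) ^ (2 * m + 1)) = 0 := by
  rw [map_eq_of_sub_mem_nullIdeal ((nullIdeal φ hφ).add_pow_two_mul_add_one_sub_mem hx hy m),
    map_add, map_mul_pow_mul_eq_zero_of_mem_nullIdeal hx hφx,
    map_mul_pow_mul_eq_zero_of_mem_nullIdeal hy hφy, add_zero]

end NullIdeal

theorem map_mul_pow_comm {M G F : Type*} [Monoid M] [FunLike F M G] {φ : F}
    (hφ : ∀ x y, φ (x * y) = φ (y * x)) (u v : M) (m : ℕ) :
    φ ((u * v) ^ m) = φ ((v * u) ^ m) := by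
  cases m with
  | zero => simp
  | succ m => rw [pow_succ', mul_assoc, hφ, mul_assoc, mul_pow_mul, ← mul_assoc, ← pow_succ']

theorem List.map_getD_range {α β : Type*} (l : List α) (d : α) (f : α → β) :
    (List.range l.length).map (fun i => f (l.getD i d)) = l.map f :=
  List.ext_getElem (by simp) fun i _ h => by
    rw [List.length_map] at h
    simp [List.getElem?_eq_getElem h]

section CyclicallyMonotone

variable {K C : Type*} [CommRing K] [Ring C] [Algebra K C]

def IsCyclicallyMonotone (A : NonUnitalSubalgebra K C) (B : Subalgebra K C)
    (ω τ : C →ₗ[K] K) : Prop :=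
  ∀ (n : ℕ) (a b : ℕ → C), 1 ≤ n → (∀ i, a i ∈ A) → (∀ i, b i ∈ B) →
    ω (((List.range n).map (fun i => a i * b i)).prod)
      = ω (((List.range n).map a).prod) * ∏ i ∈ Finset.range n, τ (b i)

def alternatingProducts (A : NonUnitalSubalgebra K C) (B : Subalgebra K C) : Set C :=
  {x | ∃ l : List (A × B), l ≠ [] ∧ (l.map fun p => (p.1 : C) * p.2).prod = x}

variable {A : NonUnitalSubalgebra K C} {B : Subalgebra K C}

theorem mem_alternatingProducts_of_mem {α : C} (hα : α ∈ A) : α ∈ alternatingProducts A B :=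
  ⟨[(⟨α, hα⟩, 1)], by simp, by simp⟩

theorem mul_mem_alternatingProducts {s u : C} (hs : s ∈ alternatingProducts A B)
    (hu : u ∈ (A : Set C) ∪ B) : s * u ∈ alternatingProducts A B := by
  obtain ⟨l, hl, rfl⟩ := hs
  rcases hu with hα | hβ
  · exact ⟨l ++ [(⟨u, hα⟩, 1)], by simp, by simp⟩
  · obtain ⟨l, p, rfl⟩ := (List.eq_nil_or_concat' l).resolve_left hl
    exact ⟨l ++ [(p.1, p.2 * ⟨u, hβ⟩)], by simp, by simp [mul_assoc]⟩

theorem mul_mem_alternatingProducts_of_mem_closure {s u : C}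
    (hs : s ∈ alternatingProducts A B) (hu : u ∈ Submonoid.closure ((A : Set C) ∪ B)) :
    s * u ∈ alternatingProducts A B := by
  induction hu using Submonoid.closure_induction generalizing s with
  | mem u hu => exact mul_mem_alternatingProducts hs hu
  | one => simpa using hs
  | mul u v _ _ hu hv => simpa only [mul_assoc] using hv (hu hs)

namespace IsCyclicallyMonotone

variable {ω τ : C →ₗ[K] K} (h : IsCyclicallyMonotone A B ω τ)
include h

theorem map_list_prod (l : List (A × B)) (hl : l ≠ []) :
    ω ((l.map fun p => (p.1 : C) * p.2).prod)
      = ω ((l.map fun p => (p.1 : C)).prod) * (l.map fun p => τ p.2).prod := by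
  have := h l.length (fun i => (l.getD i 0).1) (fun i => (l.getD i 0).2)
    (List.length_pos_iff.2 hl) (fun i => (l.getD i 0).1.2) (fun i => (l.getD i 0).2.2)
  rw [List.map_getD_range l 0 fun p => (p.1 : C) * p.2,
    List.map_getD_range l 0 fun p => (p.1 : C)] at this
  rw [this]
  congr 1
  exact congrArg List.prod (List.map_getD_range l 0 fun p => τ p.2)

theorem map_mul_mul_eq_zero {α β s : C} (hα : α ∈ A) (hβ : β ∈ B) (hτβ : τ β = 0)
    (hs : s ∈ alternatingProducts A B) : ω (α * β * s) = 0 := by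
  obtain ⟨l, hl, rfl⟩ := hs
  simpa [hτβ, mul_assoc] using
    h.map_list_prod ((⟨α, hα⟩, ⟨β, hβ⟩) :: l) (List.cons_ne_nil _ _)

theorem map_mul_pow {α β : C} (hα : α ∈ A) (hβ : β ∈ B) {m : ℕ} (hm : m ≠ 0) :
    ω ((α * β) ^ m) = ω (α ^ m) * τ β ^ m := by
  simpa using h.map_list_prod (List.replicate m (⟨α, hα⟩, ⟨β, hβ⟩)) (by simpa using hm)

theorem map_mul_mul_mul_eq_zero {α β α' v : C} (hα : α ∈ A) (hβ : β ∈ B) (hτβ : τ β = 0)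
    (hα' : α' ∈ A) (hv : v ∈ Algebra.adjoin K ((A : Set C) ∪ B)) :
    ω (α * β * (α' * v)) = 0 := by
  rw [← Subalgebra.mem_toSubmodule, Algebra.adjoin_eq_span] at hv
  induction hv using Submodule.span_induction with
  | mem v hv =>
    exact h.map_mul_mul_eq_zero hα hβ hτβ
      (mul_mem_alternatingProducts_of_mem_closure (mem_alternatingProducts_of_mem hα') hv)
  | zero => simp
  | add v w _ _ hv hw => rw [mul_add, mul_add, map_add, hv, hw, add_zero]
  | smul r v _ hv => rw [mul_smul_comm, mul_smul_comm, map_smul, hv, smul_zero]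

theorem map_mul_add_mul_pow (hω : ∀ x y, ω (x * y) = ω (y * x)) {a a' b : C} (ha : a ∈ A)
    (ha' : a' ∈ A) (hb : b ∈ B) (hτb : τ b = 0) :
    (∀ m ≠ 0, ω ((a * b + b * a') ^ (2 * m)) = 2 * ω ((a' * a) ^ m) * τ (b * b) ^ m) ∧
      ∀ m, ω ((a * b + b * a') ^ (2 * m + 1)) = 0 := by
  set M := Algebra.adjoin K ((A : Set C) ∪ B)
  let φ : M →+ K := (ω.comp M.val.toLinearMap).toAddMonoidHom
  have hφ : ∀ x y : M, φ (x * y) = φ (y * x) := fun x y => hω x y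
  have hnull {α β α' : M} (hα : (α : C) ∈ A) (hβ : (β : C) ∈ B) (hτβ : τ β = 0)
      (hα' : (α' : C) ∈ A) : α * β * α' ∈ nullIdeal φ hφ :=
    mem_nullIdeal.2 fun u => by
      simpa [φ, mul_assoc] using h.map_mul_mul_mul_eq_zero hα hβ hτβ hα' u.2
  let a₁ : M := ⟨a, Algebra.subset_adjoin (Or.inl ha)⟩
  let a₂ : M := ⟨a', Algebra.subset_adjoin (Or.inl ha')⟩
  let b₁ : M := ⟨b, Algebra.subset_adjoin (Or.inr hb)⟩
  have hx : a₁ * b₁ * (a₁ * b₁) ∈ nullIdeal φ hφ := by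
    rw [← mul_assoc]
    exact TwoSidedIdeal.mul_mem_right _ _ _ (hnull ha hb hτb ha)
  have hy : b₁ * a₂ * (b₁ * a₂) ∈ nullIdeal φ hφ := by
    rw [mul_assoc, ← mul_assoc a₂]
    exact TwoSidedIdeal.mul_mem_left _ _ _ (hnull ha' hb hτb ha')
  have hpow (n : ℕ) : ω ((a * b + b * a') ^ n) = φ ((a₁ * b₁ + b₁ * a₂) ^ n) := rfl
  constructor
  · intro m hm
    have hxy : φ ((a₁ * b₁ * (b₁ * a₂)) ^ m) = ω ((a' * a * (b * b)) ^ m) :=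
      calc ω ((a * b * (b * a')) ^ m) = ω ((a * b * b * a') ^ m) := by simp only [mul_assoc]
        _ = ω ((a' * (a * b * b)) ^ m) := map_mul_pow_comm hω _ _ _
        _ = ω ((a' * a * (b * b)) ^ m) := by simp only [mul_assoc]
    have hyx : φ ((b₁ * a₂ * (a₁ * b₁)) ^ m) = ω ((a' * a * (b * b)) ^ m) :=
      calc ω ((b * a' * (a * b)) ^ m) = ω ((b * (a' * a * b)) ^ m) := by simp only [mul_assoc]
        _ = ω ((a' * a * b * b) ^ m) := map_mul_pow_comm hω _ _ _
        _ = ω ((a' * a * (b * b)) ^ m) := by simp only [mul_assoc]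
    rw [hpow, map_add_pow_two_mul_of_mem_nullIdeal hx hy hm, hxy, hyx,
      h.map_mul_pow (mul_mem ha' ha) (mul_mem hb hb) hm]
    ring
  · intro m
    rw [hpow, map_add_pow_two_mul_add_one_of_mem_nullIdeal hx hy _ _ m]
    · simpa [φ, a₁, b₁, hτb] using h.map_mul_pow ha hb one_ne_zero
    · simpa [φ, a₂, b₁, hω b, hτb] using h.map_mul_pow ha' hb one_ne_zero

end IsCyclicallyMonotone

theorem map_sub_smul_one_mul_self (τ : C →ₗ[K] K) (hτ1 : τ 1 = 1) (b : C) :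
    τ ((b - τ b • 1) * (b - τ b • 1)) = τ (b * b) - τ b ^ 2 := by
  simp only [sub_mul, mul_sub, smul_mul_assoc, mul_smul_comm, one_mul, mul_one, map_sub, map_smul,
    hτ1, smul_eq_mul]
  ring

end CyclicallyMonotone

theorem map_sub_smul_one_mul_self_of_isSelfAdjoint {C : Type*} [Ring C] [StarRing C]
    [Algebra ℂ C] [StarModule ℂ C] (τ : C →ₗ[ℂ] ℂ) (hτ1 : τ 1 = 1)
    (hτstar : ∀ x : C, τ (star x) = starRingEnd ℂ (τ x)) (hτpos : ∀ x : C, 0 ≤ τ (star x * x))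
    {b : C} (hb : IsSelfAdjoint b) :
    τ ((b - τ b • 1) * (b - τ b • 1)) = (((τ (b * b)).re - (τ b).re ^ 2 : ℝ) : ℂ) ∧
      0 ≤ (τ (b * b)).re - (τ b).re ^ 2 := by
  have hτb : τ b = ((τ b).re : ℂ) :=
    (Complex.conj_eq_iff_re.1 (by rw [← hτstar, hb.star_eq])).symm
  have hsa : star (b - τ b • 1) = b - τ b • 1 := by
    rw [star_sub, star_smul, star_one, hb.star_eq, hτb, Complex.star_def, Complex.conj_ofReal]
  have hpos : 0 ≤ τ ((b - τ b • 1) * (b - τ b • 1)) := by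
    simpa only [hsa] using hτpos (b - τ b • 1)
  have heq : τ ((b - τ b • 1) * (b - τ b • 1)) = (((τ (b * b)).re - (τ b).re ^ 2 : ℝ) : ℂ) := by
    rw [Complex.eq_re_of_ofReal_le (r := 0) (z := τ ((b - τ b • 1) * (b - τ b • 1)))
      (by simpa using hpos), map_sub_smul_one_mul_self τ hτ1 b, hτb]
    simp [← Complex.ofReal_pow]
  exact ⟨heq, by rwa [heq, Complex.zero_le_real] at hpos⟩

theorem commutator_cyclic_monotone_general
    {C : Type*} [Ring C] [StarRing C] [Algebra ℂ C] [StarModule ℂ C]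
    (A : NonUnitalStarSubalgebra ℂ C) (B : StarSubalgebra ℂ C)
    (ω τ : C →ₗ[ℂ] ℂ)
    (hτ1 : τ 1 = 1)
    (hτstar : ∀ x : C, τ (star x) = starRingEnd ℂ (τ x))
    (hτpos : ∀ x : C, 0 ≤ τ (star x * x))
    (hωtr : ∀ x y : C, ω (x * y) = ω (y * x))
    (hcm : ∀ (n : ℕ) (a b : ℕ → C), 1 ≤ n → (∀ i, a i ∈ A) → (∀ i, b i ∈ B) →
      ω (((List.range n).map (fun i => a i * b i)).prod)
        = ω (((List.range n).map a).prod) * ∏ i ∈ Finset.range n, τ (b i))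
    (a b : C) (ha : a ∈ A) (hb : b ∈ B)
    (hbs : IsSelfAdjoint b)
    (n : ℕ) (hn : 1 ≤ n) :
    (Even n →
      ω ((Complex.I • (a * b - b * a)) ^ n)
        = ((2 * (Real.sqrt ((τ (b * b)).re - (τ b).re ^ 2)) ^ n : ℝ) : ℂ) * ω (a ^ n)) ∧
    (Odd n → ω ((Complex.I • (a * b - b * a)) ^ n) = 0) := by
  have hind : IsCyclicallyMonotone A.toNonUnitalSubalgebra B.toSubalgebra ω τ := hcm
  set b₀ := b - τ b • 1
  have hb₀ : b₀ ∈ B := sub_mem hb (B.smul_mem B.one_mem _)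
  have hτb₀ : τ b₀ = 0 := by simp [b₀, hτ1]
  have hcomm : Complex.I • (a * b - b * a) = Complex.I • a * b₀ + b₀ * (-Complex.I • a) := by
    simp only [b₀, mul_sub, sub_mul, smul_mul_assoc, mul_smul_comm, one_mul, mul_one]
    module
  have hsq : -Complex.I • a * Complex.I • a = a ^ 2 := by
    rw [smul_mul_smul_comm, neg_mul, Complex.I_mul_I, neg_neg, one_smul, sq]
  obtain ⟨hvar, hvar_nonneg⟩ :=
    map_sub_smul_one_mul_self_of_isSelfAdjoint τ hτ1 hτstar hτpos hbs
  obtain ⟨heven, hodd⟩ := hind.map_mul_add_mul_pow hωtr (SMulMemClass.smul_mem Complex.I ha)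
    (SMulMemClass.smul_mem (-Complex.I) ha) hb₀ hτb₀
  refine ⟨?_, ?_⟩
  · rintro ⟨m, rfl⟩
    rw [hcomm, ← two_mul, heven m (by omega), hsq, ← pow_mul, hvar, pow_mul √_,
      Real.sq_sqrt hvar_nonneg]
    push_cast
    ring
  · rintro ⟨m, rfl⟩
    rw [hcomm, hodd]

/-- Theorem 3.13(4): commutator of cyclically monotone elements. If the pair `(A, B)` of
∗-subalgebras (`1 ∈ B`) is cyclically monotone with respect to `(ω, τ)` and `a ∈ A`,
`b ∈ B` are self-adjoint, then with `r = √(τ(b²) - τ(b)²)`: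
`ω((i(ab - ba))^n) = 2 r^n ω(a^n)` for even `n`, and `= 0` for odd `n`. -/
theorem commutator_cyclic_monotone
    {C : Type*} [Ring C] [StarRing C] [Algebra ℂ C] [StarModule ℂ C]
    (A : NonUnitalStarSubalgebra ℂ C) (B : StarSubalgebra ℂ C)
    (ω τ : C →ₗ[ℂ] ℂ)
    (hτ1 : τ 1 = 1)
    (hτtr : ∀ x y : C, τ (x * y) = τ (y * x))
    (hτstar : ∀ x : C, τ (star x) = starRingEnd ℂ (τ x))
    (hτpos : ∀ x : C, 0 ≤ τ (star x * x))
    (hωtr : ∀ x y : C, ω (x * y) = ω (y * x))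
    (hcm : ∀ (n : ℕ) (a b : ℕ → C), 1 ≤ n → (∀ i, a i ∈ A) → (∀ i, b i ∈ B) →
      ω (((List.range n).map (fun i => a i * b i)).prod)
        = ω (((List.range n).map a).prod) * ∏ i ∈ Finset.range n, τ (b i))
    (a b : C) (ha : a ∈ A) (hb : b ∈ B)
    (has : IsSelfAdjoint a) (hbs : IsSelfAdjoint b)
    (n : ℕ) (hn : 1 ≤ n) :
    (Even n →
      ω ((Complex.I • (a * b - b * a)) ^ n)
        = ((2 * (Real.sqrt ((τ (b * b)).re - (τ b).re ^ 2)) ^ n : ℝ) : ℂ) * ω (a ^ n)) ∧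
    (Odd n → ω ((Complex.I • (a * b - b * a)) ^ n) = 0) :=
  commutator_cyclic_monotone_general A B ω τ hτ1 hτstar hτpos hωtr hcm a b ha hb hbs n hn
end

section
/- Let (C, ω, τ) be a noncommutative probability space with tracial weight, and let (A, B) be cyclically monotone ∗-subalgebras with 1 ∈ B. Let a_1,…,a_k ∈ A and self-adjoint b_1,…,b_k ∈ B. Then for every n ∈ ℕ: ω((∑_{i=1}^k a_i b_i a_i^∗)^n) = ω((∑_{i=1}^k τ(b_i) a_i a_i^∗)^n). -/
open scoped ComplexOrder

/-!
Expanding both `n`-th powers, it suffices to compare `ω` on each word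
`a₁ b₁ a₁* a₂ b₂ a₂* ⋯ aₙ bₙ aₙ*`. Traciality of `ω` moves the final `aₙ*` to the front and
regroups the word as `∏ⱼ (aⱼ₋₁* aⱼ) bⱼ` with indices taken cyclically, where `aⱼ₋₁* aⱼ ∈ A`.
Cyclic monotonicity factors out `∏ⱼ τ(bⱼ)`, and the same rotation, run backwards, turns
`∏ⱼ aⱼ₋₁* aⱼ` back into `∏ⱼ aⱼ aⱼ*`.
-/

namespace List

variable {M : Type*} [Monoid M]

theorem mul_prod_range_map_eq_prod_range_map_mul (f g : ℕ → M) :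
    ∀ n : ℕ, f 0 * ((range n).map fun i => g i * f (i + 1)).prod
      = ((range n).map fun i => f i * g i).prod * f n
  | 0 => by simp
  | n + 1 => by
    rw [prod_range_succ, prod_range_succ, ← mul_assoc,
      mul_prod_range_map_eq_prod_range_map_mul f g n]
    simp only [mul_assoc]

theorem prod_map_smul {R ι : Type*} [Monoid R] [MulAction R M] [IsScalarTower R M M]
    [SMulCommClass R M M] (l : List ι) (c : ι → R) (x : ι → M) :
    (l.map fun i => c i • x i).prod = (l.map c).prod • (l.map x).prod := by
  induction l with
  | nil => simp
  | cons i l ih => simp only [map_cons, prod_cons, ih, smul_mul_smul]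

theorem ofFn_eq_map_range {α : Type*} {n : ℕ} [NeZero n] (f : Fin n → α) :
    ofFn f = (range n).map fun i => f (Fin.ofNat n i) := by
  rw [ofFn_eq_map, ← map_coe_finRange_eq_range, map_map]
  exact map_congr_left fun j _ => by simp [Fin.ofNat, Nat.mod_eq_of_lt j.isLt]

end List

theorem trace_prod_range_map_mul_succ {M β : Type*} [Monoid M] {ω : M → β}
    (hω : ∀ x y, ω (x * y) = ω (y * x)) (f g : ℕ → M) {n : ℕ} (hg : g n = g 0) :
    ω ((List.range n).map fun i => f i * g (i + 1)).prod
      = ω ((List.range n).map fun i => g i * f i).prod := by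
  cases n with
  | zero => rfl
  | succ m =>
    rw [List.prod_range_succ, ← mul_assoc,
      ← List.mul_prod_range_map_eq_prod_range_map_mul, hω, hg, List.prod_range_succ',
      mul_assoc]

theorem sum_pow_eq_sum_prod_ofFn {R ι : Type*} [Semiring R] [Fintype ι] (x : ι → R) :
    ∀ n : ℕ, (∑ i, x i) ^ n = ∑ p : Fin n → ι, (List.ofFn fun j => x (p j)).prod
  | 0 => by simp
  | n + 1 => by
    rw [pow_succ', sum_pow_eq_sum_prod_ofFn x n, Finset.sum_mul_sum,
      ← (Fin.consEquiv fun _ => ι).sum_comp, Fintype.sum_prod_type]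
    simp [Fin.consEquiv, List.ofFn_succ]

section CyclicMonotone

variable {R C : Type*} [CommSemiring R] [StarRing R] [Semiring C] [StarRing C] [Algebra R C]
  [StarModule R C]

def IsCyclicMonotone (A : NonUnitalStarSubalgebra R C) (B : StarSubalgebra R C)
    (ω τ : C →ₗ[R] R) : Prop :=
  ∀ (n : ℕ) (a b : ℕ → C), 1 ≤ n → (∀ i, a i ∈ A) → (∀ i, b i ∈ B) →
    ω ((List.range n).map fun i => a i * b i).prod
      = ω ((List.range n).map a).prod * ∏ i ∈ Finset.range n, τ (b i)

theorem IsCyclicMonotone.trace_prod_mul_mul_star {A : NonUnitalStarSubalgebra R C}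
    {B : StarSubalgebra R C} {ω τ : C →ₗ[R] R} (hcm : IsCyclicMonotone A B ω τ)
    (hω : ∀ x y, ω (x * y) = ω (y * x)) {u v : ℕ → C} (hu : ∀ i, u i ∈ A) (hv : ∀ i, v i ∈ B)
    {n : ℕ} (hn : 1 ≤ n) :
    ω ((List.range n).map fun i => u i * v i * star (u i)).prod
      = ω ((List.range n).map fun i => u i * star (u i)).prod
        * ∏ i ∈ Finset.range n, τ (v i) := by
  obtain ⟨m, rfl⟩ := Nat.exists_eq_add_of_le' hn
  -- `g i = star (u (i - 1))`, read cyclically modulo `m + 1`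
  let g : ℕ → C := fun
    | 0 => star (u m)
    | i + 1 => star (u i)
  have hgu : ∀ i, g i * u i ∈ A := by
    rintro (_ | i) <;> exact mul_mem (star_mem (hu _)) (hu _)
  have rotate_uvg : ω ((List.range (m + 1)).map fun i => u i * v i * star (u i)).prod
      = ω ((List.range (m + 1)).map fun i => g i * u i * v i).prod := by
    simpa only [mul_assoc] using trace_prod_range_map_mul_succ hω (fun i => u i * v i) g rfl
  rw [rotate_uvg, hcm _ _ _ hn hgu hv, trace_prod_range_map_mul_succ hω u g rfl]

end CyclicMonotone

theorem sum_aba_cyclic_monotone_general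
    {C : Type*} [Ring C] [StarRing C] [Algebra ℂ C] [StarModule ℂ C]
    (A : NonUnitalStarSubalgebra ℂ C) (B : StarSubalgebra ℂ C)
    (ω τ : C →ₗ[ℂ] ℂ)
    (hωtr : ∀ x y : C, ω (x * y) = ω (y * x))
    (hcm : ∀ (n : ℕ) (a b : ℕ → C), 1 ≤ n → (∀ i, a i ∈ A) → (∀ i, b i ∈ B) →
      ω (((List.range n).map (fun i => a i * b i)).prod)
        = ω (((List.range n).map a).prod) * ∏ i ∈ Finset.range n, τ (b i))
    (k : ℕ) (a b : Fin k → C)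
    (ha : ∀ i, a i ∈ A) (hb : ∀ i, b i ∈ B)
    (n : ℕ) :
    ω ((∑ i, a i * b i * star (a i)) ^ n)
      = ω ((∑ i, τ (b i) • (a i * star (a i))) ^ n) := by
  obtain rfl | hn := n.eq_zero_or_pos
  · simp only [pow_zero]
  have : NeZero n := ⟨hn.ne'⟩
  simp only [sum_pow_eq_sum_prod_ofFn, map_sum, List.ofFn_eq_map_range]
  refine Finset.sum_congr rfl fun p _ => ?_
  rw [IsCyclicMonotone.trace_prod_mul_mul_star hcm hωtr (fun _ => ha _) (fun _ => hb _) hn,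
    List.prod_map_smul, map_smul, smul_eq_mul, mul_comm, ← List.prod_toFinset _ List.nodup_range,
    List.toFinset_range]

/-- Theorem 3.13(2): if `(A, B)` is cyclically monotone with respect to `(ω, τ)`,
`a_1,…,a_k ∈ A` and self-adjoint `b_1,…,b_k ∈ B`, then for every `n ≥ 1`,
`ω((∑ a_i b_i a_i^∗)^n) = ω((∑ τ(b_i) a_i a_i^∗)^n)`. -/
theorem sum_aba_cyclic_monotone
    {C : Type*} [Ring C] [StarRing C] [Algebra ℂ C] [StarModule ℂ C]
    (A : NonUnitalStarSubalgebra ℂ C) (B : StarSubalgebra ℂ C)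
    (ω τ : C →ₗ[ℂ] ℂ)
    (hτ1 : τ 1 = 1)
    (hτtr : ∀ x y : C, τ (x * y) = τ (y * x))
    (hτstar : ∀ x : C, τ (star x) = starRingEnd ℂ (τ x))
    (hτpos : ∀ x : C, 0 ≤ τ (star x * x))
    (hωtr : ∀ x y : C, ω (x * y) = ω (y * x))
    (hcm : ∀ (n : ℕ) (a b : ℕ → C), 1 ≤ n → (∀ i, a i ∈ A) → (∀ i, b i ∈ B) →
      ω (((List.range n).map (fun i => a i * b i)).prod)
        = ω (((List.range n).map a).prod) * ∏ i ∈ Finset.range n, τ (b i))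
    (k : ℕ) (a b : Fin k → C)
    (ha : ∀ i, a i ∈ A) (hb : ∀ i, b i ∈ B) (hbs : ∀ i, IsSelfAdjoint (b i))
    (n : ℕ) (hn : 1 ≤ n) :
    ω ((∑ i, a i * b i * star (a i)) ^ n)
      = ω ((∑ i, τ (b i) • (a i * star (a i))) ^ n) :=
  sum_aba_cyclic_monotone_general A B ω τ hωtr hcm k a b ha hb n
end

section
/- Let (C, ω, τ) be a noncommutative probability space with tracial weight, let (A, B) be cyclically monotone ∗-subalgebras with 1 ∈ B, let a_1,…,a_k ∈ A be self-adjoint and b_1,…,b_k ∈ B. Set B̂ = (τ(b_i^∗ b_j))_{i,j=1}^k ∈ M_k(ℂ) and let √B̂ be its positive square root. Then for every n ∈ ℕ: ω((∑_{i=1}^k b_i a_i b_i^∗)^n) = (Tr_k ⊗ ω)((√B̂ · diag(a_1,…,a_k) · √B̂)^n), where Tr_k is the non-normalized trace on M_k(ℂ) and the right-hand side is computed in M_k(ℂ) ⊗ C. -/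
/-!
With `R = (b_1 ⋯ b_k)` a `1 × k` row and `D = diag(a_1, …, a_k)`, the element `∑ b_i a_i b_i^∗` is
`R D R^∗`, and traciality of `ω` gives `ω((R D R^∗)^n) = (Tr_k ⊗ ω)((D R^∗R)^n)`. Expanding the
trace of this power along closed index paths, every term has the form
`ω(a_{i_1} c_1 ⋯ a_{i_n} c_n)` with `c_t = b_{i_t}^∗ b_{i_{t+1}} ∈ B`, so cyclic monotonicity replaces
`R^∗R` by `B̂ = √B̂ √B̂`; one more use of traciality turns `(D √B̂ √B̂)^n` into `(√B̂ D √B̂)^n`.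
-/

open scoped ComplexOrder

/-- The positive semidefinite square root of a positive semidefinite matrix
(the definition `Matrix.PosSemidef.sqrt` of the older Mathlib, since removed). -/
noncomputable def Matrix.PosSemidef.sqrt {n 𝕜 : Type*} [Fintype n] [DecidableEq n] [RCLike 𝕜]
    {A : Matrix n n 𝕜} (hA : A.PosSemidef) : Matrix n n 𝕜 :=
  hA.1.eigenvectorUnitary.1 * Matrix.diagonal ((↑) ∘ (√·) ∘ hA.1.eigenvalues) *
    (star hA.1.eigenvectorUnitary : Matrix n n 𝕜)

open Matrix

theorem Matrix.PosSemidef.sqrt_mul_self {n 𝕜 : Type*} [Fintype n] [DecidableEq n] [RCLike 𝕜]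
    {A : Matrix n n 𝕜} (hA : A.PosSemidef) : hA.sqrt * hA.sqrt = A := by
  set U : Matrix n n 𝕜 := hA.1.eigenvectorUnitary.1
  have hU : star U * U = 1 := Unitary.coe_star_mul_self _
  conv_rhs => rw [hA.1.spectral_theorem, Unitary.conjStarAlgAut_apply]
  calc hA.sqrt * hA.sqrt
      = U * (diagonal ((↑) ∘ (√·) ∘ hA.1.eigenvalues) * (star U * U) *
          diagonal ((↑) ∘ (√·) ∘ hA.1.eigenvalues)) * star U := by
        simp only [Matrix.PosSemidef.sqrt, U, Matrix.mul_assoc]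
    _ = U * diagonal ((↑) ∘ hA.1.eigenvalues) * star U := by
        rw [hU, Matrix.mul_one, diagonal_mul_diagonal]
        congr 3
        funext i
        simp only [Function.comp_apply, ← RCLike.ofReal_mul,
          Real.mul_self_sqrt (hA.eigenvalues_nonneg i)]

-- Indexed by `ℕ` rather than `Fin (n + 2)` to match the sequences in `CyclicMonotone`.
def pathThrough {ι : Type*} {n : ℕ} (i : ι) (p : Fin n → ι) (j : ι) : ℕ → ι
  | 0 => i
  | t + 1 => if h : t < n then p ⟨t, h⟩ else j

theorem pathThrough_cons_succ {ι : Type*} {n : ℕ} (i s : ι) (p : Fin n → ι) (j : ι) (t : ℕ) :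
    pathThrough i (Fin.cons s p) j (t + 1) = pathThrough s p j t := by
  cases t with
  | zero => simp [pathThrough]
  | succ t => simp only [pathThrough, Nat.add_lt_add_iff_right]; rfl

theorem Matrix.pow_succ_apply_eq_sum_paths {ι R : Type*} [Fintype ι] [DecidableEq ι] [Semiring R]
    (X : Matrix ι ι R) (n : ℕ) (i j : ι) :
    (X ^ (n + 1)) i j = ∑ p : Fin n → ι,
      ((List.range (n + 1)).map fun t => X (pathThrough i p j t) (pathThrough i p j (t + 1))).prod := by
  induction n generalizing i with
  | zero => simp [pathThrough, List.range_succ]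
  | succ n ih =>
    rw [pow_succ', mul_apply, ← (Fin.consEquiv fun _ => ι).sum_comp, Fintype.sum_prod_type]
    refine Finset.sum_congr rfl fun s _ => ?_
    rw [ih, Finset.mul_sum]
    refine Finset.sum_congr rfl fun p _ => ?_
    rw [List.range_succ_eq_map (n := n + 1), List.map_cons, List.map_map, List.prod_cons,
      show (Fin.consEquiv fun _ => ι) (s, p) = Fin.cons s p from rfl]
    simp only [Function.comp_def, Nat.succ_eq_add_one, pathThrough.eq_1, pathThrough_cons_succ]

theorem list_prod_map_range_smul {R C : Type*} [CommSemiring R] [Semiring C] [Algebra R C]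
    (n : ℕ) (c : ℕ → R) (d : ℕ → C) :
    ((List.range n).map fun t => c t • d t).prod
      = (∏ t ∈ Finset.range n, c t) • ((List.range n).map d).prod := by
  induction n with
  | zero => simp
  | succ n ih =>
    simp only [List.range_succ, List.map_append, List.prod_append, ih, List.map_cons,
      List.map_nil, List.prod_cons, List.prod_nil, mul_one, smul_mul_smul_comm,
      Finset.prod_range_succ]

theorem Matrix.trace_pow_of_unique {ι R : Type*} [Unique ι] [Fintype ι] [DecidableEq ι]
    [Semiring R] (M : Matrix ι ι R) (n : ℕ) : (M ^ n).trace = M default default ^ n := by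
  rw [trace, Fintype.sum_unique, diag_apply]
  induction n with
  | zero => simp
  | succ n ih => rw [pow_succ, mul_apply, Fintype.sum_unique, Unique.default_eq, ih, pow_succ]

theorem Matrix.replicateRow_mul_diagonal_mul_conjTranspose_apply {ι κ R : Type*} [Fintype κ]
    [DecidableEq κ] [Semiring R] [StarRing R] (a b : κ → R) (i j : ι) :
    (replicateRow ι b * diagonal a * (replicateRow ι b)ᴴ) i j = ∑ s, b s * a s * star (b s) := by
  rw [← replicateRow_vecMul, conjTranspose_replicateRow, replicateRow_mul_replicateCol_apply]
  simp only [dotProduct, vecMul_diagonal, Pi.star_apply]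

theorem Matrix.map_algebraMap_mul_diagonal_mul_map_algebraMap {ι R C : Type*} [Fintype ι]
    [DecidableEq ι] [CommSemiring R] [Semiring C] [Algebra R C] (P Q : Matrix ι ι R) (a : ι → C) :
    P.map (algebraMap R C) * (diagonal a * Q.map (algebraMap R C))
      = of fun i j => ∑ s, (P i s * Q s j) • a s := by
  ext i j
  rw [mul_apply]
  simp only [of_apply, diagonal_mul, map_apply]
  refine Finset.sum_congr rfl fun s _ => ?_
  rw [Algebra.smul_def, map_mul, mul_assoc, Algebra.commutes (Q s j) (a s)]

section Tracial

variable {R C : Type*} [CommSemiring R] [Semiring C] [Module R C] {ω : C →ₗ[R] R}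
  {ι κ : Type*} [Fintype ι] [Fintype κ]

theorem map_trace_mul_comm (hω : ∀ x y, ω (x * y) = ω (y * x))
    (X : Matrix ι κ C) (Y : Matrix κ ι C) : ω (X * Y).trace = ω (Y * X).trace := by
  simp only [trace, diag, mul_apply, map_sum]
  rw [Finset.sum_comm]
  simp only [hω]

theorem map_trace_mul_pow_comm [DecidableEq ι] [DecidableEq κ] (hω : ∀ x y, ω (x * y) = ω (y * x))
    (X : Matrix ι κ C) (Y : Matrix κ ι C) (n : ℕ) :
    ω ((X * Y) ^ (n + 1)).trace = ω ((Y * X) ^ (n + 1)).trace := by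
  have hshift : (X * Y) ^ (n + 1) = X * ((Y * X) ^ n * Y) := by
    induction n with
    | zero => simp
    | succ n ih => rw [pow_succ, ih, pow_succ]; simp only [Matrix.mul_assoc]
  rw [hshift, map_trace_mul_comm hω, Matrix.mul_assoc, ← pow_succ]

end Tracial

section CyclicMonotone

variable {R C : Type*} [CommSemiring R] [Semiring C] [Algebra R C]

def CyclicMonotone (A B : Set C) (ω τ : C →ₗ[R] R) : Prop :=
  ∀ (n : ℕ) (a b : ℕ → C), 1 ≤ n → (∀ i, a i ∈ A) → (∀ i, b i ∈ B) →
    ω ((List.range n).map fun i => a i * b i).prod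
      = ω ((List.range n).map a).prod * ∏ i ∈ Finset.range n, τ (b i)

theorem CyclicMonotone.map_trace_pow_diagonal_mul {A B : Set C} {ω τ : C →ₗ[R] R}
    (hcm : CyclicMonotone A B ω τ) {ι : Type*} [Fintype ι] [DecidableEq ι] {a : ι → C}
    (ha : ∀ i, a i ∈ A) {G : Matrix ι ι C} (hG : ∀ i j, G i j ∈ B) (n : ℕ) :
    ω ((diagonal a * G) ^ (n + 1)).trace
      = ω ((diagonal a * (G.map τ).map (algebraMap R C)) ^ (n + 1)).trace := by
  simp only [trace, diag, map_sum, pow_succ_apply_eq_sum_paths]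
  refine Finset.sum_congr rfl fun i _ => Finset.sum_congr rfl fun p _ => ?_
  set q := pathThrough i p i
  simp only [diagonal_mul, map_apply, ← Algebra.commutes, ← Algebra.smul_def,
    list_prod_map_range_smul, map_smul, smul_eq_mul]
  rw [hcm (n + 1) (fun t => a (q t)) (fun t => G (q t) (q (t + 1))) n.succ_pos
    (fun _ => ha _) (fun _ => hG _ _), mul_comm]

end CyclicMonotone

theorem sum_bab_cyclic_monotone_general
    {C : Type*} [Ring C] [StarRing C] [Algebra ℂ C] [StarModule ℂ C]
    (A : NonUnitalStarSubalgebra ℂ C) (B : StarSubalgebra ℂ C)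
    (ω τ : C →ₗ[ℂ] ℂ)
    (hωtr : ∀ x y : C, ω (x * y) = ω (y * x))
    (hcm : ∀ (n : ℕ) (a b : ℕ → C), 1 ≤ n → (∀ i, a i ∈ A) → (∀ i, b i ∈ B) →
      ω (((List.range n).map (fun i => a i * b i)).prod)
        = ω (((List.range n).map a).prod) * ∏ i ∈ Finset.range n, τ (b i))
    (k : ℕ) (a b : Fin k → C)
    (ha : ∀ i, a i ∈ A) (hb : ∀ i, b i ∈ B)
    (hPSD : (Matrix.of fun i j : Fin k => τ (star (b i) * b j)).PosSemidef)
    (n : ℕ) (hn : 1 ≤ n) :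
    ω ((∑ i, b i * a i * star (b i)) ^ n)
      = ∑ i, ω ((((Matrix.of fun i j : Fin k =>
            ∑ s, (hPSD.sqrt i s * hPSD.sqrt s j) • a s) ^ n) i i)) := by
  obtain ⟨m, rfl⟩ := Nat.exists_eq_add_of_le' hn
  set R : Matrix Unit (Fin k) C := replicateRow Unit b
  set S : Matrix (Fin k) (Fin k) C := hPSD.sqrt.map (algebraMap ℂ C)
  have hGram : Rᴴ * R = vecMulVec (star b) b := by
    rw [conjTranspose_replicateRow, ← vecMulVec_eq]
  have hGramτ : (Rᴴ * R).map τ = hPSD.sqrt * hPSD.sqrt := by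
    rw [hPSD.sqrt_mul_self, hGram]; rfl
  calc ω ((∑ i, b i * a i * star (b i)) ^ (m + 1))
      = ω ((R * (diagonal a * Rᴴ)) ^ (m + 1)).trace := by
        rw [trace_pow_of_unique, ← Matrix.mul_assoc,
          replicateRow_mul_diagonal_mul_conjTranspose_apply]
    _ = ω ((diagonal a * (Rᴴ * R)) ^ (m + 1)).trace := by
        rw [map_trace_mul_pow_comm hωtr, Matrix.mul_assoc]
    _ = ω ((diagonal a * ((Rᴴ * R).map τ).map (algebraMap ℂ C)) ^ (m + 1)).trace :=
        CyclicMonotone.map_trace_pow_diagonal_mul (A := (A : Set C)) (B := (B : Set C)) hcm ha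
          (fun i j => by rw [hGram]; exact mul_mem (star_mem (hb i)) (hb j)) m
    _ = ω ((diagonal a * S * S) ^ (m + 1)).trace := by
        rw [hGramτ, Matrix.map_mul, Matrix.mul_assoc]
    _ = ω ((S * (diagonal a * S)) ^ (m + 1)).trace := map_trace_mul_pow_comm hωtr _ _ m
    _ = _ := by rw [map_algebraMap_mul_diagonal_mul_map_algebraMap, trace, map_sum]; rfl

/-- Theorem 3.13(1): if `(A, B)` is cyclically monotone with respect to `(ω, τ)`,
`a_1,…,a_k ∈ A` self-adjoint and `b_1,…,b_k ∈ B`, and `B̂ = (τ(b_i^∗ b_j))_{ij}` with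
positive square root `√B̂`, then for every `n ≥ 1`,
`ω((∑ b_i a_i b_i^∗)^n) = (Tr_k ⊗ ω)((√B̂ diag(a_1,…,a_k) √B̂)^n)`,
where `(Tr_k ⊗ ω)(X) = ∑_i ω(X_{ii})` on `M_k(ℂ) ⊗ C`. -/
theorem sum_bab_cyclic_monotone
    {C : Type*} [Ring C] [StarRing C] [Algebra ℂ C] [StarModule ℂ C]
    (A : NonUnitalStarSubalgebra ℂ C) (B : StarSubalgebra ℂ C)
    (ω τ : C →ₗ[ℂ] ℂ)
    (hτ1 : τ 1 = 1)
    (hτtr : ∀ x y : C, τ (x * y) = τ (y * x))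
    (hτstar : ∀ x : C, τ (star x) = starRingEnd ℂ (τ x))
    (hτpos : ∀ x : C, 0 ≤ τ (star x * x))
    (hωtr : ∀ x y : C, ω (x * y) = ω (y * x))
    (hcm : ∀ (n : ℕ) (a b : ℕ → C), 1 ≤ n → (∀ i, a i ∈ A) → (∀ i, b i ∈ B) →
      ω (((List.range n).map (fun i => a i * b i)).prod)
        = ω (((List.range n).map a).prod) * ∏ i ∈ Finset.range n, τ (b i))
    (k : ℕ) (a b : Fin k → C)
    (ha : ∀ i, a i ∈ A) (has : ∀ i, IsSelfAdjoint (a i)) (hb : ∀ i, b i ∈ B)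
    (hPSD : (Matrix.of fun i j : Fin k => τ (star (b i) * b j)).PosSemidef)
    (n : ℕ) (hn : 1 ≤ n) :
    ω ((∑ i, b i * a i * star (b i)) ^ n)
      = ∑ i, ω ((((Matrix.of fun i j : Fin k =>
            ∑ s, (hPSD.sqrt i s * hPSD.sqrt s j) • a s) ^ n) i i)) :=
  sum_bab_cyclic_monotone_general A B ω τ hωtr hcm k a b ha hb hPSD n hn
end

section
/- Let (A, ω) be a noncommutative measure space (∗-algebra with tracial positive linear functional ω on a ∗-subalgebra Dom(ω)) and (B, τ) a noncommutative probability space with tracial state τ. On the algebraic free product A ∗ B (with 1_B identified with the unit), define the cyclic monotone product ω ◁ τ on the ideal Dom(ω ◁ τ) generated by Dom(ω) by (ω ◁ τ)(b_0 a_1 b_1 ⋯ a_n b_n) = ω(a_1 ⋯ a_n) τ(b_1) ⋯ τ(b_{n-1}) τ(b_0 b_n). Then ω ◁ τ is tracial: (ω ◁ τ)(xy) = (ω ◁ τ)(yx) for all x, y ∈ Dom(ω ◁ τ). -/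
def cyclicWords {C : Type*} [Ring C] [StarRing C] [Algebra ℂ C] [StarModule ℂ C]
    (A : NonUnitalStarSubalgebra ℂ C) (B : StarSubalgebra ℂ C) : Set C :=
  {w | ∃ (n : ℕ) (a b : ℕ → C), 1 ≤ n ∧ (∀ i, a i ∈ A) ∧ (∀ i, b i ∈ B) ∧
    w = b 0 * ((List.range n).map (fun i => a (i + 1) * b (i + 1))).prod}

section helpers
variable {C : Type*} [Ring C] [StarRing C] [Algebra ℂ C] [StarModule ℂ C]

lemma range_map_prod_add (f : ℕ → C) (n m : ℕ) :
    ((List.range (n + m)).map f).prod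
      = ((List.range n).map f).prod * ((List.range m).map (fun i => f (n + i))).prod := by
  rw [List.range_add, List.map_append, List.prod_append, List.map_map]
  rfl

lemma prod_mem_nu {A : NonUnitalStarSubalgebra ℂ C}
    (a : ℕ → C) (ha : ∀ i, a i ∈ A) : ∀ n, 1 ≤ n →
    ((List.range n).map (fun i => a (i + 1))).prod ∈ A := by
  intro n hn
  induction n with
  | zero => omega
  | succ k ih =>
    rw [List.range_succ, List.map_append, List.prod_append]
    rcases Nat.eq_zero_or_pos k with hk | hk
    · subst hk; simpa using ha 1
    · simpa using mul_mem (ih hk) (ha (k + 1))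

variable (A : NonUnitalStarSubalgebra ℂ C) (B : StarSubalgebra ℂ C)
    (ω τ ωτ : C →ₗ[ℂ] ℂ)

lemma key_eval
    (hdef : ∀ (n : ℕ) (a b : ℕ → C), 1 ≤ n → (∀ i, a i ∈ A) → (∀ i, b i ∈ B) →
      ωτ (b 0 * ((List.range n).map (fun i => a (i + 1) * b (i + 1))).prod)
        = ω (((List.range n).map (fun i => a (i + 1))).prod)
          * (∏ i ∈ Finset.Ico 1 n, τ (b i)) * τ (b 0 * b n))
    (n m : ℕ) (hn : 1 ≤ n) (hm : 1 ≤ m) (a b d c : ℕ → C)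
    (ha : ∀ i, a i ∈ A) (hb : ∀ i, b i ∈ B) (hd : ∀ i, d i ∈ A) (hc : ∀ i, c i ∈ B) :
    ωτ ((b 0 * ((List.range n).map (fun i => a (i + 1) * b (i + 1))).prod)
        * (c 0 * ((List.range m).map (fun i => d (i + 1) * c (i + 1))).prod))
      = ω (((List.range n).map (fun i => a (i + 1))).prod
            * ((List.range m).map (fun i => d (i + 1))).prod)
        * ((∏ i ∈ Finset.Ico 1 n, τ (b i)) * (∏ i ∈ Finset.Ico 1 m, τ (c i)))
        * (τ (b n * c 0) * τ (b 0 * c m)) := by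
  set a' : ℕ → C := fun i => if i ≤ n then a i else d (i - n) with ha'
  set b' : ℕ → C := fun i => if i < n then b i else if i = n then b n * c 0 else c (i - n)
    with hb'
  have ha'A : ∀ i, a' i ∈ A := by
    intro i; simp only [ha']; split
    exacts [ha i, hd _]
  have hb'B : ∀ i, b' i ∈ B := by
    intro i; simp only [hb']
    split
    · exact hb i
    · split
      · exact mul_mem (hb n) (hc 0)
      · exact hc _
  have hb'0 : b' 0 = b 0 := by simp only [hb']; rw [if_pos (by omega)]
  have hb'nm : b' (n + m) = c m := by
    simp only [hb']; rw [if_neg (by omega), if_neg (by omega)]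
    congr 1; omega
  -- the combined word
  have hword : b' 0 * ((List.range (n + m)).map (fun i => a' (i + 1) * b' (i + 1))).prod
      = (b 0 * ((List.range n).map (fun i => a (i + 1) * b (i + 1))).prod)
        * (c 0 * ((List.range m).map (fun i => d (i + 1) * c (i + 1))).prod) := by
    obtain ⟨k, rfl⟩ : ∃ k, n = k + 1 := ⟨n - 1, by omega⟩
    rw [range_map_prod_add]
    beta_reduce
    have h1 : (List.range (k + 1)).map (fun i => a' (i + 1) * b' (i + 1))
        = (List.range k).map (fun i => a (i + 1) * b (i + 1))
          ++ [a (k + 1) * (b (k + 1) * c 0)] := by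
      rw [List.range_succ, List.map_append]
      congr 1
      · refine List.map_congr_left fun i hi => ?_
        rw [List.mem_range] at hi
        simp only [ha', hb']
        rw [if_pos (by omega), if_pos (by omega)]
      · simp [ha', hb']
    have h2 : (List.range m).map (fun i => a' (k + 1 + i + 1) * b' (k + 1 + i + 1))
        = (List.range m).map (fun i => d (i + 1) * c (i + 1)) := by
      refine List.map_congr_left fun i hi => ?_
      simp only [ha', hb']
      rw [if_neg (by omega), if_neg (by omega), if_neg (by omega)]
      congr 2 <;> omega
    rw [h1, h2, hb'0, List.prod_append, List.prod_singleton,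
      List.range_succ, List.map_append, List.prod_append, List.map_singleton,
      List.prod_singleton]
    simp only [mul_assoc]
  have hAprod : ((List.range (n + m)).map (fun i => a' (i + 1))).prod
      = ((List.range n).map (fun i => a (i + 1))).prod
        * ((List.range m).map (fun i => d (i + 1))).prod := by
    rw [range_map_prod_add]
    beta_reduce
    congr 1
    · refine congrArg List.prod (List.map_congr_left fun i hi => ?_)
      rw [List.mem_range] at hi
      simp only [ha']; rw [if_pos (by omega)]
    · refine congrArg List.prod (List.map_congr_left fun i hi => ?_)
      simp only [ha']; rw [if_neg (by omega)]
      congr 1; omega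
  have hτmid : (∏ i ∈ Finset.Ico 1 (n + m), τ (b' i))
      = (∏ i ∈ Finset.Ico 1 n, τ (b i)) * τ (b n * c 0)
        * (∏ i ∈ Finset.Ico 1 m, τ (c i)) := by
    rw [← Finset.prod_Ico_consecutive _ (by omega : 1 ≤ n + 1) (by omega : n + 1 ≤ n + m),
      ← Finset.prod_Ico_consecutive _ (by omega : 1 ≤ n) (by omega : n ≤ n + 1)]
    have e1 : (∏ i ∈ Finset.Ico 1 n, τ (b' i)) = ∏ i ∈ Finset.Ico 1 n, τ (b i) := by
      refine Finset.prod_congr rfl fun i hi => ?_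
      rw [Finset.mem_Ico] at hi
      simp only [hb']; rw [if_pos hi.2]
    have e2 : (∏ i ∈ Finset.Ico n (n + 1), τ (b' i)) = τ (b n * c 0) := by
      rw [Nat.Ico_succ_singleton, Finset.prod_singleton]
      simp [hb']
    have e3 : (∏ i ∈ Finset.Ico (n + 1) (n + m), τ (b' i))
        = ∏ i ∈ Finset.Ico 1 m, τ (c i) := by
      rw [Finset.prod_Ico_eq_prod_range, Finset.prod_Ico_eq_prod_range]
      have : n + m - (n + 1) = m - 1 := by omega
      rw [this]
      refine Finset.prod_congr rfl fun i hi => ?_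
      simp only [hb']; rw [if_neg (by omega), if_neg (by omega)]
      congr 2; omega
    rw [e1, e2, e3]
  rw [← hword, hdef (n + m) a' b' (by omega) ha'A hb'B, hAprod, hτmid, hb'0, hb'nm]
  ring

end helpers

/-- The cyclic monotone product `ω ◁ τ`, defined on the ideal generated by `A` over `B` by
`(ω ◁ τ)(b_0 a_1 b_1 ⋯ a_n b_n) = ω(a_1 ⋯ a_n) τ(b_1) ⋯ τ(b_{n-1}) τ(b_0 b_n)`, is
tracial: `(ω ◁ τ)(xy) = (ω ◁ τ)(yx)` for all `x, y` in the domain. -/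
theorem cyclicMonotoneProduct_tracial
    {C : Type*} [Ring C] [StarRing C] [Algebra ℂ C] [StarModule ℂ C]
    (A : NonUnitalStarSubalgebra ℂ C) (B : StarSubalgebra ℂ C)
    (ω τ ωτ : C →ₗ[ℂ] ℂ)
    (hτ1 : τ 1 = 1)
    (hτtr : ∀ x y : C, x ∈ B → y ∈ B → τ (x * y) = τ (y * x))
    (hωtr : ∀ x y : C, x ∈ A → y ∈ A → ω (x * y) = ω (y * x))
    (hdef : ∀ (n : ℕ) (a b : ℕ → C), 1 ≤ n → (∀ i, a i ∈ A) → (∀ i, b i ∈ B) →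
      ωτ (b 0 * ((List.range n).map (fun i => a (i + 1) * b (i + 1))).prod)
        = ω (((List.range n).map (fun i => a (i + 1))).prod)
          * (∏ i ∈ Finset.Ico 1 n, τ (b i)) * τ (b 0 * b n)) :
    ∀ x ∈ Submodule.span ℂ (cyclicWords A B), ∀ y ∈ Submodule.span ℂ (cyclicWords A B),
      ωτ (x * y) = ωτ (y * x) := by
  intro x hx y hy
  induction hx, hy using Submodule.span_induction₂ with
  | mem_mem x y hx hy =>
    obtain ⟨n, a, b, hn, ha, hb, rfl⟩ := hx
    obtain ⟨m, d, c, hm, hd, hc, rfl⟩ := hy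
    rw [key_eval A B ω τ ωτ hdef n m hn hm a b d c ha hb hd hc,
      key_eval A B ω τ ωτ hdef m n hm hn d c a b hd hc ha hb]
    rw [hωtr _ _ (prod_mem_nu a ha n hn) (prod_mem_nu d hd m hm),
      hτtr (b n) (c 0) (hb n) (hc 0), hτtr (b 0) (c m) (hb 0) (hc m)]
    ring
  | zero_left y hy => simp
  | zero_right x hx => simp
  | add_left x y z hx hy hz h1 h2 => rw [add_mul, mul_add, map_add, map_add, h1, h2]
  | add_right x y z hx hy hz h1 h2 => rw [mul_add, add_mul, map_add, map_add, h1, h2]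
  | smul_left r x y hx hy h => rw [smul_mul_assoc, mul_smul_comm, map_smul, map_smul, h]
  | smul_right r x y hx hy h => rw [smul_mul_assoc, mul_smul_comm, map_smul, map_smul, h]
end

section
/- With the cyclic monotone product ω ◁ τ defined by (ω ◁ τ)(b_0 a_1 b_1 ⋯ a_n b_n) = ω(a_1 ⋯ a_n) τ(b_1) ⋯ τ(b_{n-1}) τ(b_0 b_n) on the free product A ∗ B, the functional ω ◁ τ is positive: (ω ◁ τ)(x^∗ x) ≥ 0 for all x ∈ Dom(ω ◁ τ). -/
/-!
Write `x = ∑ c_i w_i` with words `w_i = b_{i,0} a_{i,1} b_{i,1} ⋯ a_{i,m(i)} b_{i,m(i)}`.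
Since `w_i^* w_j` is again a word, whose middle letter is `b_{i,0}^* b_{j,0}`, the defining
formula gives
`(ω ◁ τ)(w_i^* w_j) = conj(d_i) d_j ω(v_i^* v_j) τ(b_{i,0}^* b_{j,0}) τ(b_{i,m(i)}^* b_{j,m(j)})`
with `v_i = a_{i,1} ⋯ a_{i,m(i)}` and `d_i = ∏_{0<ℓ<m(i)} τ(b_{i,ℓ})`. The matrix of these values
is the Schur product of three Gram matrices of positive functionals, conjugated by the diagonal
matrix `diag(d)`, hence positive semidefinite, and `(ω ◁ τ)(x^* x)` is its quadratic form at `c`.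
-/

open scoped ComplexOrder

open scoped Matrix

section CyclicWord

variable {C : Type*} [Monoid C]

def cyclicWord (n : ℕ) (a b : ℕ → C) : C :=
  b 0 * ((List.range n).map fun i => a (i + 1) * b (i + 1)).prod

def cyclicWord.joinA (n : ℕ) (a a' : ℕ → C) (k : ℕ) : C :=
  if k ≤ n then a k else a' (k - n)

def cyclicWord.joinB (n : ℕ) (b b' : ℕ → C) (k : ℕ) : C :=
  if k < n then b k else if k = n then b n * b' 0 else b' (k - n)

open cyclicWord

@[simp] lemma cyclicWord_zero (a b : ℕ → C) : cyclicWord 0 a b = b 0 := by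
  simp [cyclicWord]

lemma cyclicWord_succ (n : ℕ) (a b : ℕ → C) :
    cyclicWord (n + 1) a b = cyclicWord n a b * (a (n + 1) * b (n + 1)) := by
  simp [cyclicWord, List.range_succ, mul_assoc]

lemma cyclicWord_succ' (n : ℕ) (a b : ℕ → C) :
    cyclicWord (n + 1) a b
      = b 0 * (a 1 * cyclicWord n (fun k => a (k + 1)) (fun k => b (k + 1))) := by
  simp [cyclicWord, List.range_succ_eq_map, Function.comp_def, mul_assoc]

lemma cyclicWord_one (n : ℕ) (a : ℕ → C) :
    cyclicWord n a 1 = ((List.range n).map fun i => a (i + 1)).prod := by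
  simp [cyclicWord]

lemma cyclicWord_congr {n : ℕ} {a a' b b' : ℕ → C} (ha : ∀ k ≤ n, a k = a' k)
    (hb : ∀ k ≤ n, b k = b' k) : cyclicWord n a b = cyclicWord n a' b' := by
  induction n with
  | zero => simp [hb 0 le_rfl]
  | succ n ih =>
    rw [cyclicWord_succ, cyclicWord_succ, ih (fun k hk => ha k (by omega))
      (fun k hk => hb k (by omega)), ha _ le_rfl, hb _ le_rfl]

lemma cyclicWord_mul_cyclicWord (n n' : ℕ) (a b a' b' : ℕ → C) :
    cyclicWord n a b * cyclicWord n' a' b' = cyclicWord (n + n') (joinA n a a') (joinB n b b') := by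
  induction n' with
  | zero =>
    cases n with
    | zero => simp [joinB]
    | succ n =>
      have hA : ∀ k ≤ n, a k = joinA (n + 1) a a' k := fun k hk => by
        simp [joinA, show k ≤ n + 1 by omega]
      have hB : ∀ k ≤ n, b k = joinB (n + 1) b b' k := fun k hk => by
        simp [joinB, show k < n + 1 by omega]
      rw [cyclicWord_zero, add_zero, cyclicWord_succ, cyclicWord_succ, cyclicWord_congr hA hB]
      simp [joinA, joinB, mul_assoc]
  | succ n' ih =>
    rw [cyclicWord_succ, ← mul_assoc, ih, ← add_assoc, cyclicWord_succ]
    simp [joinA, joinB, show n + n' + 1 - n = n' + 1 by omega, show ¬ n + n' + 1 < n by omega,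
      show n + n' + 1 ≠ n by omega]

lemma star_cyclicWord [StarMul C] (n : ℕ) (a b : ℕ → C) :
    star (cyclicWord n a b)
      = cyclicWord n (fun k => star (a (n + 1 - k))) (fun k => star (b (n - k))) := by
  induction n generalizing a b with
  | zero => simp
  | succ n ih =>
    rw [cyclicWord_succ, star_mul, star_mul, ih, cyclicWord_succ']
    simp [mul_assoc, show ∀ k, n + 1 + 1 - (k + 1) = n + 1 - k by omega]

lemma cyclicWord.prod_Ico_joinB {M : Type*} [CommMonoid M] (f : C → M) {n n' : ℕ}
    (hn : 1 ≤ n) (hn' : 1 ≤ n') (b b' : ℕ → C) :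
    ∏ k ∈ Finset.Ico 1 (n + n'), f (joinB n b b' k)
      = (∏ k ∈ Finset.Ico 1 n, f (b k)) * f (b n * b' 0) * ∏ k ∈ Finset.Ico 1 n', f (b' k) := by
  rw [← Finset.prod_Ico_consecutive _ hn (Nat.le_add_right n n'),
    Finset.prod_eq_prod_Ico_succ_bot (by omega : n < n + n'), ← mul_assoc]
  congr 1
  · congr 1
    · refine Finset.prod_congr rfl fun k hk => ?_
      simp [joinB, (Finset.mem_Ico.mp hk).2]
    · simp [joinB]
  · rw [add_comm n n', add_comm n 1, ← Finset.prod_Ico_add']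
    refine Finset.prod_congr rfl fun k hk => ?_
    simp [joinB, show k ≠ 0 by grind]

lemma cyclicWord_one_mem {S : Type*} [SetLike S C] [MulMemClass S C] {s : S} {n : ℕ}
    (hn : 1 ≤ n) {a : ℕ → C} (ha : ∀ k, a k ∈ s) : cyclicWord n a 1 ∈ s := by
  induction n, hn using Nat.le_induction with
  | base => simpa [cyclicWord_succ] using ha 1
  | succ n _ ih => simpa [cyclicWord_succ] using mul_mem ih (ha (n + 1))

end CyclicWord

namespace LinearMap

variable {C : Type*} [Ring C] [StarRing C] [Algebra ℂ C] [StarModule ℂ C] {ι : Type*} [Fintype ι]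

def gramMatrix (φ : C →ₗ[ℂ] ℂ) (v : ι → C) : Matrix ι ι ℂ :=
  Matrix.of fun i j => φ (star (v i) * v j)

lemma apply_star_sum_mul_sum (φ : C →ₗ[ℂ] ℂ) (v : ι → C) (c : ι → ℂ) :
    φ (star (∑ i, c i • v i) * ∑ i, c i • v i) = star c ⬝ᵥ (φ.gramMatrix v *ᵥ c) := by
  rw [star_sum, Finset.sum_mul_sum]
  simp only [map_sum, star_smul, smul_mul_smul_comm, map_smul, smul_eq_mul, dotProduct,
    Matrix.mulVec, gramMatrix, Matrix.of_apply, Finset.mul_sum, Pi.star_apply, mul_assoc,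
    mul_comm (c _)]

lemma posSemidef_gramMatrix {S : Type*} [SetLike S C] [AddSubmonoidClass S C]
    [SMulMemClass S ℂ C] [MulMemClass S C] [StarMemClass S C] {s : S} (φ : C →ₗ[ℂ] ℂ)
    (hstar : ∀ x ∈ s, φ (star x) = starRingEnd ℂ (φ x)) (hpos : ∀ x ∈ s, 0 ≤ φ (star x * x))
    {v : ι → C} (hv : ∀ i, v i ∈ s) : (φ.gramMatrix v).PosSemidef := by
  refine .of_dotProduct_mulVec_nonneg ?_ fun c => ?_
  · ext i j
    simpa [gramMatrix] using (hstar _ (mul_mem (star_mem (hv j)) (hv i))).symm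
  · rw [← apply_star_sum_mul_sum]
    exact hpos _ (sum_mem fun i _ => SMulMemClass.smul_mem _ (hv i))

end LinearMap

section CyclicMonotoneProduct

variable {C : Type*} [Ring C] [StarRing C] [Algebra ℂ C] [StarModule ℂ C]

def IsCyclicMonotoneProduct (A : NonUnitalStarSubalgebra ℂ C) (B : StarSubalgebra ℂ C)
    (ω τ ωτ : C →ₗ[ℂ] ℂ) : Prop :=
  ∀ (n : ℕ) (a b : ℕ → C), 1 ≤ n → (∀ i, a i ∈ A) → (∀ i, b i ∈ B) →
    ωτ (cyclicWord n a b) = ω (((List.range n).map (fun i => a (i + 1))).prod)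
      * (∏ i ∈ Finset.Ico 1 n, τ (b i)) * τ (b 0 * b n)

variable {A : NonUnitalStarSubalgebra ℂ C} {B : StarSubalgebra ℂ C} {ω τ ωτ : C →ₗ[ℂ] ℂ}

open cyclicWord

lemma IsCyclicMonotoneProduct.apply_star_cyclicWord_mul_cyclicWord
    (h : IsCyclicMonotoneProduct A B ω τ ωτ) (hτstar : ∀ x ∈ B, τ (star x) = starRingEnd ℂ (τ x))
    {n n' : ℕ} (hn : 1 ≤ n) (hn' : 1 ≤ n') {a b a' b' : ℕ → C} (ha : ∀ k, a k ∈ A)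
    (hb : ∀ k, b k ∈ B) (ha' : ∀ k, a' k ∈ A) (hb' : ∀ k, b' k ∈ B) :
    ωτ (star (cyclicWord n a b) * cyclicWord n' a' b')
      = starRingEnd ℂ (∏ k ∈ Finset.Ico 1 n, τ (b k))
        * (ω (star (cyclicWord n a 1) * cyclicWord n' a' 1) * τ (star (b 0) * b' 0)
          * τ (star (b n) * b' n'))
        * ∏ k ∈ Finset.Ico 1 n', τ (b' k) := by
  set ra : ℕ → C := fun k => star (a (n + 1 - k))
  set rb : ℕ → C := fun k => star (b (n - k))
  have hA : ∀ k, joinA n ra a' k ∈ A := fun k => by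
    unfold joinA; split_ifs
    exacts [star_mem (ha _), ha' _]
  have hB : ∀ k, joinB n rb b' k ∈ B := fun k => by
    unfold joinB; split_ifs
    exacts [star_mem (hb _), mul_mem (star_mem (hb _)) (hb' _), hb' _]
  have hletters : ((List.range (n + n')).map fun k => joinA n ra a' (k + 1)).prod
      = star (cyclicWord n a 1) * cyclicWord n' a' 1 := by
    have hone : joinB n (fun k => star ((1 : ℕ → C) (n - k))) 1 = 1 := by
      funext k; simp [joinB]
    rw [star_cyclicWord, cyclicWord_mul_cyclicWord, hone, cyclicWord_one]
  have hmiddle :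
      ∏ k ∈ Finset.Ico 1 n, τ (rb k) = starRingEnd ℂ (∏ k ∈ Finset.Ico 1 n, τ (b k)) := by
    rw [Finset.prod_Ico_reflect (fun k => τ (star (b k))) 1 (Nat.le_succ n), map_prod]
    simpa using Finset.prod_congr rfl fun k _ => hτstar _ (hb k)
  have hends : joinB n rb b' 0 * joinB n rb b' (n + n') = star (b n) * b' n' := by
    simp [joinB, rb, show 0 < n by omega, show n' ≠ 0 by omega]
  rw [star_cyclicWord, cyclicWord_mul_cyclicWord, h _ _ _ (by omega) hA hB, hletters,
    prod_Ico_joinB τ hn hn', hmiddle, hends, show rb n = star (b 0) by simp [rb]]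
  ring

end CyclicMonotoneProduct

theorem cyclicMonotoneProduct_positive_general
    {C : Type*} [Ring C] [StarRing C] [Algebra ℂ C] [StarModule ℂ C]
    (A : NonUnitalStarSubalgebra ℂ C) (B : StarSubalgebra ℂ C)
    (ω τ ωτ : C →ₗ[ℂ] ℂ)
    (hτstar : ∀ x : C, x ∈ B → τ (star x) = starRingEnd ℂ (τ x))
    (hτpos : ∀ x : C, x ∈ B → 0 ≤ τ (star x * x))
    (hωstar : ∀ x : C, x ∈ A → ω (star x) = starRingEnd ℂ (ω x))
    (hωpos : ∀ x : C, x ∈ A → 0 ≤ ω (star x * x))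
    (hdef : ∀ (n : ℕ) (a b : ℕ → C), 1 ≤ n → (∀ i, a i ∈ A) → (∀ i, b i ∈ B) →
      ωτ (b 0 * ((List.range n).map (fun i => a (i + 1) * b (i + 1))).prod)
        = ω (((List.range n).map (fun i => a (i + 1))).prod)
          * (∏ i ∈ Finset.Ico 1 n, τ (b i)) * τ (b 0 * b n)) :
    ∀ x ∈ Submodule.span ℂ (cyclicWords A B), 0 ≤ ωτ (star x * x) := by
  intro x hx
  obtain ⟨N, c, g, rfl⟩ := Submodule.mem_span_set'.mp hx
  choose n a b hn ha hb hg using fun i => (g i).2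
  have hωτ : IsCyclicMonotoneProduct A B ω τ ωτ := hdef
  let d : Fin N → ℂ := fun i => ∏ k ∈ Finset.Ico 1 (n i), τ (b i k)
  have hgram : ωτ.gramMatrix (fun i => (g i : C))
      = (Matrix.diagonal d)ᴴ * (ω.gramMatrix (fun i => cyclicWord (n i) (a i) 1)
          ⊙ τ.gramMatrix (fun i => b i 0) ⊙ τ.gramMatrix (fun i => b i (n i)))
        * Matrix.diagonal d := by
    ext i j
    rw [Matrix.diagonal_conjTranspose, Matrix.mul_diagonal, Matrix.diagonal_mul]
    simp only [LinearMap.gramMatrix, Matrix.of_apply, Matrix.hadamard_apply, hg]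
    exact hωτ.apply_star_cyclicWord_mul_cyclicWord hτstar (hn i) (hn j) (ha i) (hb i) (ha j) (hb j)
  rw [ωτ.apply_star_sum_mul_sum, hgram]
  have hA := ω.posSemidef_gramMatrix hωstar hωpos fun i => cyclicWord_one_mem (hn i) (ha i)
  have hB₀ := τ.posSemidef_gramMatrix hτstar hτpos fun i => hb i 0
  have hB₁ := τ.posSemidef_gramMatrix hτstar hτpos fun i => hb i (n i)
  exact ((hA.hadamard hB₀).hadamard hB₁).conjTranspose_mul_mul_same _ |>.dotProduct_mulVec_nonneg c

/-- The cyclic monotone product `ω ◁ τ`, defined by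
`(ω ◁ τ)(b_0 a_1 b_1 ⋯ a_n b_n) = ω(a_1 ⋯ a_n) τ(b_1) ⋯ τ(b_{n-1}) τ(b_0 b_n)` on the
ideal generated by `A` over `B`, is positive: `(ω ◁ τ)(x^∗ x) ≥ 0` for all `x` in its
domain. -/
theorem cyclicMonotoneProduct_positive
    {C : Type*} [Ring C] [StarRing C] [Algebra ℂ C] [StarModule ℂ C]
    (A : NonUnitalStarSubalgebra ℂ C) (B : StarSubalgebra ℂ C)
    (ω τ ωτ : C →ₗ[ℂ] ℂ)
    (hτ1 : τ 1 = 1)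
    (hτtr : ∀ x y : C, x ∈ B → y ∈ B → τ (x * y) = τ (y * x))
    (hτstar : ∀ x : C, x ∈ B → τ (star x) = starRingEnd ℂ (τ x))
    (hτpos : ∀ x : C, x ∈ B → 0 ≤ τ (star x * x))
    (hωtr : ∀ x y : C, x ∈ A → y ∈ A → ω (x * y) = ω (y * x))
    (hωstar : ∀ x : C, x ∈ A → ω (star x) = starRingEnd ℂ (ω x))
    (hωpos : ∀ x : C, x ∈ A → 0 ≤ ω (star x * x))
    (hdef : ∀ (n : ℕ) (a b : ℕ → C), 1 ≤ n → (∀ i, a i ∈ A) → (∀ i, b i ∈ B) →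
      ωτ (b 0 * ((List.range n).map (fun i => a (i + 1) * b (i + 1))).prod)
        = ω (((List.range n).map (fun i => a (i + 1))).prod)
          * (∏ i ∈ Finset.Ico 1 n, τ (b i)) * τ (b 0 * b n)) :
    ∀ x ∈ Submodule.span ℂ (cyclicWords A B), 0 ≤ ωτ (star x * x) :=
  cyclicMonotoneProduct_positive_general A B ω τ ωτ hτstar hτpos hωstar hωpos hdef
end

section
/- Let (C, τ', τ) be an infinitesimal noncommutative probability space and A, B ∗-subalgebras with 1 ∈ B such that the ideal generated by A over B is contained in ker(τ). If the pair (A, B) is cyclically monotone with respect to (τ', τ), i.e., τ'(a_1 b_1 ⋯ a_n b_n) = τ'(a_1 ⋯ a_n) τ(b_1) ⋯ τ(b_n) for all a_j ∈ A, b_j ∈ B, then A and B are infinitesimally free: setting τ_t = τ + t τ', one has τ_t((a_1 - τ_t(a_1)1)(b_1 - τ_t(b_1)1) ⋯ (a_n - τ_t(a_n)1)(b_n - τ_t(b_n)1)) = o(t) as t → 0, for all n ∈ ℕ, a_j ∈ A, b_j ∈ B. -/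
open Asymptotics

/-! Write `β i = b i - τ (b i)`. Since `τ` kills `A`, `τ_t (a i) = t τ' (a i)`, so the centered
product is the value at `t` of a polynomial `P` with coefficients in `C`, and the quantity to
estimate is the scalar polynomial `τ (P t) + t τ' (P t)`. It is `o(t)` as soon as its coefficients
of degree `0` and `1`, namely `τ P₀` and `τ P₁ + τ' P₀`, vanish. Here `P₀ = ∏ a i β i` is a word in
the ideal generated by `A`, so `τ P₀ = 0`, and cyclic monotonicity gives
`τ' P₀ = τ' (∏ a i) ∏ τ (β i) = 0`. Every summand of `P₁` is again a word of that ideal, except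
a multiple of the single letter `β 0` when `n = 1`, and `τ (β 0) = 0`. -/

open Polynomial

section Words

variable {C : Type*} [Ring C] [StarRing C] [Algebra ℂ C] [StarModule ℂ C]
  (A : NonUnitalStarSubalgebra ℂ C) (B : StarSubalgebra ℂ C)

def wordMonoid : Submonoid C := Submonoid.closure ((A : Set C) ∪ B)

def mixedWords : Set C :=
  {w | ∃ u ∈ wordMonoid A B, ∃ x ∈ A, ∃ v ∈ wordMonoid A B, u * x * v = w}

variable {A B}

lemma mem_wordMonoid_of_mem_left {x : C} (hx : x ∈ A) : x ∈ wordMonoid A B :=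
  Submonoid.subset_closure (Or.inl hx)

lemma mem_wordMonoid_of_mem_right {x : C} (hx : x ∈ B) : x ∈ wordMonoid A B :=
  Submonoid.subset_closure (Or.inr hx)

lemma exists_pairs_of_mem_wordMonoid {w : C} (hw : w ∈ wordMonoid A B) :
    ∃ b₀ ∈ B, ∃ ps : List (C × C), (∀ p ∈ ps, p.1 ∈ A ∧ p.2 ∈ B) ∧
      b₀ * (ps.map fun p => p.1 * p.2).prod = w := by
  induction hw using Submonoid.closure_induction_left with
  | one => exact ⟨1, one_mem B, [], by simp, by simp⟩
  | mul_left x hx y _ ih =>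
    obtain ⟨b₀, hb₀, ps, hps, rfl⟩ := ih
    rcases hx with hxA | hxB
    · exact ⟨1, one_mem B, (x, b₀) :: ps, List.forall_mem_cons.mpr ⟨⟨hxA, hb₀⟩, hps⟩,
        by simp [mul_assoc]⟩
    · exact ⟨x * b₀, mul_mem hxB hb₀, ps, hps, mul_assoc _ _ _⟩

lemma mem_cyclicWords_of_pairs {b₀ : C} (hb₀ : b₀ ∈ B) {ps : List (C × C)}
    (hps : ∀ p ∈ ps, p.1 ∈ A ∧ p.2 ∈ B) (hne : ps ≠ []) :
    b₀ * (ps.map fun p => p.1 * p.2).prod ∈ cyclicWords A B := by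
  have hget : ∀ i, (ps.getD i (0, 1)).1 ∈ A ∧ (ps.getD i (0, 1)).2 ∈ B := by
    intro i
    rcases lt_or_ge i ps.length with hi | hi
    · rw [List.getD_eq_getElem _ _ hi]
      exact hps _ (List.getElem_mem hi)
    · rw [List.getD_eq_default _ _ hi]
      exact ⟨zero_mem A, one_mem B⟩
  refine ⟨ps.length, fun i => (ps.getD (i - 1) (0, 1)).1,
    fun i => if i = 0 then b₀ else (ps.getD (i - 1) (0, 1)).2, List.length_pos_iff.mpr hne,
    fun i => (hget _).1, fun i => ?_, ?_⟩
  · beta_reduce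
    split_ifs
    exacts [hb₀, (hget _).2]
  · simp only [if_neg (Nat.succ_ne_zero _), Nat.add_sub_cancel]
    congr 2
    refine List.ext_getElem (by simp) fun i hi _ => ?_
    simp [List.getElem?_eq_getElem (by simpa using hi : i < ps.length)]

lemma mixedWords_subset_cyclicWords : mixedWords A B ⊆ cyclicWords A B := by
  rintro _ ⟨u, hu, x, hx, v, hv, rfl⟩
  obtain ⟨b₀, hb₀, ps, hps, rfl⟩ := exists_pairs_of_mem_wordMonoid hu
  obtain ⟨b₁, hb₁, qs, hqs, rfl⟩ := exists_pairs_of_mem_wordMonoid hv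
  convert mem_cyclicWords_of_pairs (A := A) hb₀ (ps := ps ++ (x, b₁) :: qs)
    (List.forall_mem_append.mpr ⟨hps, List.forall_mem_cons.mpr ⟨⟨hx, hb₁⟩, hqs⟩⟩)
    (by simp) using 1
  simp [mul_assoc]

lemma mul_mem_mixedWords {w m : C} (hw : w ∈ mixedWords A B) (hm : m ∈ wordMonoid A B) :
    w * m ∈ mixedWords A B := by
  obtain ⟨u, hu, x, hx, v, hv, rfl⟩ := hw
  exact ⟨u, hu, x, hx, v * m, mul_mem hv hm, by simp only [mul_assoc]⟩

lemma prod_mem_wordMonoid {a β : ℕ → C} (hA : ∀ i, a i ∈ A) (hβ : ∀ i, β i ∈ B) (k : ℕ) :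
    ((List.range k).map fun i => a i * β i).prod ∈ wordMonoid A B :=
  list_prod_mem <| by
    simpa using fun i _ => mul_mem (mem_wordMonoid_of_mem_left (hA i))
      (mem_wordMonoid_of_mem_right (hβ i))

lemma prod_range_succ_mem_mixedWords {a β : ℕ → C} (hA : ∀ i, a i ∈ A) (hβ : ∀ i, β i ∈ B)
    (m : ℕ) : ((List.range (m + 1)).map fun i => a i * β i).prod ∈ mixedWords A B :=
  ⟨_, prod_mem_wordMonoid hA hβ m, a m, hA m, β m, mem_wordMonoid_of_mem_right (hβ m),
    by simp [List.range_succ, mul_assoc]⟩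

end Words

section NoncommPolynomial

lemma coeff_one_mul {R : Type*} [Semiring R] (p q : R[X]) :
    (p * q).coeff 1 = p.coeff 0 * q.coeff 1 + p.coeff 1 * q.coeff 0 := by
  simp [coeff_mul, Finset.Nat.antidiagonal_succ]

lemma coeff_zero_list_prod {R : Type*} [Semiring R] (l : List R[X]) :
    l.prod.coeff 0 = (l.map (coeff · 0)).prod :=
  map_list_prod constantCoeff l

lemma coeff_one_prod_range_mem {R : Type*} [Semiring R] {E : AddSubmonoid R} (F : ℕ → R[X])
    (hmul : ∀ k, ∀ x ∈ E, x * (F k).coeff 0 ∈ E)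
    (hstep : ∀ k, ((List.range k).map F).prod.coeff 0 * (F k).coeff 1 ∈ E) (n : ℕ) :
    ((List.range n).map F).prod.coeff 1 ∈ E := by
  induction n with
  | zero => simp [coeff_one]
  | succ k ih =>
    rw [List.range_succ, List.map_append, List.prod_append, List.map_singleton,
      List.prod_singleton, coeff_one_mul]
    exact add_mem (hstep k) (hmul k _ ih)

variable {k R : Type*} [CommRing k] [Ring R] [Algebra k R]

lemma eval_algebraMap_mul (p q : R[X]) (t : k) :
    (p * q).eval (algebraMap k R t) = p.eval (algebraMap k R t) * q.eval (algebraMap k R t) :=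
  eval₂_mul_noncomm _ _ fun _ => Algebra.commute_algebraMap_right _ _

lemma eval_algebraMap_list_prod (l : List R[X]) (t : k) :
    l.prod.eval (algebraMap k R t) = (l.map (eval (algebraMap k R t))).prod :=
  eval₂_list_prod_noncomm _ _ l fun _ _ _ => Algebra.commute_algebraMap_right _ _

-- `Polynomial.map` needs a ring hom; this applies a mere linear functional coefficientwise.
noncomputable def mapCoeffs (φ : R →ₗ[k] k) (p : R[X]) : k[X] :=
  p.sum fun n c => monomial n (φ c)

lemma coeff_mapCoeffs (φ : R →ₗ[k] k) (p : R[X]) (n : ℕ) :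
    (mapCoeffs φ p).coeff n = φ (p.coeff n) := by
  rw [mapCoeffs, coeff_sum, Polynomial.sum_def]
  simp only [coeff_monomial, Finset.sum_ite_eq']
  split_ifs with h
  · rfl
  · rw [notMem_support_iff.mp h, map_zero]

lemma eval_mapCoeffs (φ : R →ₗ[k] k) (p : R[X]) (t : k) :
    (mapCoeffs φ p).eval t = φ (p.eval (algebraMap k R t)) := by
  induction p using Polynomial.induction_on' with
  | add p q hp hq =>
    have hadd : mapCoeffs φ (p + q) = mapCoeffs φ p + mapCoeffs φ q := by
      ext; simp [coeff_mapCoeffs]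
    simp [hadd, hp, hq]
  | monomial n c =>
    have hmon : mapCoeffs φ (monomial n c) = monomial n (φ c) := by
      ext; simp [coeff_mapCoeffs, coeff_monomial, apply_ite φ]
    simp [hmon, ← map_pow, ← Algebra.commutes, ← Algebra.smul_def, mul_comm]

lemma map_sub_algebraMap_eq_zero {τ : R →ₗ[k] k} (hτ1 : τ 1 = 1) (x : R) :
    τ (x - algebraMap k R (τ x)) = 0 := by
  simp [Algebra.algebraMap_eq_smul_one, hτ1]

noncomputable def centeredFactor (τ τ' : R →ₗ[k] k) (x : R) : R[X] :=
  C (x - algebraMap k R (τ x)) - C (algebraMap k R (τ' x)) * X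

variable (τ τ' : R →ₗ[k] k)

lemma eval_centeredFactor (x : R) (t : k) :
    (centeredFactor τ τ' x).eval (algebraMap k R t) = x - algebraMap k R (τ x + t * τ' x) := by
  rw [centeredFactor, eval_sub, eval_C, eval_mul_X, eval_C, ← map_mul, mul_comm (τ' x), map_add,
    sub_sub]

lemma coeff_zero_centeredFactor (x : R) :
    (centeredFactor τ τ' x).coeff 0 = x - algebraMap k R (τ x) := by
  simp [centeredFactor]

lemma coeff_one_centeredFactor (x : R) :
    (centeredFactor τ τ' x).coeff 1 = -algebraMap k R (τ' x) := by
  simp [centeredFactor, coeff_C]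

noncomputable def centeredProduct (a b : ℕ → R) (n : ℕ) : R[X] :=
  ((List.range n).map fun i => centeredFactor τ τ' (a i) * centeredFactor τ τ' (b i)).prod

lemma eval_centeredProduct (a b : ℕ → R) (n : ℕ) (t : k) :
    (centeredProduct τ τ' a b n).eval (algebraMap k R t) =
      ((List.range n).map fun i => (a i - algebraMap k R (τ (a i) + t * τ' (a i))) *
        (b i - algebraMap k R (τ (b i) + t * τ' (b i)))).prod := by
  simp only [centeredProduct, eval_algebraMap_list_prod, List.map_map, Function.comp_def,
    eval_algebraMap_mul, eval_centeredFactor]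

lemma coeff_zero_centeredProduct {a : ℕ → R} (hτa : ∀ i, τ (a i) = 0) (b : ℕ → R) (n : ℕ) :
    (centeredProduct τ τ' a b n).coeff 0 =
      ((List.range n).map fun i => a i * (b i - algebraMap k R (τ (b i)))).prod := by
  simp [centeredProduct, coeff_zero_list_prod, Function.comp_def, mul_coeff_zero,
    coeff_zero_centeredFactor, hτa]

end NoncommPolynomial

lemma isLittleO_eval_ofReal (q : ℂ[X]) (h0 : q.coeff 0 = 0) (h1 : q.coeff 1 = 0) :
    (fun t : ℝ => q.eval (t : ℂ)) =o[nhds 0] fun t => t := by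
  obtain ⟨r, rfl⟩ : X ^ 2 ∣ q := X_pow_dvd_iff.mpr fun d hd => by
    interval_cases d <;> assumption
  have hid : (fun t : ℝ => (t : ℂ)) =O[nhds 0] fun t => t :=
    isBigO_of_le _ fun t => by simp
  have hsmall : (fun t : ℝ => (t : ℂ) * r.eval (t : ℂ)) =o[nhds 0] fun _ => (1 : ℝ) := by
    rw [isLittleO_one_iff]
    have hc : Continuous fun t : ℝ => (t : ℂ) * r.eval (t : ℂ) := by fun_prop
    simpa using hc.tendsto 0
  simpa [pow_two, mul_assoc] using hid.mul_isLittleO hsmall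

lemma isLittleO_of_coeff_eq_zero {R : Type*} [Ring R] [Algebra ℂ R] (φ ψ : R →ₗ[ℂ] ℂ) (p : R[X])
    (h0 : φ (p.coeff 0) = 0) (h1 : φ (p.coeff 1) + ψ (p.coeff 0) = 0) :
    (fun t : ℝ => φ (p.eval (algebraMap ℂ R t)) + t * ψ (p.eval (algebraMap ℂ R t)))
      =o[nhds 0] fun t => t := by
  have := isLittleO_eval_ofReal (mapCoeffs φ p + X * mapCoeffs ψ p)
    (by simpa [coeff_mapCoeffs] using h0) (by simpa [coeff_mapCoeffs, coeff_X_mul] using h1)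
  simpa [eval_mapCoeffs] using this

section Freeness

variable {C : Type*} [Ring C] [StarRing C] [Algebra ℂ C] [StarModule ℂ C]
  {A : NonUnitalStarSubalgebra ℂ C} {B : StarSubalgebra ℂ C} {τ : C →ₗ[ℂ] ℂ}

lemma map_eq_zero_of_mem (hker : ∀ w ∈ cyclicWords A B, τ w = 0) {x : C} (hx : x ∈ A) :
    τ x = 0 :=
  hker x <| mixedWords_subset_cyclicWords ⟨1, one_mem _, x, hx, 1, one_mem _, by simp⟩

def vanishingSpan (A : NonUnitalStarSubalgebra ℂ C) (B : StarSubalgebra ℂ C)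
    (τ : C →ₗ[ℂ] ℂ) : Submodule ℂ C :=
  Submodule.span ℂ (mixedWords A B ∪ {x | x ∈ B ∧ τ x = 0})

lemma vanishingSpan_le_ker (hker : ∀ w ∈ cyclicWords A B, τ w = 0) :
    vanishingSpan A B τ ≤ LinearMap.ker τ :=
  Submodule.span_le.mpr <| by
    rintro x (hx | hx)
    exacts [hker x (mixedWords_subset_cyclicWords hx), hx.2]

lemma mul_mem_vanishingSpan {x y z : C} (hx : x ∈ vanishingSpan A B τ) (hy : y ∈ A)
    (hz : z ∈ B) : x * (y * z) ∈ vanishingSpan A B τ := by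
  suffices vanishingSpan A B τ ≤ (vanishingSpan A B τ).comap (LinearMap.mulRight ℂ (y * z)) from
    this hx
  refine Submodule.span_le.mpr ?_
  rintro x (hx | hx) <;> refine Submodule.subset_span (Or.inl ?_)
  · exact mul_mem_mixedWords hx
      (mul_mem (mem_wordMonoid_of_mem_left hy) (mem_wordMonoid_of_mem_right hz))
  · exact ⟨x, mem_wordMonoid_of_mem_right hx.1, y, hy, z, mem_wordMonoid_of_mem_right hz,
      mul_assoc _ _ _⟩

lemma map_coeff_one_centeredProduct_eq_zero (τ' : C →ₗ[ℂ] ℂ) (hτ1 : τ 1 = 1)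
    (hker : ∀ w ∈ cyclicWords A B, τ w = 0) {a b : ℕ → C} (hA : ∀ i, a i ∈ A)
    (hB : ∀ i, b i ∈ B) (n : ℕ) : τ ((centeredProduct τ τ' a b n).coeff 1) = 0 := by
  set β := fun i => b i - algebraMap ℂ C (τ (b i))
  have hβ : ∀ i, β i ∈ B ∧ τ (β i) = 0 := fun i =>
    ⟨sub_mem (hB i) (algebraMap_mem B _), map_sub_algebraMap_eq_zero hτ1 _⟩
  have hF₀ : ∀ k, (centeredFactor τ τ' (a k) * centeredFactor τ τ' (b k)).coeff 0 = a k * β k :=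
    fun k => by simp [mul_coeff_zero, coeff_zero_centeredFactor, map_eq_zero_of_mem hker (hA k), β]
  have hWa : ∀ k, ((List.range k).map fun i => a i * β i).prod * a k ∈ vanishingSpan A B τ :=
    fun k => Submodule.subset_span (Or.inl
      ⟨_, prod_mem_wordMonoid hA (fun i => (hβ i).1) k, a k, hA k, 1, one_mem _, mul_one _⟩)
  have hWβ : ∀ k, ((List.range k).map fun i => a i * β i).prod * β k ∈ vanishingSpan A B τ := by
    rintro (_ | j)
    · exact Submodule.subset_span (Or.inr (by simpa using hβ 0))
    · exact Submodule.subset_span (Or.inl (mul_mem_mixedWords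
        (prod_range_succ_mem_mixedWords hA (fun i => (hβ i).1) j)
        (mem_wordMonoid_of_mem_right (hβ _).1)))
  refine vanishingSpan_le_ker hker (coeff_one_prod_range_mem
    (E := (vanishingSpan A B τ).toAddSubmonoid) _ (fun k x hx => ?_) (fun k => ?_) n)
  · rw [hF₀]
    exact mul_mem_vanishingSpan hx (hA k) (hβ k).1
  · rw [coeff_zero_list_prod, List.map_map, coeff_one_mul, coeff_zero_centeredFactor,
      coeff_zero_centeredFactor, coeff_one_centeredFactor, coeff_one_centeredFactor,
      map_eq_zero_of_mem hker (hA k), map_zero, sub_zero,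
      Algebra.algebraMap_eq_smul_one (τ' (a k)), Algebra.algebraMap_eq_smul_one (τ' (b k))]
    simp only [Submodule.mem_toAddSubmonoid, Function.comp_def, hF₀, mul_add, mul_neg, neg_mul,
      mul_smul_comm, smul_mul_assoc, mul_one, one_mul]
    exact add_mem (neg_mem (Submodule.smul_mem _ _ (hWa k)))
      (neg_mem (Submodule.smul_mem _ _ (hWβ k)))

end Freeness

theorem infinitesimally_free_of_cyclic_monotone_general
    {C : Type*} [Ring C] [StarRing C] [Algebra ℂ C] [StarModule ℂ C]
    (A : NonUnitalStarSubalgebra ℂ C) (B : StarSubalgebra ℂ C)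
    (τ τ' : C →ₗ[ℂ] ℂ)
    (hτ1 : τ 1 = 1)
    (hker : ∀ w ∈ cyclicWords A B, τ w = 0)
    (hcm : ∀ (n : ℕ) (a b : ℕ → C), 1 ≤ n → (∀ i, a i ∈ A) → (∀ i, b i ∈ B) →
      τ' (((List.range n).map (fun i => a i * b i)).prod)
        = τ' (((List.range n).map a).prod) * ∏ i ∈ Finset.range n, τ (b i)) :
    ∀ (n : ℕ), 1 ≤ n → ∀ (a b : ℕ → C), (∀ i, a i ∈ A) → (∀ i, b i ∈ B) →
      (fun t : ℝ =>
          τ (((List.range n).map (fun i =>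
                (a i - algebraMap ℂ C (τ (a i) + (t : ℂ) * τ' (a i)))
                  * (b i - algebraMap ℂ C (τ (b i) + (t : ℂ) * τ' (b i))))).prod)
            + (t : ℂ) * τ' (((List.range n).map (fun i =>
                (a i - algebraMap ℂ C (τ (a i) + (t : ℂ) * τ' (a i)))
                  * (b i - algebraMap ℂ C (τ (b i) + (t : ℂ) * τ' (b i))))).prod))
        =o[nhds (0 : ℝ)] (fun t : ℝ => t) := by
  intro n hn a b hA hB
  have hτa : ∀ i, τ (a i) = 0 := fun i => map_eq_zero_of_mem hker (hA i)
  have hβ : ∀ i, b i - algebraMap ℂ C (τ (b i)) ∈ B := fun i =>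
    sub_mem (hB i) (algebraMap_mem B _)
  have hτP₀ : τ ((centeredProduct τ τ' a b n).coeff 0) = 0 := by
    obtain ⟨m, rfl⟩ : ∃ m, n = m + 1 := ⟨n - 1, by omega⟩
    rw [coeff_zero_centeredProduct τ τ' hτa]
    exact hker _ (mixedWords_subset_cyclicWords (prod_range_succ_mem_mixedWords hA hβ m))
  have hτ'P₀ : τ' ((centeredProduct τ τ' a b n).coeff 0) = 0 := by
    rw [coeff_zero_centeredProduct τ τ' hτa, hcm n a _ hn hA hβ,
      Finset.prod_eq_zero (Finset.mem_range.mpr hn) (map_sub_algebraMap_eq_zero hτ1 _), mul_zero]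
  have hτP₁ := map_coeff_one_centeredProduct_eq_zero τ' hτ1 hker hA hB n
  simpa [eval_centeredProduct] using
    isLittleO_of_coeff_eq_zero τ τ' _ hτP₀ (by rw [hτP₁, hτ'P₀, add_zero])

/-- Proposition 3.11 (one direction): in an infinitesimal noncommutative probability space
`(C, τ', τ)`, if the ideal generated by `A` over `B` lies in `ker τ` and `(A, B)` is
cyclically monotone with respect to `(τ', τ)`, then `A` and `B` are infinitesimally free:
with `τ_t = τ + tτ'`, the alternating centered moments are `o(t)` as `t → 0`. -/
theorem infinitesimally_free_of_cyclic_monotone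
    {C : Type*} [Ring C] [StarRing C] [Algebra ℂ C] [StarModule ℂ C]
    (A : NonUnitalStarSubalgebra ℂ C) (B : StarSubalgebra ℂ C)
    (τ τ' : C →ₗ[ℂ] ℂ)
    (hτ1 : τ 1 = 1) (hτ'1 : τ' 1 = 0)
    (hτtr : ∀ x y : C, τ (x * y) = τ (y * x))
    (hτ'tr : ∀ x y : C, τ' (x * y) = τ' (y * x))
    (hker : ∀ w ∈ cyclicWords A B, τ w = 0)
    (hcm : ∀ (n : ℕ) (a b : ℕ → C), 1 ≤ n → (∀ i, a i ∈ A) → (∀ i, b i ∈ B) →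
      τ' (((List.range n).map (fun i => a i * b i)).prod)
        = τ' (((List.range n).map a).prod) * ∏ i ∈ Finset.range n, τ (b i)) :
    ∀ (n : ℕ), 1 ≤ n → ∀ (a b : ℕ → C), (∀ i, a i ∈ A) → (∀ i, b i ∈ B) →
      (fun t : ℝ =>
          τ (((List.range n).map (fun i =>
                (a i - algebraMap ℂ C (τ (a i) + (t : ℂ) * τ' (a i)))
                  * (b i - algebraMap ℂ C (τ (b i) + (t : ℂ) * τ' (b i))))).prod)
            + (t : ℂ) * τ' (((List.range n).map (fun i =>
                (a i - algebraMap ℂ C (τ (a i) + (t : ℂ) * τ' (a i)))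
                  * (b i - algebraMap ℂ C (τ (b i) + (t : ℂ) * τ' (b i))))).prod))
        =o[nhds (0 : ℝ)] (fun t : ℝ => t) :=
  infinitesimally_free_of_cyclic_monotone_general A B τ τ' hτ1 hker hcm
end

section
/- Let (C, τ', τ) be an infinitesimal noncommutative probability space and A, B ∗-subalgebras with 1 ∈ B such that the ideal generated by A over B lies in ker(τ), and suppose A and B are infinitesimally free with respect to (τ', τ). Then (A, B) is cyclically monotone with respect to (τ', τ): for all n ∈ ℕ, a_1,…,a_n ∈ A, b_1,…,b_n ∈ B, τ'(a_1 b_1 a_2 b_2 ⋯ a_n b_n) = τ'(a_1 a_2 ⋯ a_n) τ(b_1) τ(b_2) ⋯ τ(b_n). -/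
open Asymptotics

section CW
variable {C : Type*} [Ring C] [StarRing C] [Algebra ℂ C] [StarModule ℂ C]
  {A : NonUnitalStarSubalgebra ℂ C} {B : StarSubalgebra ℂ C}

lemma cw_single {a b : C} (ha : a ∈ A) (hb : b ∈ B) : a * b ∈ cyclicWords A B := by
  refine ⟨1, fun _ => a, fun i => match i with | 0 => 1 | _+1 => b, le_refl 1,
    fun _ => ha, ?_, ?_⟩
  · intro i; cases i
    · exact B.one_mem
    · exact hb
  · simp [List.range_succ]

lemma cw_seed {a : C} (ha : a ∈ A) : a ∈ cyclicWords A B := by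
  have := cw_single (B := B) ha B.one_mem
  rwa [mul_one] at this

lemma cw_mul_left_b {b w : C} (hb : b ∈ B) (hw : w ∈ cyclicWords A B) :
    b * w ∈ cyclicWords A B := by
  obtain ⟨n, av, bv, hn, hav, hbv, rfl⟩ := hw
  refine ⟨n, av, fun i => match i with | 0 => b * bv 0 | k+1 => bv (k+1), hn, hav, ?_, ?_⟩
  · intro i; cases i
    · exact B.mul_mem hb (hbv 0)
    · exact hbv _
  · rw [← mul_assoc]

lemma cw_mul_left_a {a w : C} (ha : a ∈ A) (hw : w ∈ cyclicWords A B) :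
    a * w ∈ cyclicWords A B := by
  obtain ⟨n, av, bv, hn, hav, hbv, rfl⟩ := hw
  refine ⟨n+1, (fun i => match i with | 0 => a | 1 => a | k+2 => av (k+1)),
    (fun i => match i with | 0 => 1 | 1 => bv 0 | k+2 => bv (k+1)), by omega, ?_, ?_, ?_⟩
  · intro i; match i with
    | 0 => exact ha
    | 1 => exact ha
    | k+2 => exact hav (k+1)
  · intro i; match i with
    | 0 => exact B.one_mem
    | 1 => exact hbv 0
    | k+2 => exact hbv (k+1)
  · rw [List.range_succ_eq_map, List.map_cons, List.map_map, List.prod_cons, one_mul,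
      mul_assoc]
    rfl

lemma cw_mul_right_b {w b : C} (hw : w ∈ cyclicWords A B) (hb : b ∈ B) :
    w * b ∈ cyclicWords A B := by
  obtain ⟨n, av, bv, hn, hav, hbv, rfl⟩ := hw
  obtain ⟨m, rfl⟩ : ∃ m, n = m + 1 := ⟨n - 1, by omega⟩
  refine ⟨m+1, av, fun i => if i = m+1 then bv (m+1) * b else bv i, by omega, hav, ?_, ?_⟩
  · intro i; dsimp only
    by_cases h : i = m + 1
    · rw [if_pos h]; exact B.mul_mem (hbv _) hb
    · rw [if_neg h]; exact hbv i
  · dsimp only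
    rw [if_neg (show ¬(0 = m+1) by omega)]
    have hmap : (List.range m).map
          (fun i => av (i+1) * (if i + 1 = m+1 then bv (m+1) * b else bv (i+1)))
        = (List.range m).map (fun i => av (i+1) * bv (i+1)) :=
      List.map_congr_left (fun i hi => by
        rw [List.mem_range] at hi; rw [if_neg (by omega)])
    rw [List.range_succ, List.map_append, List.map_append, List.prod_append,
      List.prod_append, hmap]
    simp [mul_assoc]

lemma cw_mul_right_a {w a : C} (hw : w ∈ cyclicWords A B) (ha : a ∈ A) :
    w * a ∈ cyclicWords A B := by
  obtain ⟨n, av, bv, hn, hav, hbv, rfl⟩ := hw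
  refine ⟨n+1, (fun i => if i = n+1 then a else av i),
    (fun i => if i = n+1 then 1 else bv i), by omega, ?_, ?_, ?_⟩
  · intro i; dsimp only; by_cases h : i = n+1
    · rw [if_pos h]; exact ha
    · rw [if_neg h]; exact hav i
  · intro i; dsimp only; by_cases h : i = n+1
    · rw [if_pos h]; exact B.one_mem
    · rw [if_neg h]; exact hbv i
  · dsimp only
    rw [if_neg (show ¬(0 = n+1) by omega)]
    have hmap : (List.range n).map
          (fun i => (if i + 1 = n+1 then a else av (i+1)) *
            (if i + 1 = n+1 then 1 else bv (i+1)))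
        = (List.range n).map (fun i => av (i+1) * bv (i+1)) :=
      List.map_congr_left (fun i hi => by
        rw [List.mem_range] at hi; rw [if_neg (by omega), if_neg (by omega)])
    rw [List.range_succ, List.map_append, List.prod_append, hmap]
    simp [mul_assoc]

end CW

def shf {C : Type*} [AddCommMonoid C] (c : ℕ → C) : ℕ → C
  | 0 => 0
  | k+1 => c k

lemma sum_shf {C : Type*} [AddCommMonoid C] [Module ℂ C] (m : ℕ) (c : ℕ → C) (t : ℂ) :
    ∑ k ∈ Finset.range (m+1), t^k • shf c k = t • ∑ k ∈ Finset.range m, t^k • c k := by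
  rw [Finset.sum_range_succ']
  simp [shf, Finset.smul_sum, smul_smul, pow_succ, mul_comm]

lemma expand {C : Type*} [Ring C] [Algebra ℂ C] (x y z : ℕ → C) (n : ℕ) :
    ∃ (m : ℕ) (r : ℕ → C), 2 ≤ m ∧ (∀ k, m ≤ k → r k = 0) ∧
      r 0 = ((List.range n).map x).prod ∧
      r 1 = ∑ j ∈ Finset.range n, ((List.range j).map x).prod * y j *
            ((((List.range n).drop (j+1)).map x).prod) ∧
      ∀ t : ℂ, ((List.range n).map (fun i => x i + t • y i + t^2 • z i)).prod
        = ∑ k ∈ Finset.range m, t^k • r k := by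
  induction n with
  | zero =>
    refine ⟨2, fun k => if k = 0 then 1 else 0, le_refl 2, ?_, ?_, ?_, ?_⟩
    · intro k hk; dsimp only; rw [if_neg (by omega)]
    · simp
    · simp
    · intro t; simp [Finset.sum_range_succ]
  | succ n ih =>
    obtain ⟨m, r, hm, hvan, hr0, hr1, hev⟩ := ih
    refine ⟨m+2, fun k => r k * x n + shf (fun j => r j * y n) k
      + shf (shf (fun j => r j * z n)) k, by omega, ?_, ?_, ?_, ?_⟩
    · intro k hk
      obtain ⟨k', rfl⟩ : ∃ k', k = k' + 2 := ⟨k - 2, by omega⟩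
      simp only [shf, hvan _ (by omega : m ≤ k' + 2), hvan _ (by omega : m ≤ k' + 1),
        hvan _ (by omega : m ≤ k'), zero_mul, add_zero]
    · simp only [shf, hr0, List.range_succ, List.map_append, List.prod_append]
      simp
    · dsimp only
      simp only [shf, hr1, hr0]
      rw [Finset.sum_range_succ]
      have hQlast : ((List.range (n+1)).drop (n+1)) = [] :=
        List.drop_eq_nil_of_le (by simp)
      rw [hQlast]
      have hQ : ∀ j ∈ Finset.range n,
          ((List.range j).map x).prod * y j * (((List.range (n+1)).drop (j+1)).map x).prod
          = (((List.range j).map x).prod * y j * (((List.range n).drop (j+1)).map x).prod) * x n := by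
        intro j hj
        rw [Finset.mem_range] at hj
        rw [List.range_succ, List.drop_append_of_le_length (by simp; omega), List.map_append,
          List.prod_append]
        simp [mul_assoc]
      rw [Finset.sum_congr rfl hQ, ← Finset.sum_mul]
      simp [mul_assoc]
    · intro t
      have hA : (∑ k ∈ Finset.range (m+2), t^k • (r k * x n))
          = ∑ k ∈ Finset.range m, t^k • (r k * x n) :=
        (Finset.sum_subset (Finset.range_subset_range.mpr (by omega)) (fun k _ hk => by
          rw [hvan k (by simp only [Finset.mem_range] at hk; omega), zero_mul, smul_zero])).symm
      have hB : (∑ k ∈ Finset.range (m+2), t^k • shf (fun j => r j * y n) k)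
          = ∑ k ∈ Finset.range m, t • t^k • (r k * y n) := by
        rw [show m+2 = (m+1)+1 from rfl, sum_shf]
        rw [Finset.sum_range_succ, hvan m le_rfl]
        simp [Finset.smul_sum]
      have hC : (∑ k ∈ Finset.range (m+2), t^k • shf (shf (fun j => r j * z n)) k)
          = ∑ k ∈ Finset.range m, t • t • t^k • (r k * z n) := by
        rw [show m+2 = (m+1)+1 from rfl, sum_shf, sum_shf]
        simp [Finset.smul_sum]
      rw [List.range_succ, List.map_append, List.prod_append, hev t]
      simp only [List.map_cons, List.map_nil, List.prod_cons, List.prod_nil, mul_one]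
      simp only [smul_add, Finset.sum_add_distrib, mul_add, Finset.sum_mul, smul_mul_assoc,
        mul_smul_comm, pow_two, mul_smul]
      rw [hA, hB, hC]
      simp [Finset.smul_sum]

lemma o_lin {c : ℂ} (h : (fun t : ℝ => (t : ℂ) * c) =o[nhds (0:ℝ)] (fun t : ℝ => t)) :
    c = 0 := by
  by_contra hc
  have hcpos : 0 < ‖c‖ := norm_pos_iff.mpr hc
  have hpos : 0 < ‖c‖ / 2 := by linarith
  have hev := h.def hpos
  rw [Metric.eventually_nhds_iff] at hev
  obtain ⟨ε, hε, hball⟩ := hev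
  have hd : dist (ε/2) (0:ℝ) < ε := by
    rw [Real.dist_eq, sub_zero, abs_of_pos (by linarith)]; linarith
  have := hball hd
  rw [norm_mul, Complex.norm_real, Real.norm_eq_abs,
    abs_of_pos (by linarith : (0:ℝ) < ε/2)] at this
  nlinarith

lemma poly_o {m : ℕ} {d : ℕ → ℂ}
    (h : (fun t : ℝ => ∑ k ∈ Finset.range (m+2), (t:ℂ)^k * d k) =o[nhds (0:ℝ)]
      (fun t : ℝ => t))
    (hd0 : d 0 = 0) : d 1 = 0 := by
  set h' : ℝ → ℂ := fun t => ∑ k ∈ Finset.range m, (t:ℂ)^k * d (k+2) with hh'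
  have hsplit : ∀ t : ℝ, (∑ k ∈ Finset.range (m+2), (t:ℂ)^k * d k)
      = (t:ℂ) * d 1 + (t:ℂ)^2 * h' t := by
    intro t
    rw [Finset.sum_range_succ', Finset.sum_range_succ', hd0]
    rw [Finset.sum_congr rfl (fun k _ => by ring : ∀ k ∈ Finset.range m,
      (t:ℂ)^(k+1+1) * d (k+1+1) = (t:ℂ)^2 * ((t:ℂ)^k * d (k+2)))]
    rw [hh', Finset.mul_sum]
    simp only [zero_add, pow_zero, pow_one, mul_zero, add_zero, one_mul]
    ring
  have hcont : Continuous h' := by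
    apply continuous_finset_sum
    intro k _
    exact (Complex.continuous_ofReal.pow k).mul continuous_const
  have h2 : (fun t : ℝ => (t:ℂ)^2 * h' t) =o[nhds (0:ℝ)] (fun t : ℝ => t) := by
    rw [isLittleO_iff]
    intro c hc
    set M : ℝ := ‖h' 0‖ + 1 with hM
    have hMpos : 0 < M := by positivity
    have hbd : ∀ᶠ t : ℝ in nhds 0, ‖h' t‖ ≤ M :=
      Filter.Tendsto.eventually_le_const (by linarith) (hcont.tendsto 0).norm
    have hsm : ∀ᶠ t : ℝ in nhds 0, |t| < c / M := by
      refine Filter.Tendsto.eventually_lt_const (by positivity) ?_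
      have : Filter.Tendsto (fun t : ℝ => |t|) (nhds 0) (nhds |0|) := (continuous_abs.tendsto 0)
      simpa using this
    filter_upwards [hbd, hsm] with t h1 h2
    rw [norm_mul, norm_pow, Complex.norm_real, Real.norm_eq_abs]
    have h3 : |t| * ‖h' t‖ ≤ (c/M) * M := by
      apply mul_le_mul (le_of_lt h2) h1 (norm_nonneg _) (by positivity)
    rw [div_mul_cancel₀ c (ne_of_gt hMpos)] at h3
    nlinarith [mul_le_mul_of_nonneg_left h3 (abs_nonneg t), abs_nonneg t, norm_nonneg (h' t)]
  have h1 : (fun t : ℝ => (t:ℂ) * d 1) =o[nhds (0:ℝ)] (fun t : ℝ => t) := by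
    have heq := (h.congr_left hsplit).sub h2
    exact heq.congr_left (fun t => by ring)
  exact o_lin h1

section Main
variable {C : Type*} [Ring C] [StarRing C] [Algebra ℂ C] [StarModule ℂ C]
  {A : NonUnitalStarSubalgebra ℂ C} {B : StarSubalgebra ℂ C}

lemma lprod_ne (a bb : ℕ → C) (ha : ∀ i, a i ∈ A) (hbc : ∀ i, bb i ∈ B) :
    ∀ (l : List ℕ), l ≠ [] → ((l.map (fun i => a i * bb i)).prod) ∈ cyclicWords A B := by
  intro l
  induction l with
  | nil => exact fun h => absurd rfl h
  | cons i l ih =>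
    intro _
    rw [List.map_cons, List.prod_cons]
    by_cases h : l = []
    · subst h
      simp only [List.map_nil, List.prod_nil, mul_one]
      exact cw_single (ha i) (hbc i)
    · rw [mul_assoc]
      exact cw_mul_left_a (ha i) (cw_mul_left_b (hbc i) (ih h))

lemma wmul_lprod (a bb : ℕ → C) (ha : ∀ i, a i ∈ A) (hbc : ∀ i, bb i ∈ B)
    (l : List ℕ) : ∀ (w : C), w ∈ cyclicWords A B →
    w * ((l.map (fun i => a i * bb i)).prod) ∈ cyclicWords A B := by
  induction l with
  | nil => intro w hw; simpa using hw
  | cons i l ih =>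
    intro w hw
    rw [List.map_cons, List.prod_cons, ← mul_assoc, ← mul_assoc]
    exact ih _ (cw_mul_right_b (cw_mul_right_a hw (ha i)) (hbc i))

theorem keyfact (τ τ' : C →ₗ[ℂ] ℂ)
    (hτ1 : τ 1 = 1)
    (hker : ∀ w ∈ cyclicWords A B, τ w = 0)
    (hif : ∀ (n : ℕ), 1 ≤ n → ∀ (a b : ℕ → C), (∀ i, a i ∈ A) → (∀ i, b i ∈ B) →
      (fun t : ℝ =>
          τ (((List.range n).map (fun i =>
                (a i - algebraMap ℂ C (τ (a i) + (t : ℂ) * τ' (a i)))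
                  * (b i - algebraMap ℂ C (τ (b i) + (t : ℂ) * τ' (b i))))).prod)
            + (t : ℂ) * τ' (((List.range n).map (fun i =>
                (a i - algebraMap ℂ C (τ (a i) + (t : ℂ) * τ' (a i)))
                  * (b i - algebraMap ℂ C (τ (b i) + (t : ℂ) * τ' (b i))))).prod))
        =o[nhds (0 : ℝ)] (fun t : ℝ => t))
    (n : ℕ) (hn : 1 ≤ n) (a b : ℕ → C) (ha : ∀ i, a i ∈ A) (hb : ∀ i, b i ∈ B) :
    τ' (((List.range n).map (fun i => a i * (b i - τ (b i) • 1))).prod) = 0 := by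
  have hτa : ∀ c : C, c ∈ A → τ c = 0 := fun c hc => hker c (cw_seed hc)
  set bc : ℕ → C := fun i => b i - τ (b i) • 1 with hbc
  have hbcB : ∀ i, bc i ∈ B := fun i =>
    sub_mem (hb i) (SMulMemClass.smul_mem _ B.one_mem)
  have hτbc : ∀ i, τ (bc i) = 0 := by
    intro i
    rw [hbc]
    simp only [map_sub, map_smul, smul_eq_mul, hτ1, mul_one, sub_self]
  set x : ℕ → C := fun i => a i * bc i with hx
  set y : ℕ → C := fun i => -(τ' (b i) • a i + τ' (a i) • bc i) with hy
  set z : ℕ → C := fun i => (τ' (a i) * τ' (b i)) • (1 : C) with hz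
  obtain ⟨m, r, hm, hvan, hr0, hr1, hev⟩ := expand x y z n
  have hfac : ∀ (t : ℝ) (i : ℕ),
      (a i - algebraMap ℂ C (τ (a i) + (t : ℂ) * τ' (a i)))
        * (b i - algebraMap ℂ C (τ (b i) + (t : ℂ) * τ' (b i)))
      = x i + (t : ℂ) • y i + ((t : ℂ))^2 • z i := by
    intro t i
    rw [hτa (a i) (ha i), zero_add, hx, hy, hz, hbc]
    simp only [Algebra.algebraMap_eq_smul_one, mul_sub, sub_mul, smul_mul_assoc,
      mul_smul_comm, one_mul, mul_one, smul_smul]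
    module
  have hprod : ∀ t : ℝ,
      ((List.range n).map (fun i =>
        (a i - algebraMap ℂ C (τ (a i) + (t : ℂ) * τ' (a i)))
          * (b i - algebraMap ℂ C (τ (b i) + (t : ℂ) * τ' (b i))))).prod
      = ∑ k ∈ Finset.range m, ((t : ℂ))^k • r k := by
    intro t
    rw [show (fun i =>
        (a i - algebraMap ℂ C (τ (a i) + (t : ℂ) * τ' (a i)))
          * (b i - algebraMap ℂ C (τ (b i) + (t : ℂ) * τ' (b i))))
      = fun i => x i + (t : ℂ) • y i + ((t : ℂ))^2 • z i from funext (hfac t)]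
    exact hev _
  obtain ⟨m', rfl⟩ : ∃ m', m = m' + 2 := ⟨m - 2, by omega⟩
  set d : ℕ → ℂ := fun k => τ (r k) + shf (fun j => τ' (r j)) k with hd
  have hF : ∀ t : ℝ, τ (∑ k ∈ Finset.range (m' + 2), ((t : ℂ))^k • r k)
      + (t : ℂ) * τ' (∑ k ∈ Finset.range (m' + 2), ((t : ℂ))^k • r k)
      = ∑ k ∈ Finset.range (m' + 2 + 1), ((t : ℂ))^k * d k := by
    intro t
    rw [map_sum, map_sum, hd]
    simp only [map_smul, smul_eq_mul, mul_add, Finset.sum_add_distrib]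
    have h1 : ∑ k ∈ Finset.range (m' + 2 + 1), ((t : ℂ))^k * τ (r k)
        = ∑ k ∈ Finset.range (m' + 2), ((t : ℂ))^k * τ (r k) := by
      rw [Finset.sum_range_succ, hvan _ le_rfl, map_zero, mul_zero, add_zero]
    have h2 : ∑ k ∈ Finset.range (m' + 2 + 1), ((t : ℂ))^k * shf (fun j => τ' (r j)) k
        = (t : ℂ) * ∑ k ∈ Finset.range (m' + 2), ((t : ℂ))^k * τ' (r k) := by
      have := sum_shf (m' + 2) (fun j => τ' (r j)) (t : ℂ)
      simpa only [smul_eq_mul] using this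
    rw [h1, h2, Finset.mul_sum]
  have hO2 : (fun t : ℝ => ∑ k ∈ Finset.range (m' + 2 + 1), ((t : ℂ))^k * d k)
      =o[nhds (0 : ℝ)] (fun t : ℝ => t) := by
    refine (hif n hn a b ha hb).congr_left (fun t => ?_)
    rw [hprod t]
    exact hF t
  have hτr1 : τ (r 1) = 0 := by
    rw [hr1, map_sum]
    apply Finset.sum_eq_zero
    intro j hj
    rw [Finset.mem_range] at hj
    have hsplit : ((List.range j).map x).prod * y j
          * ((((List.range n).drop (j+1)).map x).prod)
        = -(τ' (b j) • (((List.range j).map x).prod * a j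
              * ((((List.range n).drop (j+1)).map x).prod))
          + τ' (a j) • (((List.range j).map x).prod * bc j
              * ((((List.range n).drop (j+1)).map x).prod))) := by
      rw [hy]
      simp only [neg_mul, mul_neg, mul_add, add_mul, smul_mul_assoc, mul_smul_comm]
    have hPa : τ (((List.range j).map x).prod * a j
        * ((((List.range n).drop (j+1)).map x).prod)) = 0 := by
      apply hker
      by_cases hj0 : j = 0
      · subst hj0
        simp only [List.range_zero, List.map_nil, List.prod_nil, one_mul]
        exact wmul_lprod a bc ha hbcB _ _ (cw_seed (ha 0))
      · exact wmul_lprod a bc ha hbcB _ _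
          (cw_mul_right_a (lprod_ne a bc ha hbcB _ (by simp [hj0])) (ha j))
    have hPbc : τ (((List.range j).map x).prod * bc j
        * ((((List.range n).drop (j+1)).map x).prod)) = 0 := by
      by_cases hj0 : j = 0
      · subst hj0
        simp only [List.range_zero, List.map_nil, List.prod_nil, one_mul]
        by_cases hn1 : n = 1
        · subst hn1
          have : (List.range 1).drop 1 = [] := by simp [List.range_succ]
          rw [this]
          simp only [List.map_nil, List.prod_nil, mul_one]
          exact hτbc 0
        · apply hker
          apply cw_mul_left_b (hbcB 0)
          apply lprod_ne a bc ha hbcB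
          have : ((List.range n).drop 1).length = n - 1 := by
            simp [List.length_drop, List.length_range]
          intro hcon
          rw [hcon] at this
          simp at this
          omega
      · apply hker
        exact wmul_lprod a bc ha hbcB _ _
          (cw_mul_right_b (lprod_ne a bc ha hbcB _ (by simp [hj0])) (hbcB j))
    rw [hsplit, map_neg, map_add, map_smul, map_smul, smul_eq_mul, smul_eq_mul,
      hPa, hPbc, mul_zero, mul_zero, add_zero, neg_zero]
  have hd0 : d 0 = 0 := by
    rw [hd]
    show τ (r 0) + shf (fun j => τ' (r j)) 0 = 0
    rw [hr0]
    have : ((List.range n).map x).prod ∈ cyclicWords A B :=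
      lprod_ne a bc ha hbcB _ (by simp; omega)
    rw [hker _ this]
    simp [shf]
  have hd1 : d 1 = 0 := poly_o (m := m' + 1) hO2 hd0
  have : τ (r 1) + τ' (r 0) = 0 := by
    have : d 1 = τ (r 1) + τ' (r 0) := rfl
    rw [← this, hd1]
  rw [hτr1, zero_add, hr0] at this
  exact this

end Main

section Main2
variable {C : Type*} [Ring C] [StarRing C] [Algebra ℂ C] [StarModule ℂ C]
  {A : NonUnitalStarSubalgebra ℂ C} {B : StarSubalgebra ℂ C}

lemma Zlem (τ τ' : C →ₗ[ℂ] ℂ)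
    (hτ'tr : ∀ u v : C, τ' (u * v) = τ' (v * u))
    (KF : ∀ (k : ℕ), 1 ≤ k → ∀ (a b : ℕ → C), (∀ i, a i ∈ A) → (∀ i, b i ∈ B) →
      τ' (((List.range k).map (fun i => a i * (b i - τ (b i) • 1))).prod) = 0) :
    ∀ (j k : ℕ), 1 ≤ k → ∀ (a b : ℕ → C), (∀ i, a i ∈ A) → (∀ i, b i ∈ B) →
      τ' ((((List.range k).map (fun i => a i * (b i - τ (b i) • 1))).prod) *
          (((List.range j).map (fun i => a (k + i) * b (k + i))).prod)) = 0 := by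
  intro j
  induction j with
  | zero =>
    intro k hk a b ha hb
    simpa using KF k hk a b ha hb
  | succ j ih =>
    intro k hk a b ha hb
    rw [List.range_succ_eq_map, List.map_cons, List.prod_cons, List.map_map]
    rw [show ((fun i => a (k + i) * b (k + i)) ∘ Nat.succ)
        = (fun i => a (k + 1 + i) * b (k + 1 + i)) from funext fun i => by
      simp only [Function.comp_apply]
      rw [show k + (i + 1) = k + 1 + i by omega]]
    rw [show a (k + 0) * b (k + 0) = a k * (b k - τ (b k) • 1) + τ (b k) • a k by
      rw [Nat.add_zero, mul_sub, mul_smul_comm, mul_one, sub_add_cancel]]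
    rw [add_mul, mul_add, map_add, smul_mul_assoc, mul_smul_comm, map_smul, smul_eq_mul]
    have hT1 : τ' ((((List.range k).map (fun i => a i * (b i - τ (b i) • 1))).prod) *
        ((a k * (b k - τ (b k) • 1)) *
          ((List.range j).map (fun i => a (k + 1 + i) * b (k + 1 + i))).prod)) = 0 := by
      rw [← mul_assoc]
      rw [show (((List.range k).map (fun i => a i * (b i - τ (b i) • 1))).prod)
            * (a k * (b k - τ (b k) • 1))
          = (((List.range (k+1)).map (fun i => a i * (b i - τ (b i) • 1))).prod) from by
        rw [List.range_succ, List.map_append, List.prod_append]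
        simp [mul_assoc]]
      exact ih (k+1) (by omega) a b ha hb
    have hT2 : τ' ((((List.range k).map (fun i => a i * (b i - τ (b i) • 1))).prod)
        * (a k * ((List.range j).map (fun i => a (k + 1 + i) * b (k + 1 + i))).prod)) = 0 := by
      cases j with
      | zero =>
        simp only [List.range_zero, List.map_nil, List.prod_nil, mul_one]
        rw [hτ'tr]
        obtain ⟨k'', rfl⟩ : ∃ k'', k = k'' + 1 := ⟨k - 1, by omega⟩
        rw [show a (k''+1) * ((List.range (k''+1)).map
              (fun i => a i * (b i - τ (b i) • 1))).prod
            = ((List.range (k''+1)).map (fun i =>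
                (if i = 0 then a (k''+1) * a 0 else a i) * (b i - τ (b i) • 1))).prod from by
          rw [List.range_succ_eq_map, List.map_cons, List.map_cons, List.prod_cons,
            List.prod_cons, List.map_map, List.map_map]
          rw [show ((fun i => (if i = 0 then a (k''+1) * a 0 else a i)
                * (b i - τ (b i) • 1)) ∘ Nat.succ)
              = ((fun i => a i * (b i - τ (b i) • 1)) ∘ Nat.succ) from funext fun i => by
            simp [Function.comp, Nat.succ_ne_zero]]
          simp [mul_assoc]]
        exact KF (k''+1) (by omega) _ b (fun i => by
          show (if i = 0 then a (k''+1) * a 0 else a i) ∈ A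
          split_ifs
          · exact A.mul_mem (ha _) (ha 0)
          · exact ha i) hb
      | succ j' =>
        rw [List.range_succ_eq_map, List.map_cons, List.prod_cons, List.map_map]
        rw [show ((fun i => a (k+1+i) * b (k+1+i)) ∘ Nat.succ)
            = (fun i => a (k+1+1+i) * b (k+1+1+i)) from funext fun i => by
          simp only [Function.comp_apply]
          rw [show k+1+(i+1) = k+1+1+i by omega]]
        have e3 : (((List.range k).map (fun i => a i * (b i - τ (b i) • 1))).prod)
            * (a k * ((a (k+1+0) * b (k+1+0)) *
              ((List.range j').map (fun i => a (k+1+1+i) * b (k+1+1+i))).prod))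
            = (((List.range k).map (fun i =>
                (if i < k then a i else if i = k then a k * a (k+1) else a (i+1))
                * ((if i < k then b i else b (i+1))
                  - τ (if i < k then b i else b (i+1)) • 1))).prod)
            * (((List.range (j'+1)).map (fun i =>
                (if k+i < k then a (k+i) else if k+i = k then a k * a (k+1) else a (k+i+1))
                * (if k+i < k then b (k+i) else b (k+i+1)))).prod) := by
          rw [List.map_congr_left (l := List.range k)
            (f := fun i =>
                (if i < k then a i else if i = k then a k * a (k+1) else a (i+1))
                * ((if i < k then b i else b (i+1))
                  - τ (if i < k then b i else b (i+1)) • 1))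
            (g := fun i => a i * (b i - τ (b i) • 1)) (fun i hi => by
              rw [List.mem_range] at hi
              show (if i < k then a i else if i = k then a k * a (k+1) else a (i+1))
                * ((if i < k then b i else b (i+1))
                  - τ (if i < k then b i else b (i+1)) • 1) = a i * (b i - τ (b i) • 1)
              rw [if_pos hi, if_pos hi])]
          rw [List.range_succ_eq_map (n := j'), List.map_cons, List.prod_cons, List.map_map]
          rw [show ((fun i =>
                (if k+i < k then a (k+i) else if k+i = k then a k * a (k+1) else a (k+i+1))
                * (if k+i < k then b (k+i) else b (k+i+1))) ∘ Nat.succ)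
              = (fun i => a (k+1+1+i) * b (k+1+1+i)) from funext fun i => by
            simp only [Function.comp_apply]
            rw [if_neg (by omega), if_neg (by omega), if_neg (by omega)]
            rw [show k + (i+1) + 1 = k+1+1+i by omega]]
          rw [if_neg (by omega : ¬ (k + 0 < k)), if_pos (by omega : k + 0 = k),
            if_neg (by omega : ¬ (k + 0 < k))]
          rw [show k + 0 + 1 = k + 1 + 0 by omega]
          simp [mul_assoc]
        rw [e3]
        exact ih k hk (fun i => if i < k then a i else if i = k then a k * a (k+1) else a (i+1))
          (fun i => if i < k then b i else b (i+1)) (fun i => by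
          show (if i < k then a i else if i = k then a k * a (k+1) else a (i+1)) ∈ A
          split_ifs
          · exact ha i
          · exact A.mul_mem (ha k) (ha (k+1))
          · exact ha (i+1)) (fun i => by
          show (if i < k then b i else b (i+1)) ∈ B
          split_ifs
          · exact hb i
          · exact hb (i+1))
    rw [hT1, hT2, mul_zero, add_zero]

end Main2

/-- Proposition 3.11 (converse direction): in an infinitesimal noncommutative probability
space `(C, τ', τ)` with the ideal generated by `A` over `B` contained in `ker τ`, if `A`
and `B` are infinitesimally free (alternating centered moments with respect to
`τ_t = τ + tτ'` are `o(t)`), then `(A, B)` is cyclically monotone with respect to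
`(τ', τ)`: `τ'(a_1 b_1 ⋯ a_n b_n) = τ'(a_1 ⋯ a_n) τ(b_1) ⋯ τ(b_n)`. -/
theorem cyclic_monotone_of_infinitesimally_free
    {C : Type*} [Ring C] [StarRing C] [Algebra ℂ C] [StarModule ℂ C]
    (A : NonUnitalStarSubalgebra ℂ C) (B : StarSubalgebra ℂ C)
    (τ τ' : C →ₗ[ℂ] ℂ)
    (hτ1 : τ 1 = 1) (hτ'1 : τ' 1 = 0)
    (hτtr : ∀ x y : C, τ (x * y) = τ (y * x))
    (hτ'tr : ∀ x y : C, τ' (x * y) = τ' (y * x))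
    (hker : ∀ w ∈ cyclicWords A B, τ w = 0)
    (hif : ∀ (n : ℕ), 1 ≤ n → ∀ (a b : ℕ → C), (∀ i, a i ∈ A) → (∀ i, b i ∈ B) →
      (fun t : ℝ =>
          τ (((List.range n).map (fun i =>
                (a i - algebraMap ℂ C (τ (a i) + (t : ℂ) * τ' (a i)))
                  * (b i - algebraMap ℂ C (τ (b i) + (t : ℂ) * τ' (b i))))).prod)
            + (t : ℂ) * τ' (((List.range n).map (fun i =>
                (a i - algebraMap ℂ C (τ (a i) + (t : ℂ) * τ' (a i)))
                  * (b i - algebraMap ℂ C (τ (b i) + (t : ℂ) * τ' (b i))))).prod))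
        =o[nhds (0 : ℝ)] (fun t : ℝ => t)) :
    ∀ (n : ℕ) (a b : ℕ → C), 1 ≤ n → (∀ i, a i ∈ A) → (∀ i, b i ∈ B) →
      τ' (((List.range n).map (fun i => a i * b i)).prod)
        = τ' (((List.range n).map a).prod) * ∏ i ∈ Finset.range n, τ (b i) := by
  have KF : ∀ (k : ℕ), 1 ≤ k → ∀ (a b : ℕ → C), (∀ i, a i ∈ A) → (∀ i, b i ∈ B) →
      τ' (((List.range k).map (fun i => a i * (b i - τ (b i) • 1))).prod) = 0 :=
    fun k hk a b ha hb => keyfact τ τ' hτ1 hker hif k hk a b ha hb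
  have Z := Zlem τ τ' hτ'tr KF
  suffices H : ∀ n : ℕ, 1 ≤ n → ∀ a b : ℕ → C, (∀ i, a i ∈ A) → (∀ i, b i ∈ B) →
      τ' (((List.range n).map (fun i => a i * b i)).prod)
        = τ' (((List.range n).map a).prod) * ∏ i ∈ Finset.range n, τ (b i) by
    exact fun n a b hn ha hb => H n hn a b ha hb
  intro n
  induction n with
  | zero => exact fun h => absurd h (by omega)
  | succ n ihn =>
    intro _ a b ha hb
    rcases Nat.eq_zero_or_pos n with hn0 | hn1
    · subst hn0
      have h0 : τ' (a 0 * (b 0 - τ (b 0) • 1)) = 0 := by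
        have := KF 1 le_rfl a b ha hb
        simpa [List.range_succ] using this
      simp only [List.range_succ, List.range_zero, List.nil_append, List.map_cons,
        List.map_nil, List.prod_cons, List.prod_nil, mul_one, Finset.range_one,
        Finset.prod_singleton]
      rw [show a 0 * b 0 = a 0 * (b 0 - τ (b 0) • 1) + τ (b 0) • a 0 by
        rw [mul_sub, mul_smul_comm, mul_one, sub_add_cancel]]
      rw [map_add, map_smul, smul_eq_mul, h0, zero_add, mul_comm]
      simp [Finset.prod_range_one]
    · rw [List.range_succ_eq_map, List.map_cons, List.prod_cons, List.map_map]
      rw [show ((fun i => a i * b i) ∘ Nat.succ) = (fun i => a (1+i) * b (1+i)) from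
        funext fun i => by
          simp only [Function.comp_apply, Nat.succ_eq_add_one]
          rw [Nat.add_comm i 1]]
      rw [show a 0 * b 0 = a 0 * (b 0 - τ (b 0) • 1) + τ (b 0) • a 0 by
        rw [mul_sub, mul_smul_comm, mul_one, sub_add_cancel]]
      rw [add_mul, map_add, smul_mul_assoc, map_smul, smul_eq_mul]
      have hZ : τ' ((a 0 * (b 0 - τ (b 0) • 1)) *
          ((List.range n).map (fun i => a (1+i) * b (1+i))).prod) = 0 := by
        have := Z n 1 le_rfl a b ha hb
        simpa [List.range_succ] using this
      rw [hZ, zero_add]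
      obtain ⟨n', rfl⟩ : ∃ n', n = n' + 1 := ⟨n - 1, by omega⟩
      rw [List.range_succ_eq_map (n := n'), List.map_cons, List.prod_cons, List.map_map]
      rw [show ((fun i => a (1+i) * b (1+i)) ∘ Nat.succ) = (fun i => a (i+2) * b (i+2)) from
        funext fun i => by
          simp only [Function.comp_apply, Nat.succ_eq_add_one]
          rw [show 1 + (i+1) = i + 2 by omega]]
      have e4 : a 0 * ((a (1+0) * b (1+0)) *
            ((List.range n').map (fun i => a (i+2) * b (i+2))).prod)
          = ((List.range (n'+1)).map (fun i =>
              (if i = 0 then a 0 * a 1 else a (i+1)) * b (i+1))).prod := by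
        rw [List.range_succ_eq_map (n := n'), List.map_cons, List.prod_cons, List.map_map]
        rw [show ((fun i => (if i = 0 then a 0 * a 1 else a (i+1)) * b (i+1)) ∘ Nat.succ)
            = (fun i => a (i+2) * b (i+2)) from funext fun i => by
          simp only [Function.comp_apply, Nat.succ_eq_add_one]
          rw [if_neg (by omega : ¬ (i + 1 = 0)), show i+1+1 = i+2 by omega]]
        rw [if_pos rfl]
        rw [show (1:ℕ) + 0 = 0 + 1 by omega]
        simp [mul_assoc]
      rw [e4]
      rw [ihn (by omega) (fun i => if i = 0 then a 0 * a 1 else a (i+1)) (fun i => b (i+1))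
        (fun i => by
          show (if i = 0 then a 0 * a 1 else a (i+1)) ∈ A
          split_ifs
          · exact A.mul_mem (ha 0) (ha 1)
          · exact ha (i+1)) (fun i => hb (i+1))]
      have ePa : ((List.range (n'+1)).map
            (fun i => if i = 0 then a 0 * a 1 else a (i+1))).prod
          = ((List.range (n'+1+1)).map a).prod := by
        rw [List.range_succ_eq_map (n := n'+1), List.map_cons, List.prod_cons, List.map_map]
        rw [List.range_succ_eq_map (n := n')]
        rw [List.map_cons, List.prod_cons, List.map_map, List.map_cons, List.prod_cons,
          List.map_map]
        rw [show ((fun i => if i = 0 then a 0 * a 1 else a (i+1)) ∘ Nat.succ)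
            = ((a ∘ Nat.succ) ∘ Nat.succ) from funext fun i => by
          simp only [Function.comp_apply, Nat.succ_eq_add_one]
          rw [if_neg (by omega : ¬ (i + 1 = 0))]]
        rw [if_pos rfl]
        simp [mul_assoc]
      have ecollapse : (0 :: List.map Nat.succ (0 :: List.map Nat.succ (List.range n')))
          = List.range (n'+1+1) := by
        rw [← List.range_succ_eq_map, ← List.range_succ_eq_map]
      rw [ecollapse, ePa]
      rw [Finset.prod_range_succ' (fun i => τ (b i)) (n'+1)]
      ring
end

section
/- For n even, the number of noncrossing partitions π of {1,…,n} into singletons and pair blocks, where each singleton has depth 0 or 1 and each pair block has depth 0, with exactly m pair blocks and exactly ℓ inner singletons (singletons of depth 1), equals C(ℓ+m-1, m-1) · C(n-m-ℓ, m), for 0 ≤ m ≤ n/2 and 0 ≤ ℓ ≤ n - 2m (interpreted as 1 when m = ℓ = 0 and 0 when m = 0, ℓ > 0). -/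
open Finset

/-- The set of pair-block configurations, over `ℕ × ℕ`, bounded by `n`. -/
def NCF (n m ℓ : ℕ) : Finset (Finset (ℕ × ℕ)) :=
  ((Finset.range n ×ˢ Finset.range n).powerset).filter
    (fun P => (∀ p ∈ P, p.1 < p.2) ∧
      (∀ p ∈ P, ∀ q ∈ P, p ≠ q → p.2 < q.1 ∨ q.2 < p.1) ∧
      P.card = m ∧ (∑ p ∈ P, (p.2 - p.1 - 1)) = ℓ)

lemma mem_NCF {n m ℓ : ℕ} {P : Finset (ℕ × ℕ)} :
    P ∈ NCF n m ℓ ↔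
      (∀ p ∈ P, p.1 < p.2) ∧ (∀ p ∈ P, p.2 < n) ∧
      (∀ p ∈ P, ∀ q ∈ P, p ≠ q → p.2 < q.1 ∨ q.2 < p.1) ∧
      P.card = m ∧ (∑ p ∈ P, (p.2 - p.1 - 1)) = ℓ := by
  simp only [NCF, mem_filter, mem_powerset]
  constructor
  · rintro ⟨hsub, h1, h2, h3, h4⟩
    refine ⟨h1, fun p hp => ?_, h2, h3, h4⟩
    have := hsub hp
    simp only [mem_product, mem_range] at this
    exact this.2
  · rintro ⟨h1, hb, h2, h3, h4⟩
    refine ⟨fun p hp => ?_, h1, h2, h3, h4⟩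
    simp only [mem_product, mem_range]
    exact ⟨lt_trans (h1 p hp) (hb p hp), hb p hp⟩

/-- The closed-form formula. -/
def ncFormula (n m ℓ : ℕ) : ℕ :=
  if m = 0 then (if ℓ = 0 then 1 else 0)
  else Nat.choose (ℓ + m - 1) (m - 1) * Nat.choose (n - m - ℓ) m

lemma card_NCF_zero (m ℓ : ℕ) : (NCF 0 m ℓ).card = ncFormula 0 m ℓ := by
  have hempty : ∀ P ∈ NCF 0 m ℓ, P = (∅ : Finset (ℕ × ℕ)) := by
    intro P hP
    rw [mem_NCF] at hP
    ext p
    simp only [Finset.notMem_empty, iff_false]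
    intro hp
    exact absurd (hP.2.1 p hp) (Nat.not_lt_zero _)
  by_cases hm : m = 0
  · by_cases hl : ℓ = 0
    · subst hm; subst hl
      have : NCF 0 0 0 = {∅} := by
        ext P
        simp only [Finset.mem_singleton]
        constructor
        · exact hempty P
        · rintro rfl
          rw [mem_NCF]
          simp
      rw [this]
      simp [ncFormula]
    · have : NCF 0 m ℓ = ∅ := by
        ext P
        simp only [Finset.notMem_empty, iff_false]
        intro hP
        have hP' := hP
        rw [mem_NCF] at hP'
        have := hempty P hP
        subst this
        simp at hP'
        omega
      rw [this]
      simp [ncFormula, hm, hl]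
  · have : NCF 0 m ℓ = ∅ := by
      ext P
      simp only [Finset.notMem_empty, iff_false]
      intro hP
      have hP' := hP
      rw [mem_NCF] at hP'
      have := hempty P hP
      subst this
      simp at hP'
      omega
    rw [this]
    have : (0 : ℕ) - m - ℓ = 0 := by omega
    simp [ncFormula, hm, this, Nat.choose_eq_zero_of_lt (Nat.pos_of_ne_zero hm)]

/-- Splitting according to whether some pair ends at the top point `n`. -/
lemma card_NCF_succ (n m ℓ : ℕ) :
    (NCF (n+1) m ℓ).card = (NCF n m ℓ).card +
      ∑ i ∈ range n, ((NCF (n+1) m ℓ).filter (fun P => (i, n) ∈ P)).card := by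
  classical
  have key := Finset.card_filter_add_card_filter_not
    (s := NCF (n+1) m ℓ) (p := fun P => ∀ p ∈ P, p.2 ≠ n)
  have h1 : (NCF (n+1) m ℓ).filter (fun P => ∀ p ∈ P, p.2 ≠ n) = NCF n m ℓ := by
    ext P
    simp only [mem_filter, mem_NCF]
    constructor
    · rintro ⟨⟨a, b, c, d, e⟩, hne⟩
      refine ⟨a, fun p hp => ?_, c, d, e⟩
      have := b p hp
      have := hne p hp
      omega
    · rintro ⟨a, b, c, d, e⟩
      exact ⟨⟨a, fun p hp => lt_trans (b p hp) (Nat.lt_succ_self n), c, d, e⟩,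
        fun p hp => by have := b p hp; omega⟩
  have h2 : (NCF (n+1) m ℓ).filter (fun P => ¬ ∀ p ∈ P, p.2 ≠ n) =
      (range n).biUnion (fun i => (NCF (n+1) m ℓ).filter (fun P => (i, n) ∈ P)) := by
    ext P
    simp only [mem_filter, Finset.mem_biUnion, mem_range]
    constructor
    · rintro ⟨hP, hne⟩
      push_neg at hne
      obtain ⟨p, hp, hp2⟩ := hne
      have hP' := hP
      rw [mem_NCF] at hP'
      have h12 := hP'.1 p hp
      refine ⟨p.1, by omega, hP, ?_⟩
      have : p = (p.1, n) := by
        cases p; simp at hp2 ⊢; omega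
      rwa [this] at hp
    · rintro ⟨i, hi, hP, hmem⟩
      refine ⟨hP, ?_⟩
      push_neg
      exact ⟨(i, n), hmem, rfl⟩
  have hdisj : ∀ i ∈ range n, ∀ j ∈ range n, i ≠ j →
      Disjoint ((NCF (n+1) m ℓ).filter (fun P => (i, n) ∈ P))
        ((NCF (n+1) m ℓ).filter (fun P => (j, n) ∈ P)) := by
    intro i hi j hj hij
    rw [Finset.disjoint_left]
    intro P hPi hPj
    simp only [mem_filter] at hPi hPj
    have hP := hPi.1
    rw [mem_NCF] at hP
    have hne : ((i, n) : ℕ × ℕ) ≠ (j, n) := by simp [hij]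
    have := hP.2.2.1 (i, n) hPi.2 (j, n) hPj.2 hne
    simp only [mem_range] at hi hj
    simp at this
    omega
  rw [← key, h1, h2, Finset.card_biUnion hdisj]

/-- The cardinality of a slice: configurations in `NCF (n+1) m ℓ` containing the pair
`(i, n)`. -/
lemma card_slice (n m ℓ i : ℕ) (hi : i < n) :
    ((NCF (n+1) m ℓ).filter (fun P => (i, n) ∈ P)).card =
      if m ≠ 0 ∧ n - i - 1 ≤ ℓ then (NCF i (m-1) (ℓ - (n - i - 1))).card else 0 := by
  classical
  split_ifs with hc
  · obtain ⟨hm, hg⟩ := hc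
    refine Finset.card_bij' (fun P _ => P.erase (i, n)) (fun Q _ => insert (i, n) Q)
      ?_ ?_ ?_ ?_
    · -- maps into target
      intro P hP
      simp only [mem_filter] at hP
      obtain ⟨hP, hmem⟩ := hP
      rw [mem_NCF] at hP
      obtain ⟨h1, h2, h3, h4, h5⟩ := hP
      have hbound : ∀ p ∈ P.erase (i, n), p.2 < i := by
        intro p hp
        rw [Finset.mem_erase] at hp
        obtain ⟨hne, hpP⟩ := hp
        have := h3 p hpP (i, n) hmem hne
        have hpl := h1 p hpP
        have hpb := h2 p hpP
        simp at this
        omega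
      rw [mem_NCF]
      refine ⟨fun p hp => h1 p (Finset.mem_erase.1 hp).2, hbound,
        fun p hp q hq hpq => h3 p (Finset.mem_erase.1 hp).2 q (Finset.mem_erase.1 hq).2 hpq,
        ?_, ?_⟩
      · rw [Finset.card_erase_of_mem hmem, h4]
      · have hsum : (∑ p ∈ P.erase (i, n), (p.2 - p.1 - 1)) + (n - i - 1)
            = ∑ p ∈ P, (p.2 - p.1 - 1) := Finset.sum_erase_add P _ hmem
        show (∑ p ∈ P.erase (i, n), (p.2 - p.1 - 1)) = ℓ - (n - i - 1)
        omega
    · -- inverse maps into source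
      intro Q hQ
      rw [mem_NCF] at hQ
      obtain ⟨h1, h2, h3, h4, h5⟩ := hQ
      have hnotmem : ((i, n) : ℕ × ℕ) ∉ Q := by
        intro h
        have hlt : n < i := h2 _ h
        omega
      simp only [mem_filter]
      constructor
      · rw [mem_NCF]
        refine ⟨?_, ?_, ?_, ?_, ?_⟩
        · intro p hp
          rcases Finset.mem_insert.1 hp with rfl | hp'
          · simpa using hi
          · exact h1 p hp'
        · intro p hp
          rcases Finset.mem_insert.1 hp with rfl | hp'
          · simp
          · have := h2 p hp'
            omega
        · intro p hp q hq hpq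
          rcases Finset.mem_insert.1 hp with rfl | hp' <;>
            rcases Finset.mem_insert.1 hq with rfl | hq'
          · exact absurd rfl hpq
          · right
            exact h2 q hq'
          · left
            exact h2 p hp'
          · exact h3 p hp' q hq' hpq
        · rw [Finset.card_insert_of_notMem hnotmem, h4]
          omega
        · have hsum : (∑ p ∈ insert (i, n) Q, (p.2 - p.1 - 1))
              = (n - i - 1) + ∑ p ∈ Q, (p.2 - p.1 - 1) := Finset.sum_insert hnotmem
          show (∑ p ∈ insert (i, n) Q, (p.2 - p.1 - 1)) = ℓ
          omega
      · exact Finset.mem_insert_self _ _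
    · intro P hP
      simp only [mem_filter] at hP
      exact Finset.insert_erase hP.2
    · intro Q hQ
      rw [mem_NCF] at hQ
      have hnotmem : ((i, n) : ℕ × ℕ) ∉ Q := by
        intro h
        have hlt : n < i := hQ.2.1 _ h
        omega
      exact Finset.erase_insert hnotmem
  · -- slice is empty
    rw [Finset.card_eq_zero]
    ext P
    simp only [mem_filter, Finset.notMem_empty, iff_false, not_and]
    intro hP hmem
    rw [mem_NCF] at hP
    obtain ⟨h1, h2, h3, h4, h5⟩ := hP
    apply hc
    constructor
    · intro hm0
      rw [hm0] at h4
      rw [Finset.card_eq_zero] at h4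
      rw [h4] at hmem
      simp at hmem
    · have : (n : ℕ) - i - 1 ≤ ∑ p ∈ P, (p.2 - p.1 - 1) := by
        have := Finset.single_le_sum (f := fun p : ℕ × ℕ => p.2 - p.1 - 1)
          (fun x _ => Nat.zero_le _) hmem
        simpa using this
      omega

/-- Hockey-stick identity. -/
lemma hockey (K : ℕ) : ∀ L : ℕ, ∑ j ∈ range (L+1), (j + K).choose K = (L + K + 1).choose (K+1) := by
  intro L
  induction L with
  | zero => simp
  | succ L ih =>
    rw [Finset.sum_range_succ, ih]
    have e2 : L + 1 + K = L + K + 1 := by ring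
    rw [e2, Nat.choose_succ_succ' (L + K + 1) K]
    omega

/-- The recursion satisfied by the closed-form formula. -/
lemma formula_rec (n m ℓ : ℕ) :
    ncFormula (n+1) m ℓ = ncFormula n m ℓ +
      ∑ i ∈ range n, (if m ≠ 0 ∧ n - i - 1 ≤ ℓ then ncFormula i (m-1) (ℓ - (n - i - 1)) else 0) := by
  by_cases hm : m = 0
  · subst hm
    simp [ncFormula]
  by_cases hM : m = 1
  · subst hM
    have hterm : ∀ i ∈ range n,
        (if 1 ≠ 0 ∧ n - i - 1 ≤ ℓ then ncFormula i (1-1) (ℓ - (n - i - 1)) else 0)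
          = if i = n - 1 - ℓ ∧ ℓ < n then (1:ℕ) else 0 := by
      intro i hi
      simp only [mem_range] at hi
      simp only [ncFormula]
      split_ifs <;> omega
    rw [Finset.sum_congr rfl hterm]
    have hs : ∑ i ∈ range n, (if i = n - 1 - ℓ ∧ ℓ < n then (1:ℕ) else 0)
        = if ℓ < n then 1 else 0 := by
      by_cases hln : ℓ < n
      · rw [if_pos hln]
        have h2 : ∀ i ∈ range n, (if i = n - 1 - ℓ ∧ ℓ < n then (1:ℕ) else 0)
            = if i = n - 1 - ℓ then (1:ℕ) else 0 := by
          intro i hi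
          simp [hln]
        rw [Finset.sum_congr rfl h2,
          Finset.sum_ite_eq' (range n) (n - 1 - ℓ) (fun _ => (1:ℕ)),
          if_pos (mem_range.2 (by omega))]
      · rw [if_neg hln]
        refine Finset.sum_eq_zero fun i hi => ?_
        simp [hln]
    rw [hs]
    have e : ∀ k : ℕ, ncFormula k 1 ℓ = k - 1 - ℓ := by
      intro k
      simp [ncFormula, Nat.choose_one_right]
    rw [e, e]
    split_ifs <;> omega
  obtain ⟨K, rfl⟩ : ∃ K, m = K + 1 + 1 := ⟨m - 2, by omega⟩
  have hterm : ∀ i ∈ range n,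
      (if K + 1 + 1 ≠ 0 ∧ n - i - 1 ≤ ℓ then ncFormula i (K + 1 + 1 - 1) (ℓ - (n - i - 1)) else 0)
        = if n - 1 - ℓ ≤ i then
            (ℓ - (n - i - 1) + K).choose K * (n - 1 - ℓ - (K + 1)).choose (K + 1) else 0 := by
    intro i hi
    simp only [mem_range] at hi
    by_cases h : n - i - 1 ≤ ℓ
    · rw [if_pos ⟨by omega, h⟩, if_pos (show n - 1 - ℓ ≤ i by omega)]
      simp only [ncFormula]
      rw [if_neg (show ¬ (K + 1 + 1 - 1 = 0) by omega)]
      congr 1 <;> (congr 1 <;> omega)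
    · rw [if_neg (by omega), if_neg (by omega)]
  rw [Finset.sum_congr rfl hterm, ← Finset.sum_filter]
  have hfilter : (range n).filter (fun i => n - 1 - ℓ ≤ i) = Finset.Ico (n - 1 - ℓ) n := by
    ext i
    simp only [mem_filter, mem_range, Finset.mem_Ico]
    omega
  rw [hfilter, Finset.sum_Ico_eq_sum_range]
  have hne : ¬ (K + 1 + 1 = 0) := by omega
  by_cases hln : ℓ < n
  · rw [show n - (n - 1 - ℓ) = ℓ + 1 from by omega]
    have hterm2 : ∀ j ∈ range (ℓ + 1),
        (ℓ - (n - (n - 1 - ℓ + j) - 1) + K).choose K * (n - 1 - ℓ - (K + 1)).choose (K + 1)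
          = (j + K).choose K * (n - 1 - ℓ - (K + 1)).choose (K + 1) := by
      intro j hj
      simp only [mem_range] at hj
      congr 3
      omega
    rw [Finset.sum_congr rfl hterm2, ← Finset.sum_mul, hockey K ℓ]
    simp only [ncFormula, if_neg hne]
    rw [show ℓ + (K + 1 + 1) - 1 = ℓ + K + 1 from by omega,
      show K + 1 + 1 - 1 = K + 1 from by omega]
    have hp : (n + 1 - (K + 1 + 1) - ℓ).choose (K + 1 + 1)
        = (n - (K + 1 + 1) - ℓ).choose (K + 1 + 1) + (n - 1 - ℓ - (K + 1)).choose (K + 1) := by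
      rcases Nat.lt_or_ge n (K + 1 + 1 + ℓ) with h | h
      · rw [show n + 1 - (K + 1 + 1) - ℓ = 0 from by omega,
          show n - (K + 1 + 1) - ℓ = 0 from by omega,
          show n - 1 - ℓ - (K + 1) = 0 from by omega,
          Nat.choose_eq_zero_of_lt (show 0 < K + 1 + 1 from by omega),
          Nat.choose_eq_zero_of_lt (show 0 < K + 1 from by omega)]
      · rw [show n + 1 - (K + 1 + 1) - ℓ = (n - (K + 1 + 1) - ℓ) + 1 from by omega,
          show n - 1 - ℓ - (K + 1) = n - (K + 1 + 1) - ℓ from by omega,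
          Nat.choose_succ_succ' (n - (K + 1 + 1) - ℓ) (K + 1)]
        omega
    rw [hp, Nat.mul_add]
  · have hz : ∀ j ∈ range (n - (n - 1 - ℓ)),
        (ℓ - (n - (n - 1 - ℓ + j) - 1) + K).choose K * (n - 1 - ℓ - (K + 1)).choose (K + 1) = 0 := by
      intro j hj
      rw [show n - 1 - ℓ - (K + 1) = 0 from by omega,
        Nat.choose_eq_zero_of_lt (show 0 < K + 1 from by omega), Nat.mul_zero]
    rw [Finset.sum_congr rfl hz, Finset.sum_const_zero]
    simp only [ncFormula, if_neg hne]
    rw [show n + 1 - (K + 1 + 1) - ℓ = 0 from by omega,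
      show n - (K + 1 + 1) - ℓ = 0 from by omega,
      Nat.choose_eq_zero_of_lt (show 0 < K + 1 + 1 by omega)]
    omega

/-- Main count. -/
lemma card_NCF : ∀ n m ℓ : ℕ, (NCF n m ℓ).card = ncFormula n m ℓ := by
  intro n
  induction n using Nat.strong_induction_on with
  | _ n IH =>
    match n with
    | 0 => exact card_NCF_zero
    | Nat.succ n =>
      intro m ℓ
      rw [card_NCF_succ]
      have hterm : ∀ i ∈ range n, ((NCF (n+1) m ℓ).filter (fun P => (i, n) ∈ P)).card
          = if m ≠ 0 ∧ n - i - 1 ≤ ℓ then ncFormula i (m-1) (ℓ - (n - i - 1)) else 0 := by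
        intro i hi
        simp only [mem_range] at hi
        rw [card_slice n m ℓ i hi]
        split_ifs with h
        · exact IH i (by omega) _ _
        · rfl
      rw [Finset.sum_congr rfl hterm, IH n (by omega), ← formula_rec]

/-- Embedding of `Fin n × Fin n` into `ℕ × ℕ`. -/
def pairEmb (n : ℕ) : Fin n × Fin n ↪ ℕ × ℕ :=
  ⟨fun p => (p.1.1, p.2.1), by
    rintro ⟨a1, a2⟩ ⟨b1, b2⟩ h
    simp only [Prod.mk.injEq] at h ⊢
    exact ⟨Fin.ext h.1, Fin.ext h.2⟩⟩

/-- A partition in `NC_{1,2;1}(n)` (noncrossing, blocks singletons or pairs, singletons of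
depth ≤ 1, pairs of depth 0) is determined by its set of pair blocks `{i,j}` (`i < j`),
whose intervals `[i,j]` are pairwise disjoint; all remaining points are singletons, and
the inner singletons are the points strictly inside some pair. For `n` even,
`0 ≤ m ≤ n/2` and `0 ≤ ℓ ≤ n - 2m`, the number of such partitions with exactly `m` pair
blocks and exactly `ℓ` inner singletons is `C(ℓ+m-1, m-1) · C(n-m-ℓ, m)`, interpreted as
`1` when `m = ℓ = 0` and `0` when `m = 0, ℓ > 0`. -/
theorem count_NC121_pairs_innerSingletons (n m ℓ : ℕ) (hn : Even n)
    (hm : m ≤ n / 2) (hℓ : ℓ ≤ n - 2 * m) :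
    Set.ncard {P : Finset (Fin n × Fin n) |
        (∀ p ∈ P, p.1 < p.2) ∧
        (∀ p ∈ P, ∀ q ∈ P, p ≠ q → p.2 < q.1 ∨ q.2 < p.1) ∧
        P.card = m ∧
        (∑ p ∈ P, ((p.2 : ℕ) - (p.1 : ℕ) - 1)) = ℓ}
      = if m = 0 then (if ℓ = 0 then 1 else 0)
        else Nat.choose (ℓ + m - 1) (m - 1) * Nat.choose (n - m - ℓ) m := by
  classical
  set S : Set (Finset (Fin n × Fin n)) := {P : Finset (Fin n × Fin n) |
        (∀ p ∈ P, p.1 < p.2) ∧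
        (∀ p ∈ P, ∀ q ∈ P, p ≠ q → p.2 < q.1 ∨ q.2 < p.1) ∧
        P.card = m ∧
        (∑ p ∈ P, ((p.2 : ℕ) - (p.1 : ℕ) - 1)) = ℓ} with hS
  have hinj : Function.Injective (fun P : Finset (Fin n × Fin n) => P.map (pairEmb n)) :=
    fun P Q h => Finset.map_injective (pairEmb n) h
  have himage : (fun P : Finset (Fin n × Fin n) => P.map (pairEmb n)) '' S
      = ↑(NCF n m ℓ) := by
    ext Q
    simp only [Set.mem_image, hS, Set.mem_setOf_eq, Finset.mem_coe, mem_NCF]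
    constructor
    · rintro ⟨P, ⟨h1, h3, h4, h5⟩, rfl⟩
      refine ⟨?_, ?_, ?_, ?_, ?_⟩
      · intro q hq
        rw [Finset.mem_map] at hq
        obtain ⟨p, hp, rfl⟩ := hq
        exact h1 p hp
      · intro q hq
        rw [Finset.mem_map] at hq
        obtain ⟨p, hp, rfl⟩ := hq
        exact p.2.isLt
      · intro q hq q' hq' hne
        rw [Finset.mem_map] at hq hq'
        obtain ⟨p, hp, rfl⟩ := hq
        obtain ⟨p', hp', rfl⟩ := hq'
        exact h3 p hp p' hp' (fun h => hne (by rw [h]))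
      · rw [Finset.card_map]
        exact h4
      · rw [Finset.sum_map]
        exact h5
    · rintro ⟨h1, h2, h3, h4, h5⟩
      have hemb : Function.Injective (fun q : {x // x ∈ Q} =>
          (((⟨q.1.1, lt_trans (h1 q.1 q.2) (h2 q.1 q.2)⟩ : Fin n),
           (⟨q.1.2, h2 q.1 q.2⟩ : Fin n)) : Fin n × Fin n)) := by
        rintro ⟨⟨a1, a2⟩, ha⟩ ⟨⟨b1, b2⟩, hb⟩ h
        simp only [Prod.mk.injEq, Fin.mk.injEq] at h
        simp only [Subtype.mk.injEq, Prod.mk.injEq]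
        exact ⟨h.1, h.2⟩
      refine ⟨Q.attach.map ⟨_, hemb⟩, ⟨?_, ?_, ?_, ?_⟩, ?_⟩
      · intro p hp
        rw [Finset.mem_map] at hp
        obtain ⟨q, _, rfl⟩ := hp
        exact h1 q.1 q.2
      · intro p hp p' hp' hne
        rw [Finset.mem_map] at hp hp'
        obtain ⟨q, _, rfl⟩ := hp
        obtain ⟨q', _, rfl⟩ := hp'
        refine h3 q.1 q.2 q'.1 q'.2 (fun h => hne ?_)
        have : q = q' := Subtype.ext h
        rw [this]
      · rw [Finset.card_map, Finset.card_attach]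
        exact h4
      · rw [Finset.sum_map]
        exact (Finset.sum_attach Q fun p => p.2 - p.1 - 1).trans h5
      · ext x
        constructor
        · intro hx
          rw [Finset.mem_map] at hx
          obtain ⟨p, hp, rfl⟩ := hx
          rw [Finset.mem_map] at hp
          obtain ⟨q, _, rfl⟩ := hp
          exact q.2
        · intro hx
          rw [Finset.mem_map]
          refine ⟨((⟨x.1, lt_trans (h1 x hx) (h2 x hx)⟩ : Fin n),
            (⟨x.2, h2 x hx⟩ : Fin n)), ?_, rfl⟩
          rw [Finset.mem_map]
          exact ⟨⟨x, hx⟩, Finset.mem_attach _ _, rfl⟩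
  have hcalc : S.ncard = ((fun P : Finset (Fin n × Fin n) => P.map (pairEmb n)) '' S).ncard :=
    (Set.ncard_image_of_injective _ hinj).symm
  rw [hcalc, himage, Set.ncard_coe_finset, card_NCF]
  rfl
end

section
/- The number of noncrossing partitions of {1,…,n} into singletons and pair blocks, with each singleton of depth 0 or 1 and each pair block of depth 0, having exactly m pair blocks, is C(n, 2m), for 0 ≤ m ≤ ⌊n/2⌋. Consequently, ∑_{π ∈ NC_{1,2;1}(n)} α^{2·#pairs(π)} = ((1+α)^n + (1-α)^n)/2 for any real α. -/
/-!
The pair blocks of a partition in `NC_{1,2;1}(n)` are arcs `i < j` with pairwise disjoint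
intervals `[i, j]`, so consecutive endpoints are alternately left and right ends. Hence the
partition is determined by the set of its `2m` endpoints, and every subset of even size arises,
by pairing its elements consecutively in increasing order. This gives `C(n, 2m)` partitions
with `m` pairs, and the generating sum becomes `∑ α ^ |S|` over the even subsets `S`, which is
the even part of the binomial expansion of `(1 + α) ^ n`.
-/

open scoped Classical

namespace NC121

open Finset

lemma two_mul_sum_powerset_filter_even_card_pow {κ R : Type*} [CommRing R] (s : Finset κ)
    (x : R) : 2 * ∑ t ∈ s.powerset with Even #t, x ^ #t = (1 + x) ^ #s + (1 - x) ^ #s := by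
  have binomial (y : R) : (1 + y) ^ #s = ∑ t ∈ s.powerset, y ^ #t := by
    rw [add_comm, ← sum_pow_mul_eq_add_pow]
    simp
  rw [sub_eq_add_neg, binomial, binomial, ← sum_add_distrib, sum_filter, mul_sum]
  refine sum_congr rfl fun t _ => ?_
  rcases Nat.even_or_odd #t with h | h
  · rw [if_pos h, h.neg_pow, two_mul]
  · rw [if_neg (Nat.not_even_iff_odd.2 h), h.neg_pow, mul_zero, add_neg_cancel]

variable {ι : Type*} [LinearOrder ι]

def endpoints (P : Finset (ι × ι)) : Finset ι := P.biUnion fun p => {p.1, p.2}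

/-- A partition in `NC_{1,2;1}` is encoded by its set of pair blocks `(i, j)` with `i < j`:
pairs of depth 0 and singletons of depth at most 1 mean exactly that the intervals `[i, j]`
are pairwise disjoint. -/
def IsNC121 (P : Finset (ι × ι)) : Prop :=
  (∀ p ∈ P, p.1 < p.2) ∧ (∀ p ∈ P, ∀ q ∈ P, p ≠ q → p.2 < q.1 ∨ q.2 < p.1)

variable {P : Finset (ι × ι)}

lemma mem_endpoints {s : ι} : s ∈ endpoints P ↔ ∃ p ∈ P, s = p.1 ∨ s = p.2 := by
  simp [endpoints]

namespace IsNC121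

lemma mono {Q : Finset (ι × ι)} (hQ : IsNC121 Q) (hPQ : P ⊆ Q) : IsNC121 P :=
  ⟨fun p hp => hQ.1 p (hPQ hp), fun p hp q hq hpq => hQ.2 p (hPQ hp) q (hPQ hq) hpq⟩

lemma fst_le_and_le_snd (hP : IsNC121 P) {p : ι × ι} (hp : p ∈ P) {s : ι}
    (hs : s = p.1 ∨ s = p.2) : p.1 ≤ s ∧ s ≤ p.2 := by
  have := hP.1 p hp
  rcases hs with rfl | rfl <;> constructor <;> order

lemma card_endpoints (hP : IsNC121 P) : #(endpoints P) = 2 * #P := by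
  rw [endpoints, card_biUnion, sum_congr rfl fun p hp => card_pair (hP.1 p hp).ne, sum_const,
    smul_eq_mul, mul_comm]
  intro p hp q hq hpq
  rw [Function.onFun, disjoint_left]
  intro s hsp hsq
  simp only [mem_insert, mem_singleton] at hsp hsq
  have := hP.fst_le_and_le_snd hp hsp
  have := hP.fst_le_and_le_snd hq hsq
  rcases hP.2 p hp q hq hpq with h | h <;> order

lemma notMem_endpoints_of_mem_Ioo (hP : IsNC121 P) {p : ι × ι} (hp : p ∈ P) {s : ι}
    (hs : s ∈ Set.Ioo p.1 p.2) : s ∉ endpoints P := by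
  obtain ⟨hs1, hs2⟩ := hs
  rw [mem_endpoints]
  rintro ⟨q, hq, hsq⟩
  have := hP.fst_le_and_le_snd hq hsq
  by_cases hqp : q = p
  · subst hqp
    rcases hsq with rfl | rfl <;> order
  · rcases hP.2 q hq p hp hqp with h | h <;> order

lemma filter_endpoints_lt_fst (hP : IsNC121 P) {p : ι × ι} (hp : p ∈ P) :
    (endpoints P).filter (· < p.1) = endpoints (P.filter fun q => q.2 < p.1) := by
  ext s
  simp only [mem_filter, mem_endpoints]
  constructor
  · rintro ⟨⟨q, hq, hsq⟩, hs⟩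
    have := hP.fst_le_and_le_snd hq hsq
    have hqp : q ≠ p := by rintro rfl; order
    refine ⟨q, ⟨hq, ?_⟩, hsq⟩
    have := hP.1 p hp
    rcases hP.2 q hq p hp hqp with h | h <;> order
  · rintro ⟨q, ⟨hq, hq2⟩, hsq⟩
    have := hP.fst_le_and_le_snd hq hsq
    exact ⟨⟨q, hq, hsq⟩, by order⟩

lemma even_card_filter_endpoints_lt_fst (hP : IsNC121 P) {p : ι × ι} (hp : p ∈ P) :
    Even #((endpoints P).filter (· < p.1)) := by
  rw [hP.filter_endpoints_lt_fst hp, (hP.mono (filter_subset _ _)).card_endpoints]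
  exact even_two_mul _

lemma filter_endpoints_lt_snd (hP : IsNC121 P) {p : ι × ι} (hp : p ∈ P) :
    (endpoints P).filter (· < p.2) = insert p.1 ((endpoints P).filter (· < p.1)) := by
  have hp12 := hP.1 p hp
  ext s
  simp only [mem_filter, mem_insert]
  constructor
  · rintro ⟨hs, hsp⟩
    rcases lt_trichotomy s p.1 with h | rfl | h
    · exact Or.inr ⟨hs, h⟩
    · exact Or.inl rfl
    · exact absurd hs (hP.notMem_endpoints_of_mem_Ioo hp ⟨h, hsp⟩)
  · rintro (rfl | ⟨hs, hsp⟩)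
    · exact ⟨mem_endpoints.2 ⟨p, hp, Or.inl rfl⟩, hp12⟩
    · exact ⟨hs, hsp.trans hp12⟩

lemma odd_card_filter_endpoints_lt_snd (hP : IsNC121 P) {p : ι × ι} (hp : p ∈ P) :
    Odd #((endpoints P).filter (· < p.2)) := by
  rw [hP.filter_endpoints_lt_snd hp, card_insert_of_notMem (by simp)]
  exact (hP.even_card_filter_endpoints_lt_fst hp).add_one

/-- The parity of the number of endpoints below an endpoint tells a left end from a right one,
so a pairing is recovered from its endpoints. -/
lemma mem_iff (hP : IsNC121 P) {i j : ι} :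
    (i, j) ∈ P ↔ i ∈ endpoints P ∧ j ∈ endpoints P ∧ i < j ∧
      (∀ s ∈ endpoints P, s ∉ Set.Ioo i j) ∧ Even #((endpoints P).filter (· < i)) := by
  constructor
  · intro hij
    exact ⟨mem_endpoints.2 ⟨(i, j), hij, Or.inl rfl⟩, mem_endpoints.2 ⟨(i, j), hij, Or.inr rfl⟩,
      hP.1 _ hij, fun s hs h => hP.notMem_endpoints_of_mem_Ioo hij h hs,
      hP.even_card_filter_endpoints_lt_fst hij⟩
  rintro ⟨hi, hj, hij, hgap, heven⟩
  obtain ⟨q, hq, rfl | rfl⟩ := mem_endpoints.1 hi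
  · suffices q.2 = j by rwa [← this]
    rcases lt_trichotomy q.2 j with h | h | h
    · exact absurd ⟨hP.1 q hq, h⟩ (hgap q.2 (mem_endpoints.2 ⟨q, hq, Or.inr rfl⟩))
    · exact h
    · exact absurd hj (hP.notMem_endpoints_of_mem_Ioo hq ⟨hij, h⟩)
  · exact absurd heven (Nat.not_even_iff_odd.2 (hP.odd_card_filter_endpoints_lt_snd hq))

end IsNC121

lemma endpoints_injOn : Set.InjOn endpoints {P : Finset (ι × ι) | IsNC121 P} := by
  intro P hP Q hQ h
  ext ⟨i, j⟩
  rw [IsNC121.mem_iff hP, IsNC121.mem_iff hQ, h]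

def pairConsecutive : List ι → Finset (ι × ι)
  | a :: b :: l => insert (a, b) (pairConsecutive l)
  | _ => ∅

lemma mem_of_mem_pairConsecutive :
    ∀ {l : List ι} {p : ι × ι}, p ∈ pairConsecutive l → p.1 ∈ l ∧ p.2 ∈ l
  | a :: b :: l, p, hp => by
    rcases mem_insert.1 hp with rfl | hp
    · simp
    · have := mem_of_mem_pairConsecutive hp
      simp [this]
  | [], _, hp | [_], _, hp => by simp [pairConsecutive] at hp

lemma isNC121_pairConsecutive : ∀ {l : List ι}, l.Pairwise (· < ·) → IsNC121 (pairConsecutive l)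
  | a :: b :: l, hl => by
    obtain ⟨ha, hl'⟩ := List.pairwise_cons.1 hl
    obtain ⟨hb, hl''⟩ := List.pairwise_cons.1 hl'
    have ih := isNC121_pairConsecutive hl''
    have hlt : ∀ p ∈ pairConsecutive l, b < p.1 := fun p hp =>
      hb _ (mem_of_mem_pairConsecutive hp).1
    refine ⟨fun p hp => ?_, fun p hp q hq hpq => ?_⟩
    · rcases mem_insert.1 hp with rfl | hp
      · exact ha b (by simp)
      · exact ih.1 p hp
    · rcases mem_insert.1 hp with rfl | hp <;> rcases mem_insert.1 hq with rfl | hq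
      · exact absurd rfl hpq
      · exact Or.inl (hlt q hq)
      · exact Or.inr (hlt p hp)
      · exact ih.2 p hp q hq hpq
  | [], _ | [_], _ => ⟨by simp [pairConsecutive], by simp [pairConsecutive]⟩

lemma endpoints_pairConsecutive : ∀ {l : List ι}, Even l.length →
    endpoints (pairConsecutive l) = l.toFinset
  | a :: b :: l, h => by
    have ih := endpoints_pairConsecutive (l := l) (by simpa [Nat.even_add_one] using h)
    rw [pairConsecutive, endpoints, biUnion_insert, ← endpoints, ih]
    ext
    simp
  | [], _ => rfl
  | [_], h => by simp at h

lemma exists_isNC121_endpoints_eq {S : Finset ι} (hS : Even #S) :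
    ∃ P : Finset (ι × ι), IsNC121 P ∧ endpoints P = S :=
  ⟨pairConsecutive (S.sort (· ≤ ·)), isNC121_pairConsecutive S.sortedLT_sort.pairwise,
    by rw [endpoints_pairConsecutive (by rwa [length_sort]), sort_toFinset]⟩

variable [Fintype ι]

lemma card_filter_isNC121_card_eq (m : ℕ) :
    #{P : Finset (ι × ι) | IsNC121 P ∧ #P = m} = (Fintype.card ι).choose (2 * m) := by
  rw [← card_univ, ← card_powersetCard]
  refine card_nbij endpoints (fun P hP => ?_) (endpoints_injOn.mono fun P hP => ?_) fun S hS => ?_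
  · obtain ⟨hnc, rfl⟩ := (mem_filter.1 hP).2
    simp [hnc.card_endpoints]
  · exact (mem_filter.1 hP).2.1
  · have hS := mem_powersetCard_univ.1 hS
    obtain ⟨P, hP, rfl⟩ := exists_isNC121_endpoints_eq (S := S) (hS ▸ even_two_mul m)
    refine ⟨P, mem_filter.2 ⟨mem_univ P, hP, ?_⟩, rfl⟩
    rw [hP.card_endpoints] at hS
    omega

lemma sum_filter_isNC121 {M : Type*} [AddCommMonoid M] (f : ℕ → M) :
    ∑ P : Finset (ι × ι) with IsNC121 P, f (2 * #P) = ∑ S : Finset ι with Even #S, f #S := by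
  refine sum_nbij endpoints (fun P hP => ?_) (endpoints_injOn.mono fun P hP => ?_)
    (fun S hS => ?_) fun P hP => ?_
  · simp [(mem_filter.1 hP).2.card_endpoints]
  · exact (mem_filter.1 hP).2
  · obtain ⟨P, hP, rfl⟩ := exists_isNC121_endpoints_eq (mem_filter.1 hS).2
    exact ⟨P, by simpa using hP, rfl⟩
  · rw [(mem_filter.1 hP).2.card_endpoints]

end NC121

open NC121

/-- A partition in `NC_{1,2;1}(n)` (noncrossing, blocks singletons or pairs, singletons of
depth ≤ 1, pairs of depth 0) is determined by its set of pair blocks `{i,j}` (`i < j`),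
whose intervals `[i,j]` are pairwise disjoint; remaining points are singletons.
(1) The number of such partitions with exactly `m` pair blocks is `C(n, 2m)` for
`0 ≤ m ≤ ⌊n/2⌋.`
(2) Consequently `∑_{π ∈ NC_{1,2;1}(n)} α^{2·#pairs(π)} = ((1+α)^n + (1-α)^n)/2`. -/
theorem count_NC121_pairs_and_generating_sum (n : ℕ) (α : ℝ) :
    (∀ m : ℕ, m ≤ n / 2 →
      Set.ncard {P : Finset (Fin n × Fin n) |
          (∀ p ∈ P, p.1 < p.2) ∧
          (∀ p ∈ P, ∀ q ∈ P, p ≠ q → p.2 < q.1 ∨ q.2 < p.1) ∧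
          P.card = m}
        = Nat.choose n (2 * m)) ∧
    (∑ P ∈ Finset.univ.filter (fun P : Finset (Fin n × Fin n) =>
          (∀ p ∈ P, p.1 < p.2) ∧
          (∀ p ∈ P, ∀ q ∈ P, p ≠ q → p.2 < q.1 ∨ q.2 < p.1)),
        α ^ (2 * P.card))
      = ((1 + α) ^ n + (1 - α) ^ n) / 2 := by
  refine ⟨fun m _ => ?_, ?_⟩
  · have hcard := card_filter_isNC121_card_eq (ι := Fin n) m
    rw [Fintype.card_fin] at hcard
    rw [← hcard, ← Set.ncard_coe_finset]
    congr 1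
    ext
    simp [IsNC121, and_assoc]
  · have heven := two_mul_sum_powerset_filter_even_card_pow (Finset.univ : Finset (Fin n)) α
    rw [Finset.powerset_univ, Finset.card_univ, Fintype.card_fin] at heven
    calc _ = ∑ P : Finset (Fin n × Fin n) with IsNC121 P, α ^ (2 * P.card) := by congr 2
      _ = ∑ S : Finset (Fin n) with Even S.card, α ^ S.card := sum_filter_isNC121 _
      _ = _ := by rw [eq_div_iff two_ne_zero, mul_comm, heven]
end
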